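/- arXiv:2002.07035 — 7 statements merged into one kernel-verified Lean document; each statement's English description precedes it below -/
import Mathlib

section
/- Let f be holomorphic on the open unit disk 𝔻 ⊂ ℂ, let v : 𝔻 → [0,∞) be a bounded function that is radial (v(z) = v(|z|) for all z ∈ 𝔻), and let N ∈ ℤ≥0 be such that sup_{z∈𝔻} v(z)|f^{(N)}(z)| < ∞. If z₀ ∈ 𝔻 is a zero of f, then the function g(z) = f(z)/(z−z₀) (extended holomorphically across z₀) satisfies sup_{z∈𝔻} v(z)|g^{(N)}(z)| < ∞. -/
/-!
Write `F = f⁽ᴺ⁾`. Since `v` is radial, the maximum modulus principle on the disk of radius `|z|`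
gives `|F| ≤ C / v(z)` there, and the mean value inequality then bounds `v(z) |f⁽ⁿ⁾(z)|` for
every `n ≤ N`, the constant `f⁽ⁿ⁾(0)` being absorbed by `sup v`. By Leibniz,
`(z - z₀) g⁽ⁿ⁾ = f⁽ⁿ⁾ - n g⁽ⁿ⁻¹⁾`, so by induction on `n` the weighted bound holds for
`(z - z₀) g⁽ⁿ⁾`; it passes to `g⁽ⁿ⁾` because `|z - z₀|` is bounded below near the boundary
circle while `v g⁽ⁿ⁾` is bounded on the compact disk inside.
-/

open Metric Set

theorem iteratedDeriv_succ_sub_mul {𝕜 : Type*} [NontriviallyNormedField 𝕜] {g : 𝕜 → 𝕜}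
    {x z₀ : 𝕜} {n : ℕ} (hg : ContDiffAt 𝕜 (n + 1) g x) :
    iteratedDeriv (n + 1) (fun z ↦ (z - z₀) * g z) x =
      (x - z₀) * iteratedDeriv (n + 1) g x + (n + 1) * iteratedDeriv n g x := by
  have hlin : ContDiffAt 𝕜 (n + 1) (fun z ↦ z - z₀) x := by fun_prop
  rw [iteratedDeriv_fun_mul hlin hg, Finset.sum_range_succ', Finset.sum_range_succ']
  simp only [iteratedDeriv_succ', deriv_sub_const_fun, deriv_id'', deriv_const',
    iteratedDeriv_fun_const_zero, mul_zero, Nat.reduceSubDiff, zero_mul, Finset.sum_const_zero,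
    zero_add, Nat.choose_one_right, Nat.cast_add, Nat.cast_one, iteratedDeriv_zero, mul_one,
    add_tsub_cancel_right, Nat.choose_zero_right, one_mul, tsub_zero]
  ring

theorem DifferentiableOn.analyticOnNhd_iteratedDeriv {U : Set ℂ} {h : ℂ → ℂ}
    (hh : DifferentiableOn ℂ h U) (hU : IsOpen U) (n : ℕ) :
    AnalyticOnNhd ℂ (iteratedDeriv n h) U := by
  rw [iteratedDeriv_eq_iterate]
  exact (hh.analyticOnNhd hU).iterated_deriv n

theorem norm_le_div_of_radial_weight {v : ℂ → ℝ} {h : ℂ → ℂ}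
    (hvrad : ∀ z ∈ ball (0 : ℂ) 1, v z = v ((‖z‖ : ℝ) : ℂ))
    (hh : DifferentiableOn ℂ h (ball 0 1)) {C : ℝ} (hC : ∀ z ∈ ball (0 : ℂ) 1, v z * ‖h z‖ ≤ C)
    {z w : ℂ} (hz : z ∈ ball (0 : ℂ) 1) (hvz : 0 < v z) (hwz : ‖w‖ ≤ ‖z‖) :
    ‖h w‖ ≤ C / v z := by
  have hsphere : ∀ u, ‖u‖ = ‖z‖ → ‖h u‖ ≤ C / v z := by
    intro u hu
    have hu1 : u ∈ ball (0 : ℂ) 1 := by rw [mem_ball_zero_iff, hu]; exact mem_ball_zero_iff.1 hz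
    rw [le_div_iff₀ hvz, mul_comm, hvrad z hz, ← hu, ← hvrad u hu1]
    exact hC u hu1
  rcases hwz.eq_or_lt with hwz | hwz
  · exact hsphere w hwz
  have hz0 : ‖z‖ ≠ 0 := (norm_nonneg w).trans_lt hwz |>.ne'
  have hcl : DiffContOnCl ℂ h (ball 0 ‖z‖) := by
    refine DifferentiableOn.diffContOnCl ?_
    rw [closure_ball 0 hz0]
    exact hh.mono (closedBall_subset_ball (mem_ball_zero_iff.1 hz))
  refine Complex.norm_le_of_forall_mem_frontier_norm_le isBounded_ball hcl (fun u hu ↦ ?_)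
    (subset_closure (mem_ball_zero_iff.2 hwz))
  rw [frontier_ball 0 hz0, mem_sphere_zero_iff_norm] at hu
  exact hsphere u hu

def WeightedBounded (v : ℂ → ℝ) (h : ℂ → ℂ) : Prop :=
  ∃ C, ∀ z ∈ ball (0 : ℂ) 1, v z * ‖h z‖ ≤ C

namespace WeightedBounded

variable {v : ℂ → ℝ} {h h₁ h₂ : ℂ → ℂ}

theorem congr (hh : WeightedBounded v h₁) (heq : EqOn h h₁ (ball 0 1)) : WeightedBounded v h := by
  obtain ⟨C, hC⟩ := hh
  exact ⟨C, fun z hz ↦ heq hz ▸ hC z hz⟩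

theorem sub (hv0 : ∀ z ∈ ball (0 : ℂ) 1, 0 ≤ v z) (hh₁ : WeightedBounded v h₁)
    (hh₂ : WeightedBounded v h₂) : WeightedBounded v (h₁ - h₂) := by
  obtain ⟨C₁, hC₁⟩ := hh₁
  obtain ⟨C₂, hC₂⟩ := hh₂
  refine ⟨C₁ + C₂, fun z hz ↦ ?_⟩
  calc v z * ‖h₁ z - h₂ z‖ ≤ v z * (‖h₁ z‖ + ‖h₂ z‖) :=
        mul_le_mul_of_nonneg_left (norm_sub_le _ _) (hv0 z hz)
    _ ≤ C₁ + C₂ := by linarith [hC₁ z hz, hC₂ z hz]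

theorem const_mul (hh : WeightedBounded v h) (c : ℂ) :
    WeightedBounded v (fun z ↦ c * h z) := by
  obtain ⟨C, hC⟩ := hh
  refine ⟨‖c‖ * C, fun z hz ↦ ?_⟩
  rw [norm_mul, mul_left_comm]
  exact mul_le_mul_of_nonneg_left (hC z hz) (norm_nonneg c)

theorem of_sub_mul (hvbdd : ∃ M : ℝ, ∀ z ∈ ball (0 : ℂ) 1, v z ≤ M)
    (hv0 : ∀ z ∈ ball (0 : ℂ) 1, 0 ≤ v z) {z₀ : ℂ} (hz₀ : z₀ ∈ ball (0 : ℂ) 1)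
    (hh : ContinuousOn h (ball 0 1)) (hmul : WeightedBounded v (fun z ↦ (z - z₀) * h z)) :
    WeightedBounded v h := by
  obtain ⟨M, hM⟩ := hvbdd
  obtain ⟨C, hC⟩ := hmul
  rw [mem_ball_zero_iff] at hz₀
  set d := (1 - ‖z₀‖) / 2 with hd
  have hd0 : 0 < d := by linarith
  have hsub : closedBall (0 : ℂ) (‖z₀‖ + d) ⊆ ball 0 1 := closedBall_subset_ball (by linarith)
  obtain ⟨K, hK⟩ := (isCompact_closedBall (0 : ℂ) (‖z₀‖ + d)).exists_bound_of_continuousOn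
    (hh.mono hsub)
  refine ⟨max (M * K) (C / d), fun z hz ↦ ?_⟩
  by_cases hzr : ‖z‖ ≤ ‖z₀‖ + d
  · have hzK : ‖h z‖ ≤ K := hK z (mem_closedBall_zero_iff.2 hzr)
    have hM0 : 0 ≤ M := (hv0 z hz).trans (hM z hz)
    exact le_max_of_le_left (mul_le_mul (hM z hz) hzK (norm_nonneg _) hM0)
  · have hdist : d ≤ ‖z - z₀‖ := by linarith [norm_sub_norm_le z z₀]
    refine le_max_of_le_right ((le_div_iff₀ hd0).2 ?_)
    calc v z * ‖h z‖ * d ≤ v z * ‖h z‖ * ‖z - z₀‖ :=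
          mul_le_mul_of_nonneg_left hdist (mul_nonneg (hv0 z hz) (norm_nonneg _))
      _ = v z * ‖(z - z₀) * h z‖ := by rw [norm_mul]; ring
      _ ≤ C := hC z hz

theorem of_deriv (hvbdd : ∃ M : ℝ, ∀ z ∈ ball (0 : ℂ) 1, v z ≤ M)
    (hv0 : ∀ z ∈ ball (0 : ℂ) 1, 0 ≤ v z) (hvrad : ∀ z ∈ ball (0 : ℂ) 1, v z = v ((‖z‖ : ℝ) : ℂ))
    (hh : DifferentiableOn ℂ h (ball 0 1)) (hderiv : WeightedBounded v (deriv h)) :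
    WeightedBounded v h := by
  obtain ⟨M, hM⟩ := hvbdd
  obtain ⟨C, hC⟩ := hderiv
  have h0 : (0 : ℂ) ∈ ball (0 : ℂ) 1 := mem_ball_self one_pos
  have hM0 : 0 ≤ M := (hv0 0 h0).trans (hM 0 h0)
  have hC0 : 0 ≤ C := (mul_nonneg (hv0 0 h0) (norm_nonneg _)).trans (hC 0 h0)
  refine ⟨M * ‖h 0‖ + C, fun z hz ↦ ?_⟩
  rcases (hv0 z hz).eq_or_lt with hvz | hvz
  · rw [← hvz, zero_mul]; positivity
  have hz1 : ‖z‖ < 1 := mem_ball_zero_iff.1 hz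
  have hdisk : closedBall (0 : ℂ) ‖z‖ ⊆ ball 0 1 := closedBall_subset_ball hz1
  have hh' : DifferentiableOn ℂ (deriv h) (ball 0 1) :=
    ((hh.analyticOnNhd isOpen_ball).deriv).differentiableOn
  have hmvt : ‖h z - h 0‖ ≤ C / v z * ‖z - 0‖ :=
    (convex_closedBall 0 ‖z‖).norm_image_sub_le_of_norm_deriv_le
      (fun x hx ↦ hh.differentiableAt (isOpen_ball.mem_nhds (hdisk hx)))
      (fun x hx ↦ norm_le_div_of_radial_weight hvrad hh' hC hz hvz (mem_closedBall_zero_iff.1 hx))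
      (mem_closedBall_self (norm_nonneg z)) (mem_closedBall_zero_iff.2 le_rfl)
  rw [sub_zero] at hmvt
  have hCz : C / v z * ‖z‖ ≤ C / v z := mul_le_of_le_one_right (by positivity) hz1.le
  calc v z * ‖h z‖ ≤ v z * (‖h 0‖ + C / v z) := by
        gcongr; linarith [norm_le_norm_add_norm_sub' (h z) (h 0)]
    _ = v z * ‖h 0‖ + C := by field_simp
    _ ≤ M * ‖h 0‖ + C := by gcongr; exact hM z hz

theorem of_iteratedDeriv (hvbdd : ∃ M : ℝ, ∀ z ∈ ball (0 : ℂ) 1, v z ≤ M)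
    (hv0 : ∀ z ∈ ball (0 : ℂ) 1, 0 ≤ v z) (hvrad : ∀ z ∈ ball (0 : ℂ) 1, v z = v ((‖z‖ : ℝ) : ℂ))
    (hh : DifferentiableOn ℂ h (ball 0 1)) {N : ℕ} (hN : WeightedBounded v (iteratedDeriv N h))
    {n : ℕ} (hn : n ≤ N) : WeightedBounded v (iteratedDeriv n h) := by
  induction hn using Nat.decreasingInduction with
  | self => exact hN
  | of_succ k _ ih =>
    rw [iteratedDeriv_succ] at ih
    exact of_deriv hvbdd hv0 hvrad
      (hh.analyticOnNhd_iteratedDeriv isOpen_ball k).differentiableOn ih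

end WeightedBounded

theorem stmt_0_general (f : ℂ → ℂ) (hf : DifferentiableOn ℂ f (Metric.ball 0 1))
    (v : ℂ → ℝ)
    (hv0 : ∀ z ∈ Metric.ball (0 : ℂ) 1, 0 ≤ v z)
    (hvbdd : ∃ M : ℝ, ∀ z ∈ Metric.ball (0 : ℂ) 1, v z ≤ M)
    (hvrad : ∀ z ∈ Metric.ball (0 : ℂ) 1, v z = v ((‖z‖ : ℝ) : ℂ))
    (N : ℕ)
    (hfin : ∃ C : ℝ, ∀ z ∈ Metric.ball (0 : ℂ) 1,
      v z * ‖iteratedDeriv N f z‖ ≤ C)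
    (z₀ : ℂ) (hz₀ : z₀ ∈ Metric.ball (0 : ℂ) 1)
    (g : ℂ → ℂ) (hg : DifferentiableOn ℂ g (Metric.ball 0 1))
    (hgf : ∀ z ∈ Metric.ball (0 : ℂ) 1, (z - z₀) * g z = f z) :
    ∃ C : ℝ, ∀ z ∈ Metric.ball (0 : ℂ) 1,
      v z * ‖iteratedDeriv N g z‖ ≤ C := by
  have hfn (n : ℕ) (hn : n ≤ N) : WeightedBounded v (iteratedDeriv n f) :=
    WeightedBounded.of_iteratedDeriv hvbdd hv0 hvrad hf hfin hn
  have hgn : ∀ n, AnalyticOnNhd ℂ (iteratedDeriv n g) (ball 0 1) :=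
    hg.analyticOnNhd_iteratedDeriv isOpen_ball
  have hfg (n : ℕ) : EqOn (iteratedDeriv n f) (iteratedDeriv n (fun z ↦ (z - z₀) * g z))
      (ball 0 1) :=
    EqOn.iteratedDeriv_of_isOpen (fun z hz ↦ (hgf z hz).symm) isOpen_ball n
  suffices ∀ n ≤ N, WeightedBounded v (iteratedDeriv n g) from this N le_rfl
  intro n hn
  induction n with
  | zero =>
    exact WeightedBounded.of_sub_mul hvbdd hv0 hz₀ (hgn 0).continuousOn
      ((hfn 0 hn).congr fun z hz ↦ hgf z hz)
  | succ n ih =>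
    refine WeightedBounded.of_sub_mul hvbdd hv0 hz₀ (hgn (n + 1)).continuousOn ?_
    -- Leibniz: `f⁽ⁿ⁺¹⁾ = (z - z₀) g⁽ⁿ⁺¹⁾ + (n + 1) g⁽ⁿ⁾` on the disk
    refine ((hfn (n + 1) hn).sub hv0 ((ih (by omega)).const_mul ((n : ℂ) + 1))).congr
      fun z hz ↦ ?_
    rw [Pi.sub_apply, hfg (n + 1) hz,
      iteratedDeriv_succ_sub_mul (hg.analyticOnNhd isOpen_ball z hz).contDiffAt]
    ring

/-- If `f` is holomorphic on the unit disk, `v : 𝔻 → [0,∞)` is a bounded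
radial weight, `sup_{z∈𝔻} v(z)|f^{(N)}(z)| < ∞` and `f(z₀) = 0` for some `z₀ ∈ 𝔻`, then the
holomorphic extension `g` of `z ↦ f(z)/(z - z₀)` satisfies `sup_{z∈𝔻} v(z)|g^{(N)}(z)| < ∞`. -/
theorem stmt_0 (f : ℂ → ℂ) (hf : DifferentiableOn ℂ f (Metric.ball 0 1))
    (v : ℂ → ℝ)
    (hv0 : ∀ z ∈ Metric.ball (0 : ℂ) 1, 0 ≤ v z)
    (hvbdd : ∃ M : ℝ, ∀ z ∈ Metric.ball (0 : ℂ) 1, v z ≤ M)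
    (hvrad : ∀ z ∈ Metric.ball (0 : ℂ) 1, v z = v ((‖z‖ : ℝ) : ℂ))
    (N : ℕ)
    (hfin : ∃ C : ℝ, ∀ z ∈ Metric.ball (0 : ℂ) 1,
      v z * ‖iteratedDeriv N f z‖ ≤ C)
    (z₀ : ℂ) (hz₀ : z₀ ∈ Metric.ball (0 : ℂ) 1) (hfz₀ : f z₀ = 0)
    (g : ℂ → ℂ) (hg : DifferentiableOn ℂ g (Metric.ball 0 1))
    (hgf : ∀ z ∈ Metric.ball (0 : ℂ) 1, (z - z₀) * g z = f z) :
    ∃ C : ℝ, ∀ z ∈ Metric.ball (0 : ℂ) 1,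
      v z * ‖iteratedDeriv N g z‖ ≤ C :=
  stmt_0_general f hf v hv0 hvbdd hvrad N hfin z₀ hz₀ g hg hgf
end

section
/- Assume X and Y are Banach spaces of holomorphic functions on 𝔹_n satisfying conditions (I), (II) and (III), and let u ∈ M(X). Then the following are equivalent: (a) u has no zeros in 𝔹_n and 1/u ∈ M(X); (b) there exists δ > 0 such that |u(z)| ≥ δ for all z ∈ 𝔹_n; (c) the multiplication operator M_u : X → X is invertible (a bijection with bounded inverse). -/
/-!
(b) ⇒ (a): for `g = f / u` the function `k ↦ u⁻ᵏ Rᴺ(uᵏ g)` is a polynomial of degree at most `N`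
in `k`, so its `(N + 1)`-st finite difference vanishes. This writes `Rᴺ g` as a combination of the
`u⁻ᵏ Rᴺ(uᵏ⁻¹ f)`, `1 ≤ k ≤ N + 1`, which lie in `Y` by (II) and (III) because `u⁻ᵏ` is bounded;
hence `g ∈ X` by (II).
(a) ⇒ (c) is the bounded inverse theorem. (c) ⇒ (b): evaluation at `z` is an eigenvector of the
adjoint of `M_u` with eigenvalue `u(z)`, so `|u(z)|⁻¹ ≤ ‖M_u⁻¹‖`.
Computing with `Rᴺ` requires radial derivatives of holomorphic functions to be holomorphic; this
follows by differentiating the Cauchy integral formula for directional derivatives under the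
integral sign.
-/

open Metric Set

/-- The radial derivative `Rf(z) = f'(z)z` (Fréchet derivative at `z` applied to `z`). -/
noncomputable def radDeriv (n : ℕ) (f : EuclideanSpace ℂ (Fin n) → ℂ) :
    EuclideanSpace ℂ (Fin n) → ℂ := fun z => fderiv ℂ f z z

open Filter MeasureTheory Real
open Complex (I)

section HolomorphicDerivative

variable {E F : Type*} [NormedAddCommGroup E] [NormedSpace ℂ E] [NormedAddCommGroup F]
  [NormedSpace ℂ F]

theorem norm_fderiv_le_of_forall_norm_le {f : E → F} {c : E} {r M : ℝ} (hr : 0 < r)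
    (hf : DifferentiableOn ℂ f (ball c r)) (hM : ∀ w ∈ ball c r, ‖f w‖ ≤ M) :
    ‖fderiv ℂ f c‖ ≤ 2 * M / r := by
  refine Complex.norm_fderiv_le_div_of_mapsTo_ball hf (fun w hw => ?_) hr
  rw [mem_closedBall, dist_eq_norm]
  linarith [norm_sub_le (f w) (f c), hM w hw, hM c (mem_ball_self hr)]

theorem DifferentiableOn.exists_ball_subset_norm_fderiv_le {f : E → F} {U : Set E}
    (hf : DifferentiableOn ℂ f U) (hU : IsOpen U) {z₀ : E} (hz₀ : z₀ ∈ U) :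
    ∃ ρ > 0, ball z₀ ρ ⊆ U ∧ ∃ M, ∀ z ∈ ball z₀ ρ, ‖fderiv ℂ f z‖ ≤ M := by
  obtain ⟨ε, hε, hεU⟩ := Metric.isOpen_iff.1 hU z₀ hz₀
  obtain ⟨δ, hδ, hδf⟩ := Metric.continuousAt_iff.1
    (hf.continuousOn.continuousAt (hU.mem_nhds hz₀)) 1 one_pos
  obtain ⟨ρ, hρ0, hρε, hρδ⟩ : ∃ ρ > 0, 2 * ρ ≤ ε ∧ 2 * ρ ≤ δ :=
    ⟨min ε δ / 2, by positivity, by linarith [min_le_left ε δ], by linarith [min_le_right ε δ]⟩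
  have hsub : ∀ z ∈ ball z₀ ρ, ball z ρ ⊆ ball z₀ (2 * ρ) := fun z hz =>
    ball_subset_ball' (by linarith [mem_ball.1 hz])
  have hbound : ∀ w ∈ ball z₀ (2 * ρ), ‖f w‖ ≤ ‖f z₀‖ + 1 := fun w hw => by
    have := hδf ((mem_ball.1 hw).trans_le hρδ)
    rw [dist_eq_norm] at this
    linarith [norm_le_insert' (f w) (f z₀)]
  exact ⟨ρ, hρ0, (ball_subset_ball (by linarith)).trans hεU, 2 * (‖f z₀‖ + 1) / ρ,
    fun z hz => norm_fderiv_le_of_forall_norm_le hρ0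
      (hf.mono ((hsub z hz).trans ((ball_subset_ball hρε).trans hεU)))
      fun w hw => hbound w (hsub z hz hw)⟩

theorem two_pi_I_smul_fderiv_apply_eq_circleIntegral [CompleteSpace F] {f : E → F} {z v : E}
    {r : ℝ} (hr : 0 < r) (hf : ∀ w ∈ closedBall (0 : ℂ) r, DifferentiableAt ℂ f (z + w • v)) :
    (2 * π * I) • fderiv ℂ f z v = ∮ w in C(0, r), (w ^ 2)⁻¹ • f (z + w • v) := by
  have hline : ∀ w : ℂ, HasDerivAt (fun w : ℂ => z + w • v) v w := fun w => by
    simpa using ((hasDerivAt_id w).smul_const v).const_add z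
  have hslice : DifferentiableOn ℂ (fun w : ℂ => f (z + w • v)) (closedBall 0 r) :=
    fun w hw => ((hf w hw).comp w (hline w).differentiableAt).differentiableWithinAt
  have hderiv : deriv (fun w : ℂ => f (z + w • v)) 0 = fderiv ℂ f z v := by
    have h := hf 0 (mem_closedBall_self hr.le)
    rw [zero_smul, add_zero] at h
    exact (h.hasFDerivAt.comp_hasDerivAt_of_eq 0 (hline 0) (by simp)).deriv
  rw [← hderiv, ← hslice.deriv_eq_smul_circleIntegral hr]
  simp [one_div]

theorem differentiableAt_circleIntegral_comp_add_smul [FiniteDimensional ℂ E] {f : E → ℂ}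
    {z₀ v : E} {r ρ M : ℝ} (hr : 0 < r) (hρ : 0 < ρ)
    (hf : ∀ z ∈ ball z₀ ρ, ∀ w ∈ closedBall (0 : ℂ) r, DifferentiableAt ℂ f (z + w • v))
    (hM : ∀ z ∈ ball z₀ ρ, ∀ w ∈ closedBall (0 : ℂ) r, ‖fderiv ℂ f (z + w • v)‖ ≤ M) :
    DifferentiableAt ℂ (fun z => ∮ w in C(0, r), (w ^ 2)⁻¹ • f (z + w • v)) z₀ := by
  simp only [circleIntegral, smul_smul]
  set γ := circleMap 0 r
  set k := fun θ => deriv γ θ * (γ θ ^ 2)⁻¹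
  have hγ : ∀ θ, γ θ ∈ closedBall (0 : ℂ) r := circleMap_mem_closedBall 0 hr.le
  have hk : Continuous k := by
    simp only [k, γ, deriv_circleMap]
    exact ((continuous_circleMap 0 r).mul continuous_const).mul (((continuous_circleMap 0 r).pow
      2).inv₀ fun θ => pow_ne_zero 2 (circleMap_ne_center hr.ne'))
  have hk_norm : ∀ θ, ‖k θ‖ = r⁻¹ := fun θ => by
    simp only [k, γ, deriv_circleMap, norm_mul, norm_inv, norm_pow, norm_circleMap_zero,
      Complex.norm_I, abs_of_pos hr, mul_one]
    field_simp
  have hcont : ∀ z ∈ ball z₀ ρ, Continuous fun θ => f (z + γ θ • v) := fun z hz =>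
    continuous_iff_continuousAt.2 fun θ => ContinuousAt.comp (hf z hz _ (hγ θ)).continuousAt
      (by fun_prop)
  refine (intervalIntegral.hasFDerivAt_integral_of_dominated_of_fderiv_le
    (bound := fun _ => r⁻¹ * M) (F' := fun z θ => k θ • fderiv ℂ f (z + γ θ • v))
    (ball_mem_nhds z₀ hρ) ?_ ?_ ?_ ?_ intervalIntegrable_const ?_).differentiableAt
  · filter_upwards [ball_mem_nhds z₀ hρ] with z hz
    exact (hk.smul (hcont z hz)).aestronglyMeasurable
  · exact (hk.smul (hcont z₀ (mem_ball_self hρ))).intervalIntegrable _ _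
  · borelize E (E →L[ℂ] ℂ)
    exact hk.aestronglyMeasurable.smul ((measurable_fderiv ℂ f).comp
      (by fun_prop : Continuous fun θ => z₀ + γ θ • v).measurable).aestronglyMeasurable
  · refine ae_of_all _ fun θ _ z hz => ?_
    rw [norm_smul, hk_norm]
    exact mul_le_mul_of_nonneg_left (hM z hz _ (hγ θ)) (by positivity)
  · exact ae_of_all _ fun θ _ z hz => ((hf z hz _ (hγ θ)).hasFDerivAt.comp z
      ((hasFDerivAt_id z).add_const (γ θ • v))).const_smul (k θ)

theorem differentiableOn_fderiv_apply [FiniteDimensional ℂ E] {f : E → ℂ} {U : Set E}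
    (hU : IsOpen U) (hf : DifferentiableOn ℂ f U) (v : E) :
    DifferentiableOn ℂ (fun z => fderiv ℂ f z v) U := by
  intro z₀ hz₀
  obtain ⟨ρ, hρ, hρU, M, hM⟩ := hf.exists_ball_subset_norm_fderiv_le hU hz₀
  set r := ρ / (2 * (‖v‖ + 1))
  have hr : 0 < r := by positivity
  have hmem : ∀ z ∈ ball z₀ (ρ / 2), ∀ w ∈ closedBall (0 : ℂ) r, z + w • v ∈ ball z₀ ρ := by
    intro z hz w hw
    have hwv : ‖w • v‖ ≤ ρ / 2 := by
      rw [norm_smul]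
      calc ‖w‖ * ‖v‖ ≤ r * (‖v‖ + 1) := by
            gcongr
            · simpa using hw
            · linarith
        _ = ρ / 2 := by simp only [r]; field_simp
    rw [mem_ball, dist_eq_norm, add_sub_right_comm]
    linarith [norm_add_le (z - z₀) (w • v), mem_ball_iff_norm.1 hz]
  have hdiff : ∀ x ∈ ball z₀ ρ, DifferentiableAt ℂ f x :=
    fun x hx => hf.differentiableAt (hU.mem_nhds (hρU hx))
  have hG := differentiableAt_circleIntegral_comp_add_smul hr (half_pos hρ)
    (fun z hz w hw => hdiff _ (hmem z hz w hw)) (fun z hz w hw => hM _ (hmem z hz w hw))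
  refine ((hG.const_smul (2 * π * I)⁻¹).congr_of_eventuallyEq ?_).differentiableWithinAt
  filter_upwards [ball_mem_nhds z₀ (half_pos hρ)] with z hz
  rw [Pi.smul_apply,
    ← two_pi_I_smul_fderiv_apply_eq_circleIntegral hr fun w hw => hdiff _ (hmem z hz w hw),
    smul_smul, inv_mul_cancel₀ (by simp [pi_ne_zero]), one_smul]

theorem differentiableOn_fderiv [FiniteDimensional ℂ E] {f : E → ℂ} {U : Set E} (hU : IsOpen U)
    (hf : DifferentiableOn ℂ f U) : DifferentiableOn ℂ (fderiv ℂ f) U := by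
  set b := Module.finBasis ℂ E
  have hdecomp : fderiv ℂ f = fun z =>
      ∑ i, fderiv ℂ f z (b i) • LinearMap.toContinuousLinearMap (b.coord i) := by
    ext z x
    have h := LinearMap.congr_fun (b.sum_dual_apply_smul_coord (fderiv ℂ f z).toLinearMap) x
    simpa using h.symm
  rw [hdecomp]
  exact DifferentiableOn.fun_sum fun i _ => (differentiableOn_fderiv_apply hU hf (b i)).smul_const _

end HolomorphicDerivative

open Polynomial in
theorem Polynomial.eval_zero_eq_sum_eval_add_one {R : Type*} [CommRing R] {P : R[X]} {N : ℕ}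
    (hP : P.natDegree ≤ N) :
    P.eval 0 =
      ∑ k ∈ Finset.range (N + 1), (-1) ^ k * (N + 1).choose (k + 1) * P.eval (k + 1 : R) := by
  have hdiff := fwdDiff_iter_eq_sum_shift (1 : R) P.eval (N + 1) 0
  rw [fwdDiff_iter_eq_zero_of_degree_lt (Nat.lt_succ_of_le hP), Finset.sum_range_succ'] at hdiff
  simp only [Pi.zero_apply, zsmul_eq_mul, Int.cast_mul, Int.cast_pow, Int.cast_neg,
    Int.cast_one, Int.cast_natCast, nsmul_eq_mul, mul_one, zero_add, Nat.cast_add, Nat.cast_one,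
    Nat.choose_zero_right, Nat.cast_zero, Nat.sub_zero, Nat.add_sub_add_right] at hdiff
  have hsign : ∀ k ∈ Finset.range (N + 1), (-1 : R) ^ (N - k) = (-1) ^ N * (-1) ^ k := by
    intro k hk
    have : N + k = N - k + 2 * k := by have := Finset.mem_range.1 hk; omega
    rw [← pow_add, this, pow_add, pow_mul]
    norm_num
  have hsq : ((-1 : R) ^ N) ^ 2 = 1 := by rw [← pow_mul, mul_comm, pow_mul]; norm_num
  rw [Finset.sum_congr rfl fun k hk => by rw [hsign k hk]] at hdiff
  simp only [mul_assoc, ← Finset.mul_sum] at hdiff ⊢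
  generalize (∑ k ∈ Finset.range (N + 1), _ : R) = S at hdiff ⊢
  linear_combination (-1 : R) ^ N * hdiff + (S - P.eval 0) * hsq

section RadialDerivative

variable {n : ℕ} {U : Set (EuclideanSpace ℂ (Fin n))} {f g u : EuclideanSpace ℂ (Fin n) → ℂ}

theorem differentiableOn_radDeriv (hU : IsOpen U) (hf : DifferentiableOn ℂ f U) :
    DifferentiableOn ℂ (radDeriv n f) U :=
  (differentiableOn_fderiv hU hf).clm_apply differentiableOn_id

theorem iterate_radDeriv_congr (hU : IsOpen U) (h : EqOn f g U) (k : ℕ) :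
    EqOn ((radDeriv n)^[k] f) ((radDeriv n)^[k] g) U := by
  induction k generalizing f g with
  | zero => exact h
  | succ k ih =>
    refine ih fun z hz => ?_
    simp only [radDeriv, (eventuallyEq_of_mem (hU.mem_nhds hz) h).fderiv_eq]

theorem iterate_radDeriv_const_smul (c : ℂ) (k : ℕ) :
    (radDeriv n)^[k] (c • f) = c • (radDeriv n)^[k] f := by
  induction k generalizing f with
  | zero => rfl
  | succ k ih =>
    have : radDeriv n (c • f) = c • radDeriv n f := by
      ext z
      simp [radDeriv, fderiv_const_smul_field]
    rw [Function.iterate_succ_apply, this, ih, Function.iterate_succ_apply]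

theorem iterate_radDeriv_add (hU : IsOpen U) (hf : DifferentiableOn ℂ f U)
    (hg : DifferentiableOn ℂ g U) (k : ℕ) :
    EqOn ((radDeriv n)^[k] (f + g)) ((radDeriv n)^[k] f + (radDeriv n)^[k] g) U := by
  induction k generalizing f g with
  | zero => exact fun _ _ => rfl
  | succ k ih =>
    intro z hz
    have hadd : EqOn (radDeriv n (f + g)) (radDeriv n f + radDeriv n g) U := fun x hx => by
      simp [radDeriv, fderiv_add (hf.differentiableAt (hU.mem_nhds hx))
        (hg.differentiableAt (hU.mem_nhds hx))]
    rw [Function.iterate_succ_apply, iterate_radDeriv_congr hU hadd k hz,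
      ih (differentiableOn_radDeriv hU hf) (differentiableOn_radDeriv hU hg) hz]
    rfl

theorem radDeriv_pow_mul (hU : IsOpen U) (hu : DifferentiableOn ℂ u U)
    (hu0 : ∀ z ∈ U, u z ≠ 0) (hg : DifferentiableOn ℂ g U) (j : ℕ) :
    EqOn (radDeriv n (u ^ j * g))
      (u ^ j * radDeriv n g + (j : ℂ) • (u ^ j * (radDeriv n u * u⁻¹ * g))) U := by
  intro z hz
  have hdu := hu.differentiableAt (hU.mem_nhds hz)
  have hdg := hg.differentiableAt (hU.mem_nhds hz)
  simp only [radDeriv, fderiv_mul (hdu.pow j) hdg, fderiv_pow j hdu]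
  rcases j with _ | j
  · simp [radDeriv]
  · simp only [radDeriv, Pi.add_apply, Pi.mul_apply, Pi.smul_apply, Pi.pow_apply, Pi.inv_apply,
      add_apply, smul_apply, smul_eq_mul, nsmul_eq_mul, add_tsub_cancel_right, Nat.cast_add,
      Nat.cast_one, add_right_inj]
    field_simp [hu0 z hz]
    ring

open Polynomial in
theorem exists_polynomial_iterate_radDeriv_pow_mul (hU : IsOpen U) (hu : DifferentiableOn ℂ u U)
    (hu0 : ∀ z ∈ U, u z ≠ 0) (N : ℕ) (hg : DifferentiableOn ℂ g U) {z : EuclideanSpace ℂ (Fin n)}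
    (hz : z ∈ U) : ∃ P : ℂ[X], P.natDegree ≤ N ∧
      ∀ j : ℕ, (radDeriv n)^[N] (u ^ j * g) z = u z ^ j * P.eval (j : ℂ) := by
  induction N generalizing g with
  | zero => exact ⟨C (g z), by simp, fun j => by simp⟩
  | succ N ih =>
    have hRg := differentiableOn_radDeriv hU hg
    have hmg := ((differentiableOn_radDeriv hU hu).mul (hu.inv hu0)).mul hg
    obtain ⟨P₁, hP₁, h₁⟩ := ih hRg
    obtain ⟨P₂, hP₂, h₂⟩ := ih hmg
    refine ⟨P₁ + X * P₂, natDegree_add_le_of_degree_le (hP₁.trans N.le_succ)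
      (natDegree_mul_le.trans (by linarith [natDegree_X_le (R := ℂ)])), fun j => ?_⟩
    rw [Function.iterate_succ_apply,
      iterate_radDeriv_congr hU (radDeriv_pow_mul hU hu hu0 hg j) N hz,
      iterate_radDeriv_add hU ((hu.pow j).mul hRg) (((hu.pow j).mul hmg).const_smul (j : ℂ)) N hz,
      Pi.add_apply, iterate_radDeriv_const_smul, Pi.smul_apply, h₁, h₂]
    simp only [eval_add, eval_mul, eval_X, smul_eq_mul]
    ring

theorem iterate_radDeriv_eqOn_sum (hU : IsOpen U) (hu : DifferentiableOn ℂ u U)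
    (hu0 : ∀ z ∈ U, u z ≠ 0) (N : ℕ) (hg : DifferentiableOn ℂ g U) :
    EqOn ((radDeriv n)^[N] g) (∑ k ∈ Finset.range (N + 1),
      ((-1) ^ k * (N + 1).choose (k + 1) : ℂ) •
        (u⁻¹ ^ (k + 1) * (radDeriv n)^[N] (u ^ (k + 1) * g))) U := by
  intro z hz
  obtain ⟨P, hP, hPj⟩ := exists_polynomial_iterate_radDeriv_pow_mul hU hu hu0 N hg hz
  have hterm : ∀ k : ℕ, (u z)⁻¹ ^ k * (radDeriv n)^[N] (u ^ k * g) z = P.eval (k : ℂ) := fun k => by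
    rw [hPj, ← mul_assoc, ← mul_pow, inv_mul_cancel₀ (hu0 z hz), one_pow, one_mul]
  have h0 := hterm 0
  simp only [pow_zero, one_mul, Nat.cast_zero] at h0
  simp only [Finset.sum_apply, Pi.smul_apply, Pi.mul_apply, Pi.pow_apply, Pi.inv_apply, smul_eq_mul,
    hterm, h0, Nat.cast_add, Nat.cast_one]
  exact Polynomial.eval_zero_eq_sum_eval_add_one hP

end RadialDerivative

namespace LinearMap

variable {R E V M : Type*} [Semiring R] [AddCommMonoid E] [Module R E] [AddCommMonoid M]
  [Module R M]

/-- When `X` is realized as the image of `ι`, `φ ∈ ι.rangeOn U` says that `φ` agrees on `U` with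
an element of `X`. -/
def rangeOn (ι : E →ₗ[R] (V → M)) (U : Set V) : Submodule R (V → M) where
  carrier := {φ | ∃ e, EqOn (ι e) φ U}
  add_mem' := by
    rintro _ _ ⟨a, ha⟩ ⟨b, hb⟩
    exact ⟨a + b, fun z hz => by simp [ha hz, hb hz]⟩
  zero_mem' := ⟨0, fun z _ => by simp⟩
  smul_mem' := by
    rintro c _ ⟨a, ha⟩
    exact ⟨c • a, fun z hz => by simp [ha hz]⟩

variable {ι : E →ₗ[R] (V → M)} {U : Set V} {φ ψ : V → M}

theorem mem_rangeOn_of_eqOn (hφ : φ ∈ ι.rangeOn U) (h : EqOn φ ψ U) : ψ ∈ ι.rangeOn U :=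
  let ⟨e, he⟩ := hφ
  ⟨e, he.trans h⟩

end LinearMap

open LinearMap in
theorem div_mem_rangeOn {n : ℕ} {E F : Type*} [AddCommMonoid E] [Module ℂ E] [AddCommMonoid F]
    [Module ℂ F] {ι : E →ₗ[ℂ] (EuclideanSpace ℂ (Fin n) → ℂ)}
    {κ : F →ₗ[ℂ] (EuclideanSpace ℂ (Fin n) → ℂ)} {U : Set (EuclideanSpace ℂ (Fin n))}
    (hU : IsOpen U) (hιhol : ∀ e, DifferentiableOn ℂ (ι e) U) {N : ℕ}
    (hII : ∀ φ, DifferentiableOn ℂ φ U → (φ ∈ ι.rangeOn U ↔ (radDeriv n)^[N] φ ∈ κ.rangeOn U))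
    (hIII : ∀ v, DifferentiableOn ℂ v U → (∃ M, ∀ z ∈ U, ‖v z‖ ≤ M) →
      ∀ h, v * κ h ∈ κ.rangeOn U)
    {u : EuclideanSpace ℂ (Fin n) → ℂ} (hu : DifferentiableOn ℂ u U) {δ : ℝ} (hδ : 0 < δ)
    (huδ : ∀ z ∈ U, δ ≤ ‖u z‖) (hmul : ∀ e, u * ι e ∈ ι.rangeOn U) (e : E) :
    ι e / u ∈ ι.rangeOn U := by
  have hu0 : ∀ z ∈ U, u z ≠ 0 := fun z hz => norm_pos_iff.1 (hδ.trans_le (huδ z hz))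
  have hpow : ∀ k, u ^ k * ι e ∈ ι.rangeOn U := by
    intro k
    induction k with
    | zero => exact ⟨e, fun z _ => by simp⟩
    | succ k ih =>
      obtain ⟨e', he'⟩ := ih
      refine mem_rangeOn_of_eqOn (hmul e') fun z hz => ?_
      simp only [Pi.mul_apply, Pi.pow_apply, he' hz, pow_succ']
      ring
  have hg : DifferentiableOn ℂ (ι e / u) U := by
    simpa only [div_eq_mul_inv] using (hιhol e).mul (hu.inv hu0)
  refine (hII _ hg).2 (mem_rangeOn_of_eqOn ?_ (iterate_radDeriv_eqOn_sum hU hu hu0 N hg).symm)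
  refine Submodule.sum_mem _ fun k _ => Submodule.smul_mem _ _ ?_
  have hcancel : EqOn (u ^ (k + 1) * (ι e / u)) (u ^ k * ι e) U := fun z hz => by
    simp only [Pi.mul_apply, Pi.pow_apply, Pi.div_apply, pow_succ]
    field_simp [hu0 z hz]
  obtain ⟨h, hh⟩ := (hII _ ((hu.pow k).mul (hιhol e))).1 (hpow k)
  have hbound : ∃ M, ∀ z ∈ U, ‖(u⁻¹ ^ (k + 1)) z‖ ≤ M := ⟨δ⁻¹ ^ (k + 1), fun z hz => by
    simpa using pow_le_pow_left₀ (by positivity) (inv_anti₀ hδ (huδ z hz)) (k + 1)⟩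
  refine mem_rangeOn_of_eqOn (hIII _ ((hu.inv hu0).pow (k + 1)) hbound h) fun z hz => ?_
  simp only [Pi.mul_apply, hh hz, iterate_radDeriv_congr hU hcancel N hz]

theorem ContinuousLinearMap.ne_zero_and_inv_norm_le_of_comp_eq_smul {𝕜 E : Type*}
    [NontriviallyNormedField 𝕜] [NormedAddCommGroup E] [NormedSpace 𝕜 E] {φ : E →L[𝕜] 𝕜}
    (hφ : φ ≠ 0) {M T : E →L[𝕜] E} {a : 𝕜} (hφM : φ.comp M = a • φ)
    (hMT : M.comp T = ContinuousLinearMap.id 𝕜 E) : a ≠ 0 ∧ ‖a‖⁻¹ ≤ ‖T‖ := by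
  have h : φ = a • φ.comp T := by
    rw [← smul_comp, ← hφM, comp_assoc, hMT, comp_id]
  have ha : a ≠ 0 := by
    rintro rfl
    exact hφ (by ext x; simpa using DFunLike.congr_fun h x)
  have hφT : φ.comp T = a⁻¹ • φ := by
    rw [h, smul_smul, inv_mul_cancel₀ ha, one_smul, ← h]
  refine ⟨ha, le_of_mul_le_mul_right ?_ (norm_pos_iff.2 hφ)⟩
  calc ‖a‖⁻¹ * ‖φ‖ = ‖φ.comp T‖ := by rw [hφT, norm_smul, norm_inv]
    _ ≤ ‖φ‖ * ‖T‖ := opNorm_comp_le φ T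
    _ = ‖T‖ * ‖φ‖ := mul_comm _ _

section MultiplicationOperator

variable {E V : Type*} [NormedAddCommGroup E] [NormedSpace ℂ E] {ι : E →ₗ[ℂ] (V → ℂ)}
  {U : Set V} {u : V → ℂ} {Mu : E →L[ℂ] E}

theorem exists_inverse_of_forall_div_mem_rangeOn [CompleteSpace E]
    (hιinj : ∀ f g : E, EqOn (ι f) (ι g) U → f = g)
    (hMu : ∀ f : E, ∀ z ∈ U, ι (Mu f) z = u z * ι f z) (hu0 : ∀ z ∈ U, u z ≠ 0)
    (hdiv : ∀ f : E, ι f / u ∈ ι.rangeOn U) :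
    ∃ T : E →L[ℂ] E, T.comp Mu = ContinuousLinearMap.id ℂ E ∧
      Mu.comp T = ContinuousLinearMap.id ℂ E := by
  have hinj : Function.Injective Mu := fun f g h => hιinj f g fun z hz =>
    mul_left_cancel₀ (hu0 z hz) (by rw [← hMu f z hz, ← hMu g z hz, h])
  have hsurj : Function.Surjective Mu := fun f => by
    obtain ⟨g, hg⟩ := hdiv f
    exact ⟨g, hιinj _ _ fun z hz => by
      rw [hMu g z hz, hg hz, Pi.div_apply, mul_div_cancel₀ _ (hu0 z hz)]⟩
  obtain ⟨T, rfl⟩ := ContinuousLinearMap.isUnit_iff_bijective.2 ⟨hinj, hsurj⟩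
  exact ⟨↑T⁻¹, T.inv_mul, T.mul_inv⟩

theorem exists_pos_le_norm_of_comp_eq_id (hU : U.Nonempty)
    (hev : ∀ z ∈ U, ∃ C : ℝ, ∀ f : E, ‖ι f z‖ ≤ C * ‖f‖) {e₁ : E} (he₁ : ∀ z ∈ U, ι e₁ z = 1)
    (hMu : ∀ f : E, ∀ z ∈ U, ι (Mu f) z = u z * ι f z) {T : E →L[ℂ] E}
    (hMT : Mu.comp T = ContinuousLinearMap.id ℂ E) : ∃ δ : ℝ, 0 < δ ∧ ∀ z ∈ U, δ ≤ ‖u z‖ := by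
  have hu_inv : ∀ z ∈ U, u z ≠ 0 ∧ ‖u z‖⁻¹ ≤ ‖T‖ := fun z hz => by
    obtain ⟨C, hC⟩ := hev z hz
    let φ : E →L[ℂ] ℂ := ((LinearMap.proj z).comp ι).mkContinuous C hC
    refine ContinuousLinearMap.ne_zero_and_inv_norm_le_of_comp_eq_smul (φ := φ) ?_ ?_ hMT
    · exact fun h => one_ne_zero ((he₁ z hz).symm.trans (DFunLike.congr_fun h e₁))
    · ext f
      exact hMu f z hz
  obtain ⟨z₀, hz₀⟩ := hU
  have hT : 0 < ‖T‖ := (inv_pos.2 (norm_pos_iff.2 (hu_inv z₀ hz₀).1)).trans_le (hu_inv z₀ hz₀).2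
  exact ⟨‖T‖⁻¹, inv_pos.2 hT, fun z hz =>
    inv_le_of_inv_le₀ (norm_pos_iff.2 (hu_inv z hz).1) (hu_inv z hz).2⟩

end MultiplicationOperator

/-- Here `X` is realized as an abstract Banach space `E` with an injective linear inclusion
`ι : E → Hol(𝔹_n)`, and similarly `Y` as `F` via `κ`. -/
theorem stmt_2_general {n : ℕ}
    {E F : Type*} [NormedAddCommGroup E] [NormedSpace ℂ E] [CompleteSpace E]
    [NormedAddCommGroup F] [NormedSpace ℂ F]
    (ι : E →ₗ[ℂ] (EuclideanSpace ℂ (Fin n) → ℂ))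
    (κ : F →ₗ[ℂ] (EuclideanSpace ℂ (Fin n) → ℂ))
    -- X and Y consist of holomorphic functions on the ball
    (hιhol : ∀ f : E, DifferentiableOn ℂ (ι f) (ball (0 : EuclideanSpace ℂ (Fin n)) 1))
    -- the inclusions are injective (elements are determined by their values on the ball)
    (hιinj : ∀ f g : E, Set.EqOn (ι f) (ι g) (ball (0 : EuclideanSpace ℂ (Fin n)) 1) → f = g)
    -- X and Y contain the constant functions
    (hιconst : ∀ c : ℂ, ∃ f : E, ∀ z ∈ ball (0 : EuclideanSpace ℂ (Fin n)) 1, ι f z = c)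
    -- condition (I): point evaluations are continuous on X and on Y
    (hIX : ∀ z ∈ ball (0 : EuclideanSpace ℂ (Fin n)) 1,
      ∃ Cz : ℝ, ∀ f : E, ‖ι f z‖ ≤ Cz * ‖f‖)
    -- condition (II): `f ∈ X ↔ R^N f ∈ Y` and `‖f‖_X ≍ |f(0)| + ‖R^N f‖_Y`
    (N : ℕ)
    (hII_mem : ∀ f : EuclideanSpace ℂ (Fin n) → ℂ,
      DifferentiableOn ℂ f (ball (0 : EuclideanSpace ℂ (Fin n)) 1) →
      ((∃ g : E, Set.EqOn (ι g) f (ball (0 : EuclideanSpace ℂ (Fin n)) 1)) ↔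
        ∃ h : F, Set.EqOn (κ h) ((radDeriv n)^[N] f) (ball (0 : EuclideanSpace ℂ (Fin n)) 1)))
    -- condition (III): `H^∞(𝔹_n) ⊆ M(Y)`
    (hIII : ∀ v : EuclideanSpace ℂ (Fin n) → ℂ,
      DifferentiableOn ℂ v (ball (0 : EuclideanSpace ℂ (Fin n)) 1) →
      (∃ M : ℝ, ∀ z ∈ ball (0 : EuclideanSpace ℂ (Fin n)) 1, ‖v z‖ ≤ M) →
      ∀ h : F, ∃ h' : F, ∀ z ∈ ball (0 : EuclideanSpace ℂ (Fin n)) 1, κ h' z = v z * κ h z)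
    -- `u ∈ M(X)` with induced multiplication operator `Mu`
    (u : EuclideanSpace ℂ (Fin n) → ℂ)
    (hu : DifferentiableOn ℂ u (ball (0 : EuclideanSpace ℂ (Fin n)) 1))
    (Mu : E →L[ℂ] E)
    (hMu : ∀ f : E, ∀ z ∈ ball (0 : EuclideanSpace ℂ (Fin n)) 1, ι (Mu f) z = u z * ι f z) :
    -- (a) ↔ (b)
    (((∀ z ∈ ball (0 : EuclideanSpace ℂ (Fin n)) 1, u z ≠ 0) ∧
        ∀ f : E, ∃ g : E, ∀ z ∈ ball (0 : EuclideanSpace ℂ (Fin n)) 1,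
          ι g z = ι f z / u z) ↔
      ∃ δ : ℝ, 0 < δ ∧ ∀ z ∈ ball (0 : EuclideanSpace ℂ (Fin n)) 1, δ ≤ ‖u z‖) ∧
    -- (b) ↔ (c)
    ((∃ δ : ℝ, 0 < δ ∧ ∀ z ∈ ball (0 : EuclideanSpace ℂ (Fin n)) 1, δ ≤ ‖u z‖) ↔
      ∃ T : E →L[ℂ] E, T.comp Mu = ContinuousLinearMap.id ℂ E ∧
        Mu.comp T = ContinuousLinearMap.id ℂ E) := by
  have hba : ∀ δ : ℝ, 0 < δ → (∀ z ∈ ball (0 : EuclideanSpace ℂ (Fin n)) 1, δ ≤ ‖u z‖) →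
      (∀ z ∈ ball (0 : EuclideanSpace ℂ (Fin n)) 1, u z ≠ 0) ∧
        ∀ f : E, ι f / u ∈ ι.rangeOn (ball 0 1) := fun δ hδ huδ =>
    ⟨fun z hz => norm_pos_iff.1 (hδ.trans_le (huδ z hz)),
      div_mem_rangeOn isOpen_ball hιhol hII_mem hIII hu hδ huδ fun f => ⟨Mu f, hMu f⟩⟩
  have hac := fun hu0 hdiv => exists_inverse_of_forall_div_mem_rangeOn hιinj hMu hu0 hdiv
  obtain ⟨e₁, he₁⟩ := hιconst 1
  have hcb := fun T (hMT : Mu.comp T = ContinuousLinearMap.id ℂ E) =>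
    exists_pos_le_norm_of_comp_eq_id ⟨0, mem_ball_self one_pos⟩ hIX he₁ hMu hMT
  exact ⟨⟨fun ⟨hu0, hdiv⟩ => let ⟨T, _, hMT⟩ := hac hu0 hdiv; hcb T hMT,
      fun ⟨δ, hδ, huδ⟩ => hba δ hδ huδ⟩,
    fun ⟨δ, hδ, huδ⟩ => let ⟨hu0, hdiv⟩ := hba δ hδ huδ; hac hu0 hdiv,
    fun ⟨T, _, hMT⟩ => hcb T hMT⟩

/-- For Banach spaces `X`, `Y` of holomorphic functions on `𝔹_n` satisfying
conditions (I), (II), (III) and `u ∈ M(X)`, the following are equivalent: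
(a) `u` has no zeros in `𝔹_n` and `1/u ∈ M(X)`;
(b) `|u|` is bounded below on `𝔹_n` by some `δ > 0`;
(c) the multiplication operator `M_u : X → X` is invertible.
Here `X` is realized as an abstract Banach space `E` with an injective linear inclusion
`ι : E → Hol(𝔹_n)` (and similarly `Y` as `F` via `κ`). -/
theorem stmt_2 {n : ℕ} (hn : 1 ≤ n)
    {E F : Type*} [NormedAddCommGroup E] [NormedSpace ℂ E] [CompleteSpace E]
    [NormedAddCommGroup F] [NormedSpace ℂ F] [CompleteSpace F]
    (ι : E →ₗ[ℂ] (EuclideanSpace ℂ (Fin n) → ℂ))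
    (κ : F →ₗ[ℂ] (EuclideanSpace ℂ (Fin n) → ℂ))
    -- X and Y consist of holomorphic functions on the ball
    (hιhol : ∀ f : E, DifferentiableOn ℂ (ι f) (ball (0 : EuclideanSpace ℂ (Fin n)) 1))
    (hκhol : ∀ g : F, DifferentiableOn ℂ (κ g) (ball (0 : EuclideanSpace ℂ (Fin n)) 1))
    -- the inclusions are injective (elements are determined by their values on the ball)
    (hιinj : ∀ f g : E, Set.EqOn (ι f) (ι g) (ball (0 : EuclideanSpace ℂ (Fin n)) 1) → f = g)
    (hκinj : ∀ f g : F, Set.EqOn (κ f) (κ g) (ball (0 : EuclideanSpace ℂ (Fin n)) 1) → f = g)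
    -- X and Y contain the constant functions
    (hιconst : ∀ c : ℂ, ∃ f : E, ∀ z ∈ ball (0 : EuclideanSpace ℂ (Fin n)) 1, ι f z = c)
    (hκconst : ∀ c : ℂ, ∃ g : F, ∀ z ∈ ball (0 : EuclideanSpace ℂ (Fin n)) 1, κ g z = c)
    -- condition (I): point evaluations are continuous on X and on Y
    (hIX : ∀ z ∈ ball (0 : EuclideanSpace ℂ (Fin n)) 1,
      ∃ Cz : ℝ, ∀ f : E, ‖ι f z‖ ≤ Cz * ‖f‖)
    (hIY : ∀ z ∈ ball (0 : EuclideanSpace ℂ (Fin n)) 1,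
      ∃ Cz : ℝ, ∀ g : F, ‖κ g z‖ ≤ Cz * ‖g‖)
    -- condition (II): `f ∈ X ↔ R^N f ∈ Y` and `‖f‖_X ≍ |f(0)| + ‖R^N f‖_Y`
    (N : ℕ) (hN : 1 ≤ N) (C : ℝ) (hC : 1 ≤ C)
    (hII_mem : ∀ f : EuclideanSpace ℂ (Fin n) → ℂ,
      DifferentiableOn ℂ f (ball (0 : EuclideanSpace ℂ (Fin n)) 1) →
      ((∃ g : E, Set.EqOn (ι g) f (ball (0 : EuclideanSpace ℂ (Fin n)) 1)) ↔
        ∃ h : F, Set.EqOn (κ h) ((radDeriv n)^[N] f) (ball (0 : EuclideanSpace ℂ (Fin n)) 1)))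
    (hII_norm : ∀ (g : E) (h : F),
      Set.EqOn (κ h) ((radDeriv n)^[N] (ι g)) (ball (0 : EuclideanSpace ℂ (Fin n)) 1) →
      C⁻¹ * ‖g‖ ≤ ‖ι g 0‖ + ‖h‖ ∧ ‖ι g 0‖ + ‖h‖ ≤ C * ‖g‖)
    -- condition (III): `H^∞(𝔹_n) ⊆ M(Y)`
    (hIII : ∀ v : EuclideanSpace ℂ (Fin n) → ℂ,
      DifferentiableOn ℂ v (ball (0 : EuclideanSpace ℂ (Fin n)) 1) →
      (∃ M : ℝ, ∀ z ∈ ball (0 : EuclideanSpace ℂ (Fin n)) 1, ‖v z‖ ≤ M) →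
      ∀ h : F, ∃ h' : F, ∀ z ∈ ball (0 : EuclideanSpace ℂ (Fin n)) 1, κ h' z = v z * κ h z)
    -- `u ∈ M(X)` with induced multiplication operator `Mu`
    (u : EuclideanSpace ℂ (Fin n) → ℂ)
    (hu : DifferentiableOn ℂ u (ball (0 : EuclideanSpace ℂ (Fin n)) 1))
    (humult : ∀ f : E, ∃ g : E, ∀ z ∈ ball (0 : EuclideanSpace ℂ (Fin n)) 1,
      ι g z = u z * ι f z)
    (Mu : E →L[ℂ] E)
    (hMu : ∀ f : E, ∀ z ∈ ball (0 : EuclideanSpace ℂ (Fin n)) 1, ι (Mu f) z = u z * ι f z) :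
    -- (a) ↔ (b)
    (((∀ z ∈ ball (0 : EuclideanSpace ℂ (Fin n)) 1, u z ≠ 0) ∧
        ∀ f : E, ∃ g : E, ∀ z ∈ ball (0 : EuclideanSpace ℂ (Fin n)) 1,
          ι g z = ι f z / u z) ↔
      ∃ δ : ℝ, 0 < δ ∧ ∀ z ∈ ball (0 : EuclideanSpace ℂ (Fin n)) 1, δ ≤ ‖u z‖) ∧
    -- (b) ↔ (c)
    ((∃ δ : ℝ, 0 < δ ∧ ∀ z ∈ ball (0 : EuclideanSpace ℂ (Fin n)) 1, δ ≤ ‖u z‖) ↔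
      ∃ T : E →L[ℂ] E, T.comp Mu = ContinuousLinearMap.id ℂ E ∧
        Mu.comp T = ContinuousLinearMap.id ℂ E) :=
  stmt_2_general ι κ hιhol hιinj hιconst hIX N hII_mem hIII u hu Mu hMu
end

section
/- Let X be a Banach space of holomorphic functions on 𝔻 satisfying condition (I) and such that M(X) = H^∞(𝔻), and let u ∈ M(X). If the multiplication operator M_u : X → X is Fredholm, then there exist r ∈ (0,1) and δ > 0 such that |u(z)| ≥ δ for all z with r ≤ |z| < 1. -/
/-!
Suppose `u` is not bounded below near the circle: then `u (z k) → 0` along some `z k → α`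
with `‖α‖ = 1`. The normalised evaluation functionals `φ k` at `z k` satisfy
`φ k ∘ M_u = u (z k) • φ k → 0`, and since `M_u` has closed range of finite codimension, a
subsequence converges in norm to a unit functional `μ`. Evaluating at `v • f` with `μ f ≠ 0`
shows that every bounded holomorphic `v` has a limit along that subsequence. This fails for
`v = exp (i t log ((α + ζ) / (α - ζ)))`, bounded since the Herglotz kernel maps the disc to the
right half-plane: if `exp (i t x k)` converged for all `t ∈ [1, 2]` with `x k → ∞`, then
`exp (i t d k) → 1` for suitable differences `d k → ∞`, whereas `∫ t in 1..2, exp (i t d k)`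
is `O(1 / d k)`.
-/

open Metric Set

/-- A bounded operator is Fredholm if it has closed range and finite-dimensional
kernel and cokernel. -/
def IsFredholmOp {E : Type*} [NormedAddCommGroup E] [NormedSpace ℂ E] (T : E →L[ℂ] E) : Prop :=
  IsClosed (LinearMap.range (T : E →ₗ[ℂ] E) : Set E) ∧ FiniteDimensional ℂ (LinearMap.ker (T : E →ₗ[ℂ] E)) ∧
    FiniteDimensional ℂ (E ⧸ LinearMap.range (T : E →ₗ[ℂ] E))

open Filter Topology Complex
open scoped Real

section DualOfClosedRange

variable {𝕜 E F : Type*} [RCLike 𝕜]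
  [NormedAddCommGroup E] [NormedSpace 𝕜 E] [CompleteSpace E]
  [NormedAddCommGroup F] [NormedSpace 𝕜 F] [CompleteSpace F]

namespace ContinuousLinearMap

theorem exists_norm_sub_comp_mkQL_le (T : E →L[𝕜] F)
    (hclosed : IsClosed (LinearMap.range (T : E →ₗ[𝕜] F) : Set F))
    [FiniteDimensional 𝕜 (F ⧸ LinearMap.range (T : E →ₗ[𝕜] F))] :
    ∃ (S : (F ⧸ LinearMap.range (T : E →ₗ[𝕜] F)) →L[𝕜] F) (C : ℝ), ∀ φ : F →L[𝕜] 𝕜,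
      ‖φ - (φ.comp S).comp (LinearMap.range (T : E →ₗ[𝕜] F)).mkQL‖ ≤ C * ‖φ.comp T‖ := by
  set R := LinearMap.range (T : E →ₗ[𝕜] F)
  have : IsClosed (R : Set F) := hclosed
  have : CompleteSpace R := hclosed.completeSpace_coe
  obtain ⟨S, hS⟩ :=
    R.mkQL.exists_rightInverse_of_surjective (LinearMap.range_eq_top.2 R.mkQ_surjective)
  set P : F →L[𝕜] F := ContinuousLinearMap.id 𝕜 F - S.comp R.mkQL
  have hP : ∀ x, P x ∈ R := fun x => by
    rw [← Submodule.Quotient.mk_eq_zero, ← Submodule.mkQ_apply, ← R.coe_mkQL]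
    have hSx : R.mkQ (S (R.mkQ x)) = R.mkQ x := congr($hS (R.mkQL x))
    simpa [P, sub_eq_zero] using hSx.symm
  obtain ⟨C, hC0, hC⟩ :=
    (T.codRestrict R (LinearMap.mem_range_self (T : E →ₗ[𝕜] F))).exists_preimage_norm_le
      fun ⟨y, x, hx⟩ => ⟨x, Subtype.ext hx⟩
  refine ⟨S, C * ‖P‖, fun φ => opNorm_le_bound _ (by positivity) fun x => ?_⟩
  obtain ⟨y, hy, hyx⟩ := hC ⟨P x, hP x⟩
  have hTy : T y = P x := congr(Subtype.val $hy)
  calc ‖(φ - (φ.comp S).comp R.mkQL) x‖ = ‖(φ.comp T) y‖ := by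
        simp [hTy, P]
    _ ≤ ‖φ.comp T‖ * (C * (‖P‖ * ‖x‖)) :=
        ((φ.comp T).le_opNorm y).trans
          (by gcongr; exact hyx.trans (by gcongr; exact P.le_opNorm x))
    _ = C * ‖P‖ * ‖φ.comp T‖ * ‖x‖ := by ring

theorem exists_subseq_tendsto_of_tendsto_norm_comp (T : E →L[𝕜] F)
    (hclosed : IsClosed (LinearMap.range (T : E →ₗ[𝕜] F) : Set F))
    [FiniteDimensional 𝕜 (F ⧸ LinearMap.range (T : E →ₗ[𝕜] F))]
    {φ : ℕ → F →L[𝕜] 𝕜} {M : ℝ} (hM : ∀ k, ‖φ k‖ ≤ M)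
    (hT : Tendsto (fun k => ‖(φ k).comp T‖) atTop (𝓝 0)) :
    ∃ μ : F →L[𝕜] 𝕜, ∃ ψ : ℕ → ℕ, StrictMono ψ ∧ Tendsto (φ ∘ ψ) atTop (𝓝 μ) := by
  set R := LinearMap.range (T : E →ₗ[𝕜] F)
  obtain ⟨S, C, hC⟩ := exists_norm_sub_comp_mkQL_le T hclosed
  have := FiniteDimensional.proper_rclike 𝕜 ((F ⧸ R) →L[𝕜] 𝕜)
  obtain ⟨ν, -, ψ, hψ, hν⟩ := (isCompact_closedBall (0 : (F ⧸ R) →L[𝕜] 𝕜) (M * ‖S‖)).tendsto_subseq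
    (x := fun k => (φ k).comp S) fun k => mem_closedBall_zero_iff.2 <|
      (opNorm_comp_le _ _).trans (by gcongr; exact hM k)
  refine ⟨ν.comp R.mkQL, ψ, hψ, ?_⟩
  have hsmall : Tendsto (fun k => φ (ψ k) - ((φ (ψ k)).comp S).comp R.mkQL) atTop (𝓝 0) :=
    squeeze_zero_norm (fun k => hC _) (by simpa using (hT.comp hψ.tendsto_atTop).const_mul C)
  have hquot : Tendsto (fun k => ((φ (ψ k)).comp S).comp R.mkQL) atTop (𝓝 (ν.comp R.mkQL)) :=
    ((precomp 𝕜 R.mkQL).continuous.tendsto ν).comp hν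
  simpa [Function.comp_def] using hsmall.add hquot

end ContinuousLinearMap
end DualOfClosedRange

theorem tendsto_integral_exp_mul_I_zero {d : ℕ → ℝ} (hd : Tendsto d atTop atTop) (a b : ℝ) :
    Tendsto (fun k => ∫ t in a..b, cexp (d k * I * t)) atTop (𝓝 0) := by
  refine squeeze_zero_norm' ?_ ((tendsto_const_nhds (x := (2 : ℝ))).div_atTop hd)
  filter_upwards [hd.eventually_gt_atTop 0] with k hk
  have hc : (d k : ℂ) * I ≠ 0 := mul_ne_zero (by exact_mod_cast hk.ne') I_ne_zero
  rw [integral_exp_mul_complex hc, norm_div]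
  calc ‖cexp (d k * I * b) - cexp (d k * I * a)‖ / ‖(d k : ℂ) * I‖
      ≤ (‖cexp (d k * I * b)‖ + ‖cexp (d k * I * a)‖) / ‖(d k : ℂ) * I‖ := by
        gcongr; exact norm_sub_le _ _
    _ = 2 / d k := by norm_num [Complex.norm_exp, abs_of_pos hk]

theorem not_forall_tendsto_exp_mul_I_one {d : ℕ → ℝ} (hd : Tendsto d atTop atTop) {a b : ℝ}
    (hab : a < b) : ¬ ∀ t ∈ Icc a b, Tendsto (fun k => cexp (d k * I * t)) atTop (𝓝 1) := by
  intro h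
  have hlim : Tendsto (fun k => ∫ t in a..b, cexp (d k * I * t)) atTop
      (𝓝 (∫ _ in a..b, (1 : ℂ))) := by
    refine intervalIntegral.tendsto_integral_filter_of_dominated_convergence (fun _ => 1)
      (Eventually.of_forall fun k => ?_) (Eventually.of_forall fun k => ?_) intervalIntegrable_const
      (Eventually.of_forall fun t ht => h t ?_)
    · exact (by fun_prop : Continuous fun t : ℝ => cexp (d k * I * t)).aestronglyMeasurable
    · exact Eventually.of_forall fun t _ => by simp [Complex.norm_exp]
    · rw [uIoc_of_le hab.le] at ht; exact Ioc_subset_Icc_self ht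
  have := tendsto_nhds_unique hlim (tendsto_integral_exp_mul_I_zero hd a b)
  simp [sub_eq_zero, hab.ne'] at this

theorem not_forall_exists_tendsto_exp_mul_I {x : ℕ → ℝ} (hx : Tendsto x atTop atTop) {a b : ℝ}
    (hab : a < b) : ¬ ∀ t ∈ Icc a b, ∃ L, Tendsto (fun k => cexp (x k * I * t)) atTop (𝓝 L) := by
  intro h
  have hm (k : ℕ) : ∃ m, k ≤ m ∧ x k + k ≤ x m :=
    ((eventually_ge_atTop k).and (hx.eventually_ge_atTop (x k + k))).exists
  choose m hkm hxm using hm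
  refine not_forall_tendsto_exp_mul_I_one (d := fun k => x (m k) - x k) ?_ hab fun t ht => ?_
  · exact tendsto_atTop_mono (fun k => by linarith [hxm k]) tendsto_natCast_atTop_atTop
  obtain ⟨L, hL⟩ := h t ht
  have hL0 : L ≠ 0 := by
    have : ‖L‖ = 1 := tendsto_nhds_unique hL.norm (by simp [Complex.norm_exp])
    exact norm_ne_zero_iff.1 (by simp [this])
  have := (hL.comp (tendsto_atTop_mono hkm tendsto_id)).div hL hL0
  rw [div_self hL0] at this
  refine this.congr fun k => ?_
  simp [← Complex.exp_sub, sub_mul]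

theorem exp_I_mul_div_norm (t : ℝ) (z : ℂ) :
    cexp (I * t * z) / (‖cexp (I * t * z)‖ : ℂ) = cexp (z.re * I * t) := by
  have hsplit : I * t * z = z.re * I * t + ((-(t * z.im) : ℝ) : ℂ) := by
    nth_rewrite 1 [← re_add_im z]
    push_cast
    linear_combination (t * z.im : ℂ) * I_sq
  rw [hsplit, Complex.exp_add, norm_mul, ← Complex.ofReal_exp, Complex.norm_real,
    Real.norm_of_nonneg (Real.exp_pos _).le]
  have := Real.exp_pos (-(t * z.im))
  field_simp
  simp [Complex.norm_exp]

theorem not_forall_exists_tendsto_exp_I_mul {w : ℕ → ℂ}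
    (hre : Tendsto (fun k => (w k).re) atTop atTop) {B : ℝ} (him : ∀ k, |(w k).im| ≤ B)
    {a b : ℝ} (hab : a < b) :
    ¬ ∀ t ∈ Icc a b, ∃ L, Tendsto (fun k => cexp (I * t * w k)) atTop (𝓝 L) := by
  refine fun h => not_forall_exists_tendsto_exp_mul_I hre hab fun t ht => ?_
  obtain ⟨L, hL⟩ := h t ht
  have hL0 : L ≠ 0 := by
    refine norm_pos_iff.1 <|
      (Real.exp_pos (-(|t| * B))).trans_le (ge_of_tendsto' hL.norm fun k => ?_)
    rw [Complex.norm_exp, Real.exp_le_exp]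
    have : |t * (w k).im| ≤ |t| * B := by rw [abs_mul]; gcongr; exact him k
    simpa using (le_abs_self _).trans this
  have hnormL : Tendsto (fun k => (‖cexp (I * t * w k)‖ : ℂ)) atTop (𝓝 ‖L‖) :=
    (continuous_ofReal.tendsto _).comp hL.norm
  exact ⟨L / ‖L‖, (hL.div hnormL (by simpa using hL0)).congr fun k => exp_I_mul_div_norm t (w k)⟩

noncomputable def herglotzKernel (α ζ : ℂ) : ℂ := (α + ζ) / (α - ζ)

theorem re_herglotzKernel_pos {α ζ : ℂ} (hζ : ‖ζ‖ < ‖α‖) : 0 < (herglotzKernel α ζ).re := by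
  have hne : α - ζ ≠ 0 := sub_ne_zero.2 fun h => by simp [h] at hζ
  have hnum : (α + ζ).re * (α - ζ).re + (α + ζ).im * (α - ζ).im = ‖α‖ ^ 2 - ‖ζ‖ ^ 2 := by
    simp only [Complex.sq_norm, normSq_apply, add_re, sub_re, add_im, sub_im]; ring
  rw [herglotzKernel, div_re, ← add_div, hnum]
  exact div_pos (by nlinarith [norm_nonneg ζ]) (normSq_pos.2 hne)

theorem tendsto_norm_herglotzKernel_atTop {α : ℂ} (hα : α ≠ 0) :
    Tendsto (fun ζ => ‖herglotzKernel α ζ‖) (𝓝[≠] α) atTop := by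
  have hnum : Tendsto (fun ζ => ‖α + ζ‖) (𝓝[≠] α) (𝓝 ‖α + α‖) :=
    ((continuous_const.add continuous_id).norm.tendsto α).mono_left nhdsWithin_le_nhds
  have hden : Tendsto (fun ζ => α - ζ) (𝓝[≠] α) (𝓝[≠] 0) := by
    refine tendsto_nhdsWithin_of_tendsto_nhds_of_eventually_within _ ?_ ?_
    · have := ((continuous_const.sub continuous_id).tendsto (f := fun ζ : ℂ => α - ζ) α)
      simpa using this.mono_left nhdsWithin_le_nhds
    · filter_upwards [self_mem_nhdsWithin] with ζ hζ
      exact sub_ne_zero.2 (Ne.symm hζ)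
  simpa [herglotzKernel, div_eq_mul_inv] using
    hnum.pos_mul_atTop (by simpa [← two_mul] using hα)
      (tendsto_norm_inv_nhdsNE_zero_atTop.comp hden)

theorem norm_exp_I_mul_log_le {z : ℂ} (hz : 0 ≤ z.re) (t : ℝ) :
    ‖cexp (I * t * log z)‖ ≤ Real.exp (|t| * (π / 2)) := by
  rw [norm_exp, Real.exp_le_exp]
  have : |t * arg z| ≤ |t| * (π / 2) := by
    rw [abs_mul]; gcongr; exact abs_arg_le_pi_div_two_iff.2 hz
  simpa [log_im] using (neg_le_abs (t * arg z)).trans this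

theorem differentiableOn_exp_mul_log_herglotzKernel (α c : ℂ) :
    DifferentiableOn ℂ (fun ζ => cexp (c * log (herglotzKernel α ζ))) (ball 0 ‖α‖) := by
  intro ζ hζ
  rw [mem_ball_zero_iff] at hζ
  have hne : α - ζ ≠ 0 := sub_ne_zero.2 fun h => by simp [h] at hζ
  have hslit : herglotzKernel α ζ ∈ slitPlane := Or.inl (re_herglotzKernel_pos hζ)
  have hk : DifferentiableAt ℂ (herglotzKernel α) ζ := by
    unfold herglotzKernel; fun_prop (disch := exact hne)
  exact (((hk.clog hslit).const_mul c).cexp).differentiableWithinAt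

theorem exists_seq_tendsto_sphere_of_not_exists_lower_bound {F : Type*} [NormedAddCommGroup F]
    {u : ℂ → F} (h : ¬ ∃ r ∈ Ioo (0 : ℝ) 1, ∃ δ : ℝ, 0 < δ ∧
      ∀ z : ℂ, r ≤ ‖z‖ → ‖z‖ < 1 → δ ≤ ‖u z‖) :
    ∃ z : ℕ → ℂ, ∃ α : ℂ, (∀ k, ‖z k‖ < 1) ∧ ‖α‖ = 1 ∧ Tendsto z atTop (𝓝 α) ∧
      Tendsto (u ∘ z) atTop (𝓝 0) := by
  push Not at h
  obtain ⟨r, -, hr, hr1⟩ := exists_seq_strictMono_tendsto' (zero_lt_one' ℝ)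
  have hz k := h (r k) (hr k) (1 / (k + 1)) (by positivity)
  choose z hrz hz1 huz using hz
  obtain ⟨α, hα, ψ, hψ, hzα⟩ := (isCompact_closedBall (0 : ℂ) 1).tendsto_subseq
    (x := z) fun k => mem_closedBall_zero_iff.2 (hz1 k).le
  have hnorm : Tendsto (fun k => ‖z k‖) atTop (𝓝 1) :=
    tendsto_of_tendsto_of_tendsto_of_le_of_le hr1 tendsto_const_nhds hrz fun k => (hz1 k).le
  refine ⟨z ∘ ψ, α, fun k => hz1 _, ?_, hzα, ?_⟩
  · exact tendsto_nhds_unique hzα.norm (hnorm.comp hψ.tendsto_atTop)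
  · refine (squeeze_zero_norm (fun k => (huz k).le) tendsto_one_div_add_atTop_nhds_zero_nat).comp
      hψ.tendsto_atTop

theorem exists_norm_eq_one_apply_eq_mul_eval {𝕜 E X : Type*} [RCLike 𝕜]
    [NormedAddCommGroup E] [NormedSpace 𝕜 E] (ι : E →ₗ[𝕜] (X → 𝕜)) {x : X}
    (hbound : ∃ C, ∀ f, ‖ι f x‖ ≤ C * ‖f‖) (hne : ∃ f, ι f x ≠ 0) :
    ∃ φ : E →L[𝕜] 𝕜, ‖φ‖ = 1 ∧ ∃ c : 𝕜, ∀ f, φ f = c * ι f x := by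
  set ev : E →L[𝕜] 𝕜 := LinearMap.mkContinuousOfExistsBound ((LinearMap.proj x).comp ι) hbound
  have hev0 : ev ≠ 0 := fun h => hne.elim fun f hf => hf congr($h f)
  exact ⟨(‖ev‖ : 𝕜)⁻¹ • ev, by simp [norm_smul, hev0], _, fun f => rfl⟩

theorem tendsto_of_apply_eq_mul_apply {𝕜 E : Type*} [NontriviallyNormedField 𝕜]
    [NormedAddCommGroup E] [NormedSpace 𝕜 E] {φ : ℕ → E →L[𝕜] 𝕜} {μ : E →L[𝕜] 𝕜}
    (hφ : Tendsto φ atTop (𝓝 μ)) {f g : E} (hf : μ f ≠ 0) {c : ℕ → 𝕜}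
    (hc : ∀ k, φ k g = c k * φ k f) : Tendsto c atTop (𝓝 (μ g / μ f)) := by
  have happly (x : E) : Tendsto (fun k => φ k x) atTop (𝓝 (μ x)) :=
    ((ContinuousLinearMap.apply 𝕜 𝕜 x).continuous.tendsto μ).comp hφ
  refine ((happly g).div (happly f) hf).congr' ?_
  filter_upwards [(happly f).eventually_ne hf] with k hk
  simp [hc k, mul_div_cancel_right₀ _ hk]

theorem not_forall_exists_tendsto_exp_I_mul_log_herglotzKernel {α : ℂ} (hα : ‖α‖ = 1)
    {w : ℕ → ℂ} (hw1 : ∀ k, ‖w k‖ < 1) (hw : Tendsto w atTop (𝓝 α)) :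
    ¬ ∀ t ∈ Icc (1 : ℝ) 2, ∃ L,
      Tendsto (fun k => cexp (I * t * log (herglotzKernel α (w k)))) atTop (𝓝 L) := by
  have hwα : Tendsto w atTop (𝓝[≠] α) :=
    tendsto_nhdsWithin_iff.2 ⟨hw, Eventually.of_forall fun k h => (hw1 k).ne (by rw [h, hα])⟩
  refine not_forall_exists_tendsto_exp_I_mul (B := π / 2) ?_ (fun k => ?_) one_lt_two
  · simpa [log_re, Function.comp_def] using Real.tendsto_log_atTop.comp
      ((tendsto_norm_herglotzKernel_atTop (norm_ne_zero_iff.1 (by simp [hα]))).comp hwα)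
  · rw [log_im]
    exact abs_arg_le_pi_div_two_iff.2 (re_herglotzKernel_pos (by simpa [hα] using hw1 k)).le

theorem stmt_6_general {E : Type*} [NormedAddCommGroup E] [NormedSpace ℂ E] [CompleteSpace E]
    (ι : E →ₗ[ℂ] (ℂ → ℂ))
    -- X contains the constant functions
    (hconst : ∀ c : ℂ, ∃ f : E, ∀ z ∈ ball (0 : ℂ) 1, ι f z = c)
    -- condition (I): point evaluations are continuous
    (hI : ∀ z ∈ ball (0 : ℂ) 1, ∃ Cz : ℝ, ∀ f : E, ‖ι f z‖ ≤ Cz * ‖f‖)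
    -- `M(X) = H^∞(𝔻)`: a holomorphic function on 𝔻 is a multiplier iff it is bounded on 𝔻
    (hMX : ∀ v : ℂ → ℂ, DifferentiableOn ℂ v (ball (0 : ℂ) 1) →
      ((∀ f : E, ∃ g : E, ∀ z ∈ ball (0 : ℂ) 1, ι g z = v z * ι f z) ↔
        ∃ M : ℝ, ∀ z ∈ ball (0 : ℂ) 1, ‖v z‖ ≤ M))
    -- `u ∈ M(X)` with induced multiplication operator `Mu`
    (u : ℂ → ℂ)
    (Mu : E →L[ℂ] E)
    (hMu : ∀ f : E, ∀ z ∈ ball (0 : ℂ) 1, ι (Mu f) z = u z * ι f z)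
    (hFred : IsFredholmOp Mu) :
    ∃ r ∈ Set.Ioo (0 : ℝ) 1, ∃ δ : ℝ, 0 < δ ∧
      ∀ z : ℂ, r ≤ ‖z‖ → ‖z‖ < 1 → δ ≤ ‖u z‖ := by
  by_contra hcon
  obtain ⟨z, α, hz1, hα, hzα, huz⟩ := exists_seq_tendsto_sphere_of_not_exists_lower_bound hcon
  have hzball k : z k ∈ ball (0 : ℂ) 1 := mem_ball_zero_iff.2 (hz1 k)
  obtain ⟨f₁, hf₁⟩ := hconst 1
  choose φ hφ1 c hφ using fun k => exists_norm_eq_one_apply_eq_mul_eval ι (hI _ (hzball k))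
    ⟨f₁, by simp [hf₁ _ (hzball k)]⟩
  have hφMu k : (φ k).comp Mu = u (z k) • φ k := by
    ext f
    simp only [ContinuousLinearMap.comp_apply, hφ, hMu f _ (hzball k),
      smul_apply, smul_eq_mul]
    ring
  obtain ⟨hclosed, -, hcoker⟩ := hFred
  obtain ⟨μ, ψ, hψ, hφμ⟩ := ContinuousLinearMap.exists_subseq_tendsto_of_tendsto_norm_comp Mu
    hclosed (M := 1) (fun k => (hφ1 k).le) (by simpa [hφMu, norm_smul, hφ1] using huz.norm)
  have hμ : ‖μ‖ = 1 := tendsto_nhds_unique hφμ.norm (by simp [hφ1])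
  obtain ⟨f₀, hf₀⟩ := DFunLike.ne_iff.1 (norm_ne_zero_iff.1 (hμ ▸ one_ne_zero))
  refine not_forall_exists_tendsto_exp_I_mul_log_herglotzKernel hα (fun k => hz1 (ψ k))
    (hzα.comp hψ.tendsto_atTop) fun t _ => ?_
  set v : ℂ → ℂ := fun ζ => cexp (I * t * log (herglotzKernel α ζ))
  have hv : DifferentiableOn ℂ v (ball 0 1) := hα ▸ differentiableOn_exp_mul_log_herglotzKernel α _
  obtain ⟨g, hg⟩ := (hMX v hv).2 ⟨_, fun ζ hζ => norm_exp_I_mul_log_le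
    (re_herglotzKernel_pos (by simpa [hα] using hζ)).le t⟩ f₀
  exact ⟨_, tendsto_of_apply_eq_mul_apply (g := g) hφμ hf₀ fun k => by
    simp only [Function.comp_apply, hφ, hg _ (hzball _), v]; ring⟩

/-- Let `X` be a Banach space of holomorphic functions on the unit disk `𝔻`
satisfying condition (I) and with `M(X) = H^∞(𝔻)`, and let `u ∈ M(X)`. If the multiplication
operator `M_u : X → X` is Fredholm, then there are `r ∈ (0,1)` and `δ > 0` with `|u(z)| ≥ δ`
whenever `r ≤ |z| < 1`. -/
theorem stmt_6 {E : Type*} [NormedAddCommGroup E] [NormedSpace ℂ E] [CompleteSpace E]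
    (ι : E →ₗ[ℂ] (ℂ → ℂ))
    -- X consists of holomorphic functions on 𝔻
    (hhol : ∀ f : E, DifferentiableOn ℂ (ι f) (ball (0 : ℂ) 1))
    -- elements of X are determined by their values on 𝔻
    (hinj : ∀ f g : E, Set.EqOn (ι f) (ι g) (ball (0 : ℂ) 1) → f = g)
    -- X contains the constant functions
    (hconst : ∀ c : ℂ, ∃ f : E, ∀ z ∈ ball (0 : ℂ) 1, ι f z = c)
    -- condition (I): point evaluations are continuous
    (hI : ∀ z ∈ ball (0 : ℂ) 1, ∃ Cz : ℝ, ∀ f : E, ‖ι f z‖ ≤ Cz * ‖f‖)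
    -- `M(X) = H^∞(𝔻)`: a holomorphic function on 𝔻 is a multiplier iff it is bounded on 𝔻
    (hMX : ∀ v : ℂ → ℂ, DifferentiableOn ℂ v (ball (0 : ℂ) 1) →
      ((∀ f : E, ∃ g : E, ∀ z ∈ ball (0 : ℂ) 1, ι g z = v z * ι f z) ↔
        ∃ M : ℝ, ∀ z ∈ ball (0 : ℂ) 1, ‖v z‖ ≤ M))
    -- `u ∈ M(X)` with induced multiplication operator `Mu`
    (u : ℂ → ℂ) (hu : DifferentiableOn ℂ u (ball (0 : ℂ) 1))
    (humult : ∀ f : E, ∃ g : E, ∀ z ∈ ball (0 : ℂ) 1, ι g z = u z * ι f z)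
    (Mu : E →L[ℂ] E)
    (hMu : ∀ f : E, ∀ z ∈ ball (0 : ℂ) 1, ι (Mu f) z = u z * ι f z)
    (hFred : IsFredholmOp Mu) :
    ∃ r ∈ Set.Ioo (0 : ℝ) 1, ∃ δ : ℝ, 0 < δ ∧
      ∀ z : ℂ, r ≤ ‖z‖ → ‖z‖ < 1 → δ ≤ ‖u z‖ :=
  stmt_6_general ι hconst hI hMX u Mu hMu hFred
end

section
/- Let X and Y be Banach spaces of holomorphic functions on 𝔻 satisfying conditions (I), (II), (III) and (IV), and let u ∈ M(X). If there exist r ∈ (0,1) and δ > 0 such that |u(z)| ≥ δ for all z with r ≤ |z| < 1, then the multiplication operator M_u : X → X is Fredholm. -/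
/-!
The zeros of `u` in `𝔻` lie in `‖z‖ ≤ r`, hence are finitely many, and peeling them off gives
`u = q v` on `𝔻` with `q = ∏ (z - a)` and `v` zero-free; `v` is bounded below (by compactness
inside, and by `|u| ≥ δ`, `|q| ≤ 2 ^ deg q` near the boundary). Condition (IV) divides by `q`,
so `v = u / q` multiplies `X`. The radial derivative `R` is a derivation, so `[M_v, R] = -M_{Rv}`
commutes with `M_v` and `(ad M_v)^(N+1) (R^N) = 0`; expanded, this writes `R^N (f / v)` as a
combination of the `v^(-j-1) R^N (v^j f)`, which lie in `Y` by (II) and (III). Hence `1 / v`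
multiplies `X` too and `range M_u = q X`. Interpolating at the zeros (`f = P + q g` with
`deg P < deg q`) shows that this range has finite codimension; `M_u` is injective by the identity
theorem, and an injective operator whose range has a finite-dimensional algebraic complement has
closed range.
-/

open Metric Set

/-- The radial derivative on the disk, `Rf(z) = z f'(z)`. -/
noncomputable def radDeriv1 (f : ℂ → ℂ) : ℂ → ℂ := fun z => z * deriv f z

open Filter Topology

local notation "𝔻" => ball (0 : ℂ) 1

section Commutator

variable {A : Type*} [Ring A]

def commutatorEnd (a : A) : Module.End ℤ A := LinearMap.mulLeft ℤ a - LinearMap.mulRight ℤ a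

@[simp] lemma commutatorEnd_apply (a x : A) : commutatorEnd a x = a * x - x * a := rfl

lemma commutatorEnd_mul (a x y : A) :
    commutatorEnd a (x * y) = commutatorEnd a x * y + x * commutatorEnd a y := by
  simp only [commutatorEnd_apply]; noncomm_ring

lemma commutatorEnd_pow_apply (a x : A) (k : ℕ) :
    (commutatorEnd a ^ k) x =
      ∑ i ∈ Finset.range (k + 1), ((-1) ^ i * k.choose i : ℤ) • (a ^ (k - i) * x * a ^ i) := by
  have h : commutatorEnd a = LinearMap.mulRight ℤ (-a) + LinearMap.mulLeft ℤ a := by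
    ext; simp; abel
  rw [h, (LinearMap.commute_mulLeft_right a (-a)).symm.add_pow, LinearMap.sum_apply]
  refine Finset.sum_congr rfl fun i _ => ?_
  simp only [Module.End.mul_apply, LinearMap.pow_mulLeft, LinearMap.pow_mulRight,
    LinearMap.mulLeft_apply, LinearMap.mulRight_apply, Module.End.natCast_apply]
  rcases Nat.even_or_odd i with hi | hi <;>
    simp only [hi.neg_pow, mul_smul_comm, smul_mul_assoc, mul_neg, neg_mul, neg_smul, one_pow,
      one_mul, natCast_zsmul]

lemma commutatorEnd_pow_succ_mul {a d : A} (h : Commute a (commutatorEnd a d)) (x : A) (m : ℕ) :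
    (commutatorEnd a ^ (m + 1)) (x * d) = (commutatorEnd a ^ (m + 1)) x * d +
      (m + 1 : ℤ) • ((commutatorEnd a ^ m) x * commutatorEnd a d) := by
  have hc : commutatorEnd a (commutatorEnd a d) = 0 := sub_eq_zero.mpr h.eq
  induction m with
  | zero => simpa using commutatorEnd_mul a x d
  | succ m ih =>
    rw [pow_succ', Module.End.mul_apply, ih, map_add, map_zsmul, commutatorEnd_mul,
      commutatorEnd_mul, hc]
    simp only [pow_succ', Module.End.mul_apply]
    push_cast
    rw [mul_zero, add_zero]
    module

lemma commutatorEnd_pow_apply_pow_eq_zero {a d : A} (h : Commute a (commutatorEnd a d)) :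
    ∀ {n k : ℕ}, n < k → (commutatorEnd a ^ k) (d ^ n) = 0 := by
  intro n
  induction n with
  | zero =>
    intro k hk
    obtain ⟨k, rfl⟩ := Nat.exists_eq_add_of_lt hk
    simp [pow_succ]
  | succ n ih =>
    intro k hk
    obtain ⟨m, rfl⟩ := Nat.exists_eq_add_of_lt hk
    rw [pow_succ d n, commutatorEnd_pow_succ_mul h, ih (by omega), ih (by omega)]
    simp

theorem sum_choose_pow_mul_pow_mul_pow_eq_zero {a d : A} (h : Commute a (a * d - d * a))
    {n k : ℕ} (hnk : n < k) :
    ∑ i ∈ Finset.range (k + 1), ((-1) ^ i * k.choose i : ℤ) • (a ^ (k - i) * d ^ n * a ^ i) =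
      0 := by
  rw [← commutatorEnd_pow_apply]
  exact commutatorEnd_pow_apply_pow_eq_zero h hnk

end Commutator

section RadialDerivative

variable {U : Set ℂ} {f g w : ℂ → ℂ}

lemma DifferentiableOn.radDeriv1 (hU : IsOpen U) (hf : DifferentiableOn ℂ f U) :
    DifferentiableOn ℂ (radDeriv1 f) U :=
  differentiableOn_id.mul (hf.analyticOnNhd hU).deriv.differentiableOn

lemma radDeriv1_congr (hU : IsOpen U) (h : EqOn f g U) : EqOn (radDeriv1 f) (radDeriv1 g) U :=
  fun z hz => by
    simp only [radDeriv1, (Filter.eventuallyEq_of_mem (hU.mem_nhds hz) h).deriv_eq]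

lemma radDeriv1_mul {z : ℂ} (hf : DifferentiableAt ℂ f z) (hg : DifferentiableAt ℂ g z) :
    radDeriv1 (f * g) z = radDeriv1 f z * g z + f z * radDeriv1 g z := by
  simp only [radDeriv1, deriv_mul hf hg]
  ring

lemma iterate_radDeriv1_pow (i n : ℕ) :
    radDeriv1^[n] (· ^ i) = fun z : ℂ => (i : ℂ) ^ n * z ^ i := by
  induction n with
  | zero => simp
  | succ n ih =>
    rw [Function.iterate_succ_apply', ih]
    funext z
    simp only [radDeriv1, deriv_const_mul_field', deriv_pow_field]
    rcases i with _ | i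
    · simp
    · simp only [Nat.add_sub_cancel]; ring

variable (U) in
def holOn : Submodule ℂ (ℂ → ℂ) where
  carrier := {f | DifferentiableOn ℂ f U}
  add_mem' := DifferentiableOn.add
  zero_mem' := differentiableOn_const 0
  smul_mem' c _ hf := hf.const_smul c

def mulEnd (hw : DifferentiableOn ℂ w U) : Module.End ℂ (holOn U) :=
  (LinearMap.mulLeft ℂ w).restrict fun _ hf => hw.mul hf

@[simp] lemma coe_mulEnd_apply (hw : DifferentiableOn ℂ w U) (f : holOn U) :
    (mulEnd hw f : ℂ → ℂ) = w * f := rfl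

lemma mulEnd_pow (hw : DifferentiableOn ℂ w U) (n : ℕ) :
    mulEnd hw ^ n = mulEnd (hw.pow n) := by
  induction n with
  | zero => ext; simp
  | succ n ih => ext f z; simp [pow_succ, ih, mul_assoc]

lemma commute_mulEnd {v : ℂ → ℂ} (hv : DifferentiableOn ℂ v U) (hw : DifferentiableOn ℂ w U) :
    Commute (mulEnd hv) (mulEnd hw) := by
  show mulEnd hv * mulEnd hw = mulEnd hw * mulEnd hv
  ext f z
  simp [mul_left_comm]

/-- Cut off to zero outside `U`, so that the Leibniz rule holds everywhere. -/
noncomputable def radialEnd (hU : IsOpen U) : Module.End ℂ (holOn U) where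
  toFun f := ⟨U.indicator (radDeriv1 f), fun z hz =>
    ((f.2.radDeriv1 hU).congr fun _ hy => indicator_of_mem hy _) z hz⟩
  map_add' f g := by
    ext z
    by_cases hz : z ∈ U
    · have hd := fun (h : holOn U) => (h.2 z hz).differentiableAt (hU.mem_nhds hz)
      simp [hz, radDeriv1, deriv_add (hd f) (hd g), mul_add]
    · simp [hz]
  map_smul' c f := by
    ext z
    by_cases hz : z ∈ U
    · have hd := (f.2 z hz).differentiableAt (hU.mem_nhds hz)
      simp [hz, radDeriv1, deriv_const_smul c hd, mul_left_comm]
    · simp [hz]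

lemma radialEnd_pow_eqOn (hU : IsOpen U) (f : holOn U) (n : ℕ) :
    EqOn ((radialEnd hU ^ n) f : ℂ → ℂ) (radDeriv1^[n] f) U := by
  induction n with
  | zero => exact fun _ _ => rfl
  | succ n ih =>
    intro z hz
    rw [pow_succ', Module.End.mul_apply, Function.iterate_succ_apply']
    exact (indicator_of_mem hz _).trans (radDeriv1_congr hU ih hz)

lemma commute_mulEnd_commutator (hU : IsOpen U) (hw : DifferentiableOn ℂ w U) :
    Commute (mulEnd hw) (mulEnd hw * radialEnd hU - radialEnd hU * mulEnd hw) := by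
  have hcomm : mulEnd hw * radialEnd hU - radialEnd hU * mulEnd hw =
      mulEnd (neg_mem (radialEnd hU ⟨w, hw⟩).2) := by
    ext f z
    by_cases hz : z ∈ U
    · have hd := fun {h : ℂ → ℂ} (h' : DifferentiableOn ℂ h U) =>
        (h' z hz).differentiableAt (hU.mem_nhds hz)
      simp [radialEnd, hz, radDeriv1_mul (hd hw) (hd f.2)]
    · simp [radialEnd, hz]
  rw [hcomm]
  exact commute_mulEnd hw _

theorem sum_choose_mul_iterate_radDeriv1_eq_zero (hU : IsOpen U) (hw : DifferentiableOn ℂ w U)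
    (hg : DifferentiableOn ℂ g U) {n k : ℕ} (hnk : n < k) {z : ℂ} (hz : z ∈ U) :
    ∑ i ∈ Finset.range (k + 1),
      (-1) ^ i * k.choose i * (w z ^ (k - i) * radDeriv1^[n] (w ^ i * g) z) = 0 := by
  have h := congrArg (fun T : Module.End ℂ (holOn U) => (T ⟨g, hg⟩ : ℂ → ℂ) z)
    (sum_choose_pow_mul_pow_mul_pow_eq_zero (commute_mulEnd_commutator hU hw) hnk)
  simp only [LinearMap.sum_apply, Submodule.coe_sum, Finset.sum_apply, LinearMap.zero_apply,
    ZeroMemClass.coe_zero, Pi.zero_apply] at h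
  rw [← h]
  refine Finset.sum_congr rfl fun i _ => ?_
  simp only [mulEnd_pow, Module.End.mul_apply, LinearMap.smul_apply]
  rw [Submodule.coe_smul_of_tower, Pi.smul_apply, coe_mulEnd_apply, Pi.mul_apply,
    radialEnd_pow_eqOn hU _ n hz]
  simp [zsmul_eq_mul]

theorem iterate_radDeriv1_eq_sum (hU : IsOpen U) (hw : DifferentiableOn ℂ w U)
    (hw0 : ∀ z ∈ U, w z ≠ 0) (hg : DifferentiableOn ℂ g U) (n : ℕ) {z : ℂ} (hz : z ∈ U) :
    radDeriv1^[n] g z = ∑ i ∈ Finset.range (n + 1),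
      (-1) ^ i * (n + 1).choose (i + 1) *
        ((w z ^ (i + 1))⁻¹ * radDeriv1^[n] (w ^ (i + 1) * g) z) := by
  have h := sum_choose_mul_iterate_radDeriv1_eq_zero hU hw hg (Nat.lt_succ_self n) hz
  rw [Finset.sum_range_succ'] at h
  have hwz := hw0 z hz
  refine mul_left_cancel₀ (pow_ne_zero (n + 1) hwz) ?_
  rw [Finset.mul_sum]
  have hterm : ∀ i ∈ Finset.range (n + 1), w z ^ (n + 1) * ((-1) ^ i * (n + 1).choose (i + 1) *
      ((w z ^ (i + 1))⁻¹ * radDeriv1^[n] (w ^ (i + 1) * g) z)) =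
      -((-1) ^ (i + 1) * (n + 1).choose (i + 1) *
        (w z ^ (n + 1 - (i + 1)) * radDeriv1^[n] (w ^ (i + 1) * g) z)) := by
    intro i hi
    have hin : n + 1 = (n - i) + (i + 1) := by
      have := Finset.mem_range.mp hi; omega
    rw [show n + 1 - (i + 1) = n - i by omega, hin, pow_add]
    field_simp
    ring
  rw [Finset.sum_congr rfl hterm, Finset.sum_neg_distrib]
  simp only [Nat.succ_eq_add_one, pow_zero, one_mul, Nat.choose_zero_right, Nat.cast_one, mul_one,
    Nat.sub_zero] at h
  linear_combination h

end RadialDerivative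

section Factorization

def rootProd (L : List ℂ) (z : ℂ) : ℂ := (L.map (z - ·)).prod

@[simp] lemma rootProd_nil : rootProd [] = 1 := rfl

@[simp] lemma rootProd_cons (a : ℂ) (L : List ℂ) (z : ℂ) :
    rootProd (a :: L) z = (z - a) * rootProd L z := rfl

lemma rootProd_replicate_append (n : ℕ) (a : ℂ) (L : List ℂ) (z : ℂ) :
    rootProd (List.replicate n a ++ L) z = (z - a) ^ n * rootProd L z := by
  simp [rootProd]

lemma differentiable_rootProd (L : List ℂ) : Differentiable ℂ (rootProd L) := by
  induction L with
  | nil => exact differentiable_const 1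
  | cons a L ih => exact (differentiable_id.sub_const a).mul ih

lemma norm_rootProd_le {L : List ℂ} (hL : ∀ a ∈ L, a ∈ 𝔻) {z : ℂ} (hz : z ∈ 𝔻) :
    ‖rootProd L z‖ ≤ 2 ^ L.length := by
  induction L with
  | nil => simp
  | cons a L ih =>
    rw [rootProd_cons, norm_mul, List.length_cons, pow_succ']
    have ha := mem_ball_zero_iff.mp (hL a List.mem_cons_self)
    have hz' := mem_ball_zero_iff.mp hz
    gcongr
    · linarith [norm_sub_le z a]
    · exact ih fun b hb => hL b (List.mem_cons_of_mem a hb)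

lemma exists_eq_sub_pow_mul {U : Set ℂ} {f : ℂ → ℂ} {z₀ : ℂ} (hU : IsOpen U)
    (hf : DifferentiableOn ℂ f U) (hz₀ : z₀ ∈ U) (hne : ¬ ∀ᶠ z in 𝓝 z₀, f z = 0) :
    ∃ (n : ℕ) (g : ℂ → ℂ), DifferentiableOn ℂ g U ∧ g z₀ ≠ 0 ∧ ∀ z, f z = (z - z₀) ^ n * g z := by
  obtain ⟨p, hp⟩ := hf.analyticOnNhd hU z₀ hz₀
  have hdiff : ∀ n, DifferentiableOn ℂ ((Function.swap dslope z₀)^[n] f) U := by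
    intro n
    induction n with
    | zero => exact hf
    | succ n ih =>
      rw [Function.iterate_succ_apply']
      exact (Complex.differentiableOn_dslope (hU.mem_nhds hz₀)).mpr ih
  exact ⟨p.order, _, hdiff _, hp.iterate_dslope_fslope_ne_zero (mt hp.locally_zero_iff.mpr hne),
    hp.eq_pow_order_mul_iterate_dslope⟩

variable {φ : ℂ → ℂ} {r : ℝ}

lemma exists_mem_ball_lt_norm (hr : r < 1) : ∃ z : ℂ, z ∈ 𝔻 ∧ r < ‖z‖ := by
  obtain ⟨z, hz⟩ := exists_norm_eq ℂ (by positivity : (0 : ℝ) ≤ (max r 0 + 1) / 2)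
  refine ⟨z, mem_ball_zero_iff.mpr ?_, ?_⟩ <;> rw [hz] <;> cases max_cases r 0 <;> linarith

lemma not_eqOn_zero_of_zeros_le (hr : r < 1) (hzeros : ∀ z ∈ 𝔻, φ z = 0 → ‖z‖ ≤ r) :
    ¬ EqOn φ 0 𝔻 := fun h => by
  obtain ⟨z, hz, hrz⟩ := exists_mem_ball_lt_norm hr
  exact (hzeros z hz (h hz)).not_gt hrz

lemma finite_zeros (hφ : DifferentiableOn ℂ φ 𝔻) (hr : r < 1)
    (hzeros : ∀ z ∈ 𝔻, φ z = 0 → ‖z‖ ≤ r) : {z ∈ 𝔻 | φ z = 0}.Finite := by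
  have hne := ((hφ.analyticOnNhd isOpen_ball).eqOn_zero_or_eventually_ne_zero_of_preconnected
    (convex_ball 0 1).isPreconnected).resolve_left (not_eqOn_zero_of_zeros_le hr hzeros)
  refine ((isCompact_closedBall (0 : ℂ) r).finite_sdiff_of_mem_codiscreteWithin
    (codiscreteWithin_mono (closedBall_subset_ball hr) hne)).subset ?_
  rintro z ⟨hz, hφz⟩
  exact ⟨mem_closedBall_zero_iff.mpr (hzeros z hz hφz), fun h => h hφz⟩

theorem exists_eqOn_rootProd_mul (hφ : DifferentiableOn ℂ φ 𝔻) (hr : r < 1)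
    (hzeros : ∀ z ∈ 𝔻, φ z = 0 → ‖z‖ ≤ r) :
    ∃ (L : List ℂ) (v : ℂ → ℂ), (∀ a ∈ L, a ∈ 𝔻) ∧ DifferentiableOn ℂ v 𝔻 ∧
      (∀ z ∈ 𝔻, v z ≠ 0) ∧ EqOn φ (rootProd L * v) 𝔻 := by
  obtain ⟨n, hn⟩ : ∃ n, {z ∈ 𝔻 | φ z = 0}.ncard = n := ⟨_, rfl⟩
  induction n using Nat.strong_induction_on generalizing φ with | _ n ih => ?_
  rcases {z ∈ 𝔻 | φ z = 0}.eq_empty_or_nonempty with h0 | ⟨z₀, hz₀, hφz₀⟩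
  · exact ⟨[], φ, by simp, hφ, fun z hz hφz => h0.subset ⟨hz, hφz⟩, fun z _ => by simp⟩
  have hlocal : ¬ ∀ᶠ z in 𝓝 z₀, φ z = 0 := fun h => not_eqOn_zero_of_zeros_le hr hzeros
    ((hφ.analyticOnNhd isOpen_ball).eqOn_zero_of_preconnected_of_eventuallyEq_zero
      (convex_ball 0 1).isPreconnected hz₀ h)
  obtain ⟨m, ψ, hψ, hψz₀, hφψ⟩ := exists_eq_sub_pow_mul isOpen_ball hφ hz₀ hlocal
  have hψφ : ∀ z, ψ z = 0 → φ z = 0 := fun z h => by rw [hφψ, h, mul_zero]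
  have hlt : {z ∈ 𝔻 | ψ z = 0} ⊂ {z ∈ 𝔻 | φ z = 0} :=
    ⟨fun z hz => ⟨hz.1, hψφ z hz.2⟩, fun h => hψz₀ (h ⟨hz₀, hφz₀⟩).2⟩
  obtain ⟨L, v, hL, hv, hv0, hψv⟩ := ih _ (hn ▸ Set.ncard_lt_ncard hlt (finite_zeros hφ hr hzeros))
    hψ (fun z hz h => hzeros z hz (hψφ z h)) rfl
  refine ⟨List.replicate m z₀ ++ L, v, ?_, hv, hv0, fun z hz => ?_⟩
  · simp only [List.mem_append, List.mem_replicate]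
    rintro a (⟨-, rfl⟩ | ha)
    exacts [hz₀, hL a ha]
  · simp only [Pi.mul_apply, rootProd_replicate_append, hφψ z, hψv hz, mul_assoc]

lemma exists_pos_le_norm_of_eqOn_rootProd_mul {u v : ℂ → ℂ} {L : List ℂ} {δ : ℝ}
    (hL : ∀ a ∈ L, a ∈ 𝔻) (hv : ContinuousOn v 𝔻) (hv0 : ∀ z ∈ 𝔻, v z ≠ 0)
    (huv : EqOn u (rootProd L * v) 𝔻) (hr : r < 1) (hδ : 0 < δ)
    (hbound : ∀ z : ℂ, r ≤ ‖z‖ → ‖z‖ < 1 → δ ≤ ‖u z‖) : ∃ ε > 0, ∀ z ∈ 𝔻, ε ≤ ‖v z‖ := by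
  have hK := closedBall_subset_ball (x := (0 : ℂ)) hr
  obtain ⟨ε, hε, hεK⟩ := (isCompact_closedBall (0 : ℂ) r).exists_forall_le'
    (continuous_norm.comp_continuousOn (hv.mono hK)) fun z hz => norm_pos_iff.mpr (hv0 z (hK hz))
  refine ⟨min ε (δ / 2 ^ L.length), lt_min hε (by positivity), fun z hz => ?_⟩
  rcases le_or_gt ‖z‖ r with hzr | hzr
  · exact (min_le_left _ _).trans (hεK z (mem_closedBall_zero_iff.mpr hzr))
  · refine (min_le_right _ _).trans ((div_le_iff₀' (by positivity)).mpr ?_)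
    calc δ ≤ ‖u z‖ := hbound z hzr.le (mem_ball_zero_iff.mp hz)
      _ = ‖rootProd L z‖ * ‖v z‖ := by rw [huv hz, Pi.mul_apply, norm_mul]
      _ ≤ 2 ^ L.length * ‖v z‖ := by gcongr; exact norm_rootProd_le hL hz

lemma eqOn_zero_of_mul_eqOn_zero {u g : ℂ → ℂ} (hg : DifferentiableOn ℂ g 𝔻) (hr : r < 1)
    (hu : ∀ z : ℂ, r ≤ ‖z‖ → ‖z‖ < 1 → u z ≠ 0) (h : EqOn (u * g) 0 𝔻) : EqOn g 0 𝔻 := by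
  obtain ⟨z₁, hz₁, hrz₁⟩ := exists_mem_ball_lt_norm hr
  have hA : {z : ℂ | r < ‖z‖} ∩ 𝔻 ∈ 𝓝 z₁ :=
    ((isOpen_lt continuous_const continuous_norm).inter isOpen_ball).mem_nhds ⟨hrz₁, hz₁⟩
  refine (hg.analyticOnNhd isOpen_ball).eqOn_zero_of_preconnected_of_eventuallyEq_zero
    (convex_ball 0 1).isPreconnected hz₁ (Filter.eventually_of_mem hA fun z ⟨hrz, hz⟩ => ?_)
  exact (mul_eq_zero.mp (h hz)).resolve_left (hu z hrz.le (mem_ball_zero_iff.mp hz))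

open Polynomial in
theorem exists_eqOn_eval_add_rootProd_mul {U : Set ℂ} {f : ℂ → ℂ} (hU : IsOpen U)
    (hf : DifferentiableOn ℂ f U) {L : List ℂ} (hL : ∀ a ∈ L, a ∈ U) :
    ∃ (P : ℂ[X]) (g : ℂ → ℂ), P.degree < L.length ∧ DifferentiableOn ℂ g U ∧
      EqOn f (fun z => P.eval z + rootProd L z * g z) U := by
  induction L generalizing f with
  | nil => exact ⟨0, f, by simp, hf, fun z _ => by simp⟩
  | cons a L ih =>
    have ha := hL a List.mem_cons_self
    obtain ⟨P, g, hP, hg, hfg⟩ := ih ((Complex.differentiableOn_dslope (hU.mem_nhds ha)).mpr hf)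
      fun b hb => hL b (List.mem_cons_of_mem a hb)
    refine ⟨C (f a) + (X - C a) * P, g, ?_, hg, fun z hz => ?_⟩
    · rw [degree_lt_iff_coeff_zero] at hP ⊢
      intro m hm
      rcases m with _ | m
      · simp at hm
      · simp [sub_mul, coeff_X_mul, hP m (by simpa using hm), hP (m + 1) (by simp at hm ⊢; omega)]
    · have h := sub_smul_dslope f a z
      simp only [smul_eq_mul] at h
      simp only [eval_add, eval_C, eval_mul, eval_sub, eval_X, rootProd_cons]
      linear_combination -h + (z - a) * hfg hz

end Factorization

section BallRange

variable {E : Type*} [AddCommGroup E] [Module ℂ E] (ι : E →ₗ[ℂ] ℂ → ℂ)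

/-- The space `X` of the paper, as functions on `ℂ` taken up to their values on `𝔻`. -/
def ballRange : Submodule ℂ (ℂ → ℂ) where
  carrier := {f | ∃ e, EqOn (ι e) f 𝔻}
  add_mem' := fun ⟨e, he⟩ ⟨e', he'⟩ => ⟨e + e', fun z hz => by simp [he hz, he' hz]⟩
  zero_mem' := ⟨0, fun z _ => by simp⟩
  smul_mem' c _ := fun ⟨e, he⟩ => ⟨c • e, fun z hz => by simp [he hz]⟩

variable {ι}

lemma mem_ballRange_of_eqOn {f g : ℂ → ℂ} (hf : f ∈ ballRange ι) (h : EqOn f g 𝔻) :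
    g ∈ ballRange ι :=
  let ⟨e, he⟩ := hf; ⟨e, he.trans h⟩

end BallRange

section Multipliers

variable {E F : Type*} [AddCommGroup E] [Module ℂ E] [AddCommGroup F] [Module ℂ F]
  {ι : E →ₗ[ℂ] ℂ → ℂ} {κ : F →ₗ[ℂ] ℂ → ℂ}

lemma differentiableOn_of_mem_ballRange (hιhol : ∀ e, DifferentiableOn ℂ (ι e) 𝔻) {f : ℂ → ℂ}
    (hf : f ∈ ballRange ι) : DifferentiableOn ℂ f 𝔻 :=
  let ⟨e, he⟩ := hf; (hιhol e).congr fun _ hz => (he hz).symm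

lemma mem_ballRange_of_rootProd_mul
    (hIV : ∀ (f : E) (z₀ : ℂ), z₀ ∈ 𝔻 → ι f z₀ = 0 →
      ∀ g : ℂ → ℂ, DifferentiableOn ℂ g 𝔻 →
      (∀ z ∈ 𝔻, (z - z₀) * g z = ι f z) → ∃ h : E, ∀ z ∈ 𝔻, ι h z = g z)
    {L : List ℂ} (hL : ∀ a ∈ L, a ∈ 𝔻) {g : ℂ → ℂ} (hg : DifferentiableOn ℂ g 𝔻)
    (h : rootProd L * g ∈ ballRange ι) : g ∈ ballRange ι := by
  induction L with
  | nil => simpa using h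
  | cons a L ih =>
    obtain ⟨e, he⟩ := h
    have ha := hL a List.mem_cons_self
    refine ih (fun b hb => hL b (List.mem_cons_of_mem a hb)) (hIV e a ha ?_ _
      ((differentiable_rootProd L).differentiableOn.mul hg) fun z hz => ?_)
    · simp [he ha]
    · simp [he hz, mul_assoc]

lemma mul_mem_ballRange_of_bounded
    (hIII : ∀ v : ℂ → ℂ, DifferentiableOn ℂ v 𝔻 → (∃ M : ℝ, ∀ z ∈ 𝔻, ‖v z‖ ≤ M) →
      ∀ h : F, ∃ h' : F, ∀ z ∈ 𝔻, κ h' z = v z * κ h z)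
    {w g : ℂ → ℂ} (hw : DifferentiableOn ℂ w 𝔻) (hbdd : ∃ M : ℝ, ∀ z ∈ 𝔻, ‖w z‖ ≤ M)
    (hg : g ∈ ballRange κ) : w * g ∈ ballRange κ := by
  obtain ⟨h, hh⟩ := hg
  obtain ⟨h', hh'⟩ := hIII w hw hbdd h
  exact ⟨h', fun z hz => by simp [hh' z hz, hh hz]⟩

lemma pow_mem_ballRange {N : ℕ}
    (hII : ∀ f : ℂ → ℂ, DifferentiableOn ℂ f 𝔻 →
      (f ∈ ballRange ι ↔ radDeriv1^[N] f ∈ ballRange κ))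
    (hIII : ∀ v : ℂ → ℂ, DifferentiableOn ℂ v 𝔻 → (∃ M : ℝ, ∀ z ∈ 𝔻, ‖v z‖ ≤ M) →
      ∀ h : F, ∃ h' : F, ∀ z ∈ 𝔻, κ h' z = v z * κ h z)
    (hone : ∃ g : F, ∀ z ∈ 𝔻, κ g z = 1) (i : ℕ) : (· ^ i) ∈ ballRange ι := by
  refine (hII _ (differentiable_pow i).differentiableOn).mpr ?_
  obtain ⟨g, hg⟩ := hone
  have hbdd : ∀ z ∈ 𝔻, ‖(i : ℂ) ^ N * z ^ i‖ ≤ (i : ℝ) ^ N := fun z hz => by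
    rw [norm_mul, norm_pow, norm_pow, Complex.norm_natCast]
    exact mul_le_of_le_one_right (by positivity)
      (pow_le_one₀ (norm_nonneg z) (mem_ball_zero_iff.mp hz).le)
  refine mem_ballRange_of_eqOn (mul_mem_ballRange_of_bounded hIII
    ((differentiable_const _).mul (differentiable_pow i)).differentiableOn ⟨_, hbdd⟩
    ⟨g, eqOn_refl _ _⟩) fun z hz => ?_
  simp [hg z hz, iterate_radDeriv1_pow]

theorem div_mem_ballRange (hιhol : ∀ e, DifferentiableOn ℂ (ι e) 𝔻) {N : ℕ}
    (hII : ∀ f : ℂ → ℂ, DifferentiableOn ℂ f 𝔻 →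
      (f ∈ ballRange ι ↔ radDeriv1^[N] f ∈ ballRange κ))
    (hIII : ∀ v : ℂ → ℂ, DifferentiableOn ℂ v 𝔻 → (∃ M : ℝ, ∀ z ∈ 𝔻, ‖v z‖ ≤ M) →
      ∀ h : F, ∃ h' : F, ∀ z ∈ 𝔻, κ h' z = v z * κ h z)
    {v : ℂ → ℂ} (hv : DifferentiableOn ℂ v 𝔻) (hvmul : ∀ f ∈ ballRange ι, v * f ∈ ballRange ι)
    {ε : ℝ} (hε : 0 < ε) (hvε : ∀ z ∈ 𝔻, ε ≤ ‖v z‖) {f : ℂ → ℂ} (hf : f ∈ ballRange ι) :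
    f / v ∈ ballRange ι := by
  have hv0 : ∀ z ∈ 𝔻, v z ≠ 0 := fun z hz => norm_pos_iff.mp (hε.trans_le (hvε z hz))
  have hG : DifferentiableOn ℂ (f / v) 𝔻 :=
    (differentiableOn_of_mem_ballRange hιhol hf).div hv hv0
  have hpow : ∀ i, v ^ i * f ∈ ballRange ι := by
    intro i
    induction i with
    | zero => simpa using hf
    | succ i ih => simpa [pow_succ', mul_assoc] using hvmul _ ih
  have hterm : ∀ i, (fun z => (v z ^ (i + 1))⁻¹ * radDeriv1^[N] (v ^ (i + 1) * (f / v)) z) ∈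
      ballRange κ := by
    intro i
    have hx : v ^ (i + 1) * (f / v) ∈ ballRange ι := mem_ballRange_of_eqOn (hpow i)
      fun z hz => by
        simp only [Pi.mul_apply, Pi.pow_apply, Pi.div_apply, pow_succ]
        field_simp [hv0 z hz]
    refine mul_mem_ballRange_of_bounded hIII ((hv.pow _).inv fun z hz => pow_ne_zero _ (hv0 z hz))
      ⟨(ε ^ (i + 1))⁻¹, fun z hz => ?_⟩ ((hII _ ((hv.pow _).mul hG)).mp hx)
    rw [norm_inv, norm_pow]
    exact inv_anti₀ (by positivity) (pow_le_pow_left₀ hε.le (hvε z hz) _)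
  refine (hII _ hG).mpr (mem_ballRange_of_eqOn
    (Submodule.sum_mem _ (t := Finset.range (N + 1)) fun i _ =>
      Submodule.smul_mem _ ((-1 : ℂ) ^ i * (N + 1).choose (i + 1)) (hterm i))
    fun z hz => ?_)
  rw [iterate_radDeriv1_eq_sum isOpen_ball hv hv0 hG N hz]
  simp [Finset.sum_apply, mul_assoc]

end Multipliers

theorem isFredholmOp_of_ker_eq_bot_of_sup_eq_top {E : Type*} [NormedAddCommGroup E]
    [NormedSpace ℂ E] [CompleteSpace E] (T : E →L[ℂ] E) (hker : LinearMap.ker (T : E →ₗ[ℂ] E) = ⊥)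
    {W : Submodule ℂ E} [FiniteDimensional ℂ W] (hW : LinearMap.range (T : E →ₗ[ℂ] E) ⊔ W = ⊤) :
    IsFredholmOp T := by
  set R := LinearMap.range (T : E →ₗ[ℂ] E)
  have hQ : FiniteDimensional ℂ (E ⧸ R) := by
    refine Module.Finite.of_surjective (R.mkQ.comp W.subtype) fun q => ?_
    obtain ⟨x, rfl⟩ := R.mkQ_surjective q
    obtain ⟨y, hy, w, hw, rfl⟩ := Submodule.mem_sup.mp (hW ▸ Submodule.mem_top : x ∈ R ⊔ W)
    exact ⟨⟨w, hw⟩, by simp [(Submodule.Quotient.mk_eq_zero R).mpr hy]⟩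
  obtain ⟨G, hG⟩ := R.exists_isCompl
  have : FiniteDimensional ℂ G := (R.quotientEquivOfIsCompl G hG).finiteDimensional
  refine ⟨T.closed_complemented_range_of_isCompl_of_ker_eq_bot G hG
    G.closed_of_finiteDimensional hker, ?_, hQ⟩
  rw [hker]
  infer_instance

open Polynomial in
theorem range_sup_span_eq_top {E : Type*} [AddCommGroup E] [Module ℂ E] {ι : E →ₗ[ℂ] ℂ → ℂ}
    (hιhol : ∀ e, DifferentiableOn ℂ (ι e) 𝔻)
    (hιinj : ∀ f g : E, EqOn (ι f) (ι g) 𝔻 → f = g)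
    (hIV : ∀ (f : E) (z₀ : ℂ), z₀ ∈ 𝔻 → ι f z₀ = 0 →
      ∀ g : ℂ → ℂ, DifferentiableOn ℂ g 𝔻 →
      (∀ z ∈ 𝔻, (z - z₀) * g z = ι f z) → ∃ h : E, ∀ z ∈ 𝔻, ι h z = g z)
    {u v : ℂ → ℂ} {T : E →ₗ[ℂ] E} (hT : ∀ f : E, EqOn (ι (T f)) (u * ι f) 𝔻)
    {L : List ℂ} (hL : ∀ a ∈ L, a ∈ 𝔻) (hv0 : ∀ z ∈ 𝔻, v z ≠ 0) (huv : EqOn u (rootProd L * v) 𝔻)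
    (hdiv : ∀ f ∈ ballRange ι, f / v ∈ ballRange ι)
    {e : ℕ → E} (he : ∀ i, EqOn (ι (e i)) (· ^ i) 𝔻) :
    LinearMap.range T ⊔ Submodule.span ℂ (e '' Iio L.length) = ⊤ := by
  refine eq_top_iff.mpr fun x _ => ?_
  obtain ⟨P, g, hP, hg, hxg⟩ := exists_eqOn_eval_add_rootProd_mul isOpen_ball (hιhol x) hL
  set p := ∑ i ∈ Finset.range L.length, P.coeff i • e i
  have hp : EqOn (ι p) (fun z => P.eval z) 𝔻 := fun z hz => by
    rcases eq_or_ne P 0 with rfl | hP0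
    · simp [p]
    show _ = P.eval z
    rw [eval_eq_sum_range' ((natDegree_lt_iff_degree_lt hP0).mpr hP)]
    simp [p, he _ hz]
  obtain ⟨y, hy⟩ := hdiv g (mem_ballRange_of_rootProd_mul hIV hL hg
    ⟨x - p, fun z hz => by simp [hxg hz, hp hz]⟩)
  have hx : x = T y + p := by
    rw [← sub_eq_iff_eq_add]
    refine (hιinj _ _ fun z hz => ?_).symm
    simp [hT y hz, hy hz, huv hz, hxg hz, hp hz, mul_assoc, mul_div_cancel₀ _ (hv0 z hz)]
  rw [hx]
  exact Submodule.add_mem_sup (LinearMap.mem_range_self T y) (Submodule.sum_mem _ fun i hi =>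
    Submodule.smul_mem _ _ (Submodule.subset_span ⟨i, Finset.mem_range.mp hi, rfl⟩))

theorem stmt_7_general {E F : Type*} [NormedAddCommGroup E] [NormedSpace ℂ E] [CompleteSpace E]
    [NormedAddCommGroup F] [NormedSpace ℂ F]
    (ι : E →ₗ[ℂ] (ℂ → ℂ)) (κ : F →ₗ[ℂ] (ℂ → ℂ))
    -- X and Y consist of holomorphic functions on 𝔻
    (hιhol : ∀ f : E, DifferentiableOn ℂ (ι f) (ball (0 : ℂ) 1))
    -- elements are determined by their values on 𝔻
    (hιinj : ∀ f g : E, Set.EqOn (ι f) (ι g) (ball (0 : ℂ) 1) → f = g)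
    -- X and Y contain the constant functions
    (hκconst : ∀ c : ℂ, ∃ g : F, ∀ z ∈ ball (0 : ℂ) 1, κ g z = c)
    -- condition (II): `f ∈ X ↔ R^N f ∈ Y` and `‖f‖_X ≍ |f(0)| + ‖R^N f‖_Y`
    (N : ℕ)
    (hII_mem : ∀ f : ℂ → ℂ, DifferentiableOn ℂ f (ball (0 : ℂ) 1) →
      ((∃ g : E, Set.EqOn (ι g) f (ball (0 : ℂ) 1)) ↔
        ∃ h : F, Set.EqOn (κ h) (radDeriv1^[N] f) (ball (0 : ℂ) 1)))
    -- condition (III): `H^∞(𝔻) ⊆ M(Y)`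
    (hIII : ∀ v : ℂ → ℂ, DifferentiableOn ℂ v (ball (0 : ℂ) 1) →
      (∃ M : ℝ, ∀ z ∈ ball (0 : ℂ) 1, ‖v z‖ ≤ M) →
      ∀ h : F, ∃ h' : F, ∀ z ∈ ball (0 : ℂ) 1, κ h' z = v z * κ h z)
    -- condition (IV): division by `z - z₀` preserves X
    (hIV : ∀ (f : E) (z₀ : ℂ), z₀ ∈ ball (0 : ℂ) 1 → ι f z₀ = 0 →
      ∀ g : ℂ → ℂ, DifferentiableOn ℂ g (ball (0 : ℂ) 1) →
      (∀ z ∈ ball (0 : ℂ) 1, (z - z₀) * g z = ι f z) →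
      ∃ h : E, ∀ z ∈ ball (0 : ℂ) 1, ι h z = g z)
    -- `u ∈ M(X)` with induced multiplication operator `Mu`
    (u : ℂ → ℂ) (hu : DifferentiableOn ℂ u (ball (0 : ℂ) 1))
    (Mu : E →L[ℂ] E)
    (hMu : ∀ f : E, ∀ z ∈ ball (0 : ℂ) 1, ι (Mu f) z = u z * ι f z)
    -- `|u|` is bounded below near the boundary
    (r : ℝ) (hr : r ∈ Set.Ioo (0 : ℝ) 1) (δ : ℝ) (hδ : 0 < δ)
    (hbound : ∀ z : ℂ, r ≤ ‖z‖ → ‖z‖ < 1 → δ ≤ ‖u z‖) :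
    IsFredholmOp Mu := by
  have hr1 := hr.2
  have hu0 : ∀ z : ℂ, r ≤ ‖z‖ → ‖z‖ < 1 → u z ≠ 0 := fun z h₁ h₂ =>
    norm_pos_iff.mp (hδ.trans_le (hbound z h₁ h₂))
  obtain ⟨L, v, hL, hv, hv0, huv⟩ := exists_eqOn_rootProd_mul hu hr1 fun z hz h0 =>
    not_lt.mp fun hrz => hu0 z hrz.le (mem_ball_zero_iff.mp hz) h0
  obtain ⟨ε, hε, hvε⟩ :=
    exists_pos_le_norm_of_eqOn_rootProd_mul hL hv.continuousOn hv0 huv hr1 hδ hbound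
  have hvmul : ∀ f ∈ ballRange ι, v * f ∈ ballRange ι := fun f hf =>
    mem_ballRange_of_rootProd_mul hIV hL (hv.mul (differentiableOn_of_mem_ballRange hιhol hf))
      (let ⟨e, he⟩ := hf; ⟨Mu e, fun z hz => by simp [hMu e z hz, he hz, huv hz, mul_assoc]⟩)
  choose e he using pow_mem_ballRange hII_mem hIII (hκconst 1)
  have : FiniteDimensional ℂ (Submodule.span ℂ (e '' Iio L.length)) :=
    FiniteDimensional.span_of_finite ℂ ((finite_Iio _).image e)
  refine isFredholmOp_of_ker_eq_bot_of_sup_eq_top Mu (LinearMap.ker_eq_bot'.mpr fun f hf => ?_)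
    (range_sup_span_eq_top hιhol hιinj hIV hMu hL hv0 huv
      (fun f hf => div_mem_ballRange hιhol hII_mem hIII hv hvmul hε hvε hf) he)
  refine hιinj f 0 ((eqOn_zero_of_mul_eqOn_zero (hιhol f) hr1 hu0 fun z hz => ?_).trans ?_)
  · simp [← hMu f z hz, show Mu f = 0 from hf]
  · intro z _; simp

/-- Let `X`, `Y` be Banach spaces of holomorphic functions on the unit disk
`𝔻` satisfying conditions (I), (II), (III), (IV), and let `u ∈ M(X)`. If there are
`r ∈ (0,1)` and `δ > 0` with `|u(z)| ≥ δ` whenever `r ≤ |z| < 1`, then the multiplication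
operator `M_u : X → X` is Fredholm. -/
theorem stmt_7 {E F : Type*} [NormedAddCommGroup E] [NormedSpace ℂ E] [CompleteSpace E]
    [NormedAddCommGroup F] [NormedSpace ℂ F] [CompleteSpace F]
    (ι : E →ₗ[ℂ] (ℂ → ℂ)) (κ : F →ₗ[ℂ] (ℂ → ℂ))
    -- X and Y consist of holomorphic functions on 𝔻
    (hιhol : ∀ f : E, DifferentiableOn ℂ (ι f) (ball (0 : ℂ) 1))
    (hκhol : ∀ g : F, DifferentiableOn ℂ (κ g) (ball (0 : ℂ) 1))
    -- elements are determined by their values on 𝔻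
    (hιinj : ∀ f g : E, Set.EqOn (ι f) (ι g) (ball (0 : ℂ) 1) → f = g)
    (hκinj : ∀ f g : F, Set.EqOn (κ f) (κ g) (ball (0 : ℂ) 1) → f = g)
    -- X and Y contain the constant functions
    (hιconst : ∀ c : ℂ, ∃ f : E, ∀ z ∈ ball (0 : ℂ) 1, ι f z = c)
    (hκconst : ∀ c : ℂ, ∃ g : F, ∀ z ∈ ball (0 : ℂ) 1, κ g z = c)
    -- condition (I): point evaluations are continuous on X and on Y
    (hIX : ∀ z ∈ ball (0 : ℂ) 1, ∃ Cz : ℝ, ∀ f : E, ‖ι f z‖ ≤ Cz * ‖f‖)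
    (hIY : ∀ z ∈ ball (0 : ℂ) 1, ∃ Cz : ℝ, ∀ g : F, ‖κ g z‖ ≤ Cz * ‖g‖)
    -- condition (II): `f ∈ X ↔ R^N f ∈ Y` and `‖f‖_X ≍ |f(0)| + ‖R^N f‖_Y`
    (N : ℕ) (hN : 1 ≤ N) (C : ℝ) (hC : 1 ≤ C)
    (hII_mem : ∀ f : ℂ → ℂ, DifferentiableOn ℂ f (ball (0 : ℂ) 1) →
      ((∃ g : E, Set.EqOn (ι g) f (ball (0 : ℂ) 1)) ↔
        ∃ h : F, Set.EqOn (κ h) (radDeriv1^[N] f) (ball (0 : ℂ) 1)))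
    (hII_norm : ∀ (g : E) (h : F),
      Set.EqOn (κ h) (radDeriv1^[N] (ι g)) (ball (0 : ℂ) 1) →
      C⁻¹ * ‖g‖ ≤ ‖ι g 0‖ + ‖h‖ ∧ ‖ι g 0‖ + ‖h‖ ≤ C * ‖g‖)
    -- condition (III): `H^∞(𝔻) ⊆ M(Y)`
    (hIII : ∀ v : ℂ → ℂ, DifferentiableOn ℂ v (ball (0 : ℂ) 1) →
      (∃ M : ℝ, ∀ z ∈ ball (0 : ℂ) 1, ‖v z‖ ≤ M) →
      ∀ h : F, ∃ h' : F, ∀ z ∈ ball (0 : ℂ) 1, κ h' z = v z * κ h z)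
    -- condition (IV): division by `z - z₀` preserves X
    (hIV : ∀ (f : E) (z₀ : ℂ), z₀ ∈ ball (0 : ℂ) 1 → ι f z₀ = 0 →
      ∀ g : ℂ → ℂ, DifferentiableOn ℂ g (ball (0 : ℂ) 1) →
      (∀ z ∈ ball (0 : ℂ) 1, (z - z₀) * g z = ι f z) →
      ∃ h : E, ∀ z ∈ ball (0 : ℂ) 1, ι h z = g z)
    -- `u ∈ M(X)` with induced multiplication operator `Mu`
    (u : ℂ → ℂ) (hu : DifferentiableOn ℂ u (ball (0 : ℂ) 1))
    (humult : ∀ f : E, ∃ g : E, ∀ z ∈ ball (0 : ℂ) 1, ι g z = u z * ι f z)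
    (Mu : E →L[ℂ] E)
    (hMu : ∀ f : E, ∀ z ∈ ball (0 : ℂ) 1, ι (Mu f) z = u z * ι f z)
    -- `|u|` is bounded below near the boundary
    (r : ℝ) (hr : r ∈ Set.Ioo (0 : ℝ) 1) (δ : ℝ) (hδ : 0 < δ)
    (hbound : ∀ z : ℂ, r ≤ ‖z‖ → ‖z‖ < 1 → δ ≤ ‖u z‖) :
    IsFredholmOp Mu :=
  stmt_7_general ι κ hιhol hιinj hκconst N hII_mem hIII hIV u hu Mu hMu r hr δ hδ hbound
end

section
/- Let 0 < α ≤ 1 and let ξ ∈ ℂ with |ξ| = 1. Then there exist constants c, C > 0 such that for every integer k ≥ 1 the peak function f_{ξ,k} satisfies c·k^{1−α} ≤ ‖f_{ξ,k}‖_{B_α} ≤ C·k^{1−α}, where ‖f‖_{B_α} = |f(0)| + sup_{z∈𝔻}(1−|z|²)^α |f′(z)|. -/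
/-!
With `w = (1 + ξ̄ z) / 2` one has `|f'_{ξ,k}(z)| = (k/2) |w|^(k-1)` and `|w| ≤ 1 - s`, where
`s = (1 - |z|) / 2`, while `1 - |z|² ≤ 4 s`. So the weighted derivative is at most
`(k/2) 4^α s^α (1 - s)^(k-1)`, and Bernoulli's inequality bounds `s^α (1 - s)^n` by a multiple of
`(n + 1)^(-α)`. For the lower bound, evaluate at `z = (1 - 1/k) ξ`, where `1 - |z|² ≥ 1/k` and,
again by Bernoulli, `|w|^(k-1) = (1 - 1/(2k))^(k-1) ≥ 1/2`.
-/

open Metric Set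

noncomputable section

/-- The peak function `f_{ξ,k}(z) = ((1 + ξ̄ z)/2)^k`. -/
def peak (ξ : ℂ) (k : ℕ) : ℂ → ℂ := fun z => ((1 + (starRingEnd ℂ) ξ * z) / 2) ^ k

/-- The Bloch-type norm `‖f‖_{B_α} = |f(0)| + sup_{z∈𝔻} (1-|z|²)^α |f'(z)|`. -/
def blochNorm (α : ℝ) (f : ℂ → ℂ) : ℝ :=
  ‖f 0‖ +
    sSup ((fun z => (1 - ‖z‖ ^ 2) ^ α * ‖deriv f z‖) '' ball (0 : ℂ) 1)

end

theorem Real.rpow_le_one_add {x α : ℝ} (hx : 0 ≤ x) (hα0 : 0 ≤ α) (hα1 : α ≤ 1) :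
    x ^ α ≤ 1 + x :=
  calc x ^ α ≤ (1 + x) ^ α := Real.rpow_le_rpow hx (by linarith) hα0
    _ ≤ 1 + α * x := rpow_one_add_le_one_add_mul_self (by linarith) hα0 hα1
    _ ≤ 1 + x := by nlinarith

theorem one_sub_pow_mul_one_add_mul_le_one {s : ℝ} (hs0 : 0 ≤ s) (hs1 : s ≤ 1) (n : ℕ) :
    (1 - s) ^ n * (1 + n * s) ≤ 1 :=
  calc (1 - s) ^ n * (1 + n * s) ≤ (1 - s) ^ n * (1 + s) ^ n := by
        gcongr
        exact one_add_mul_le_pow (by linarith) n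
    _ = (1 - s ^ 2) ^ n := by rw [← mul_pow]; ring
    _ ≤ 1 := pow_le_one₀ (by nlinarith) (by nlinarith)

theorem rpow_mul_one_sub_pow_le {s α : ℝ} (hs0 : 0 ≤ s) (hs1 : s ≤ 1) (hα0 : 0 ≤ α)
    (hα1 : α ≤ 1) (n : ℕ) : s ^ α * (1 - s) ^ n ≤ 2 * ((n : ℝ) + 1) ^ (-α) := by
  have hn : (0 : ℝ) < n + 1 := by positivity
  have hscaled : ((n + 1) * s) ^ α * (1 - s) ^ n ≤ 2 :=
    calc ((n + 1) * s) ^ α * (1 - s) ^ n ≤ 2 * (1 + n * s) * (1 - s) ^ n := by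
          gcongr
          nlinarith [Real.rpow_le_one_add (by positivity : 0 ≤ (n + 1) * s) hα0 hα1,
            (n.cast_nonneg : (0 : ℝ) ≤ n)]
      _ ≤ 2 := by nlinarith [one_sub_pow_mul_one_add_mul_le_one hs0 hs1 n]
  rw [Real.mul_rpow hn.le hs0] at hscaled
  rw [Real.rpow_neg hn.le, ← div_eq_mul_inv, le_div_iff₀ (by positivity)]
  linarith

section BlochNorm

variable {α : ℝ} {f : ℂ → ℂ}

theorem blochNorm_le {A B : ℝ} (h0 : ‖f 0‖ ≤ A)
    (hB : ∀ z ∈ ball (0 : ℂ) 1, (1 - ‖z‖ ^ 2) ^ α * ‖deriv f z‖ ≤ B) :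
    blochNorm α f ≤ A + B := by
  refine add_le_add h0 (csSup_le ((nonempty_ball.2 one_pos).image _) ?_)
  rintro _ ⟨z, hz, rfl⟩
  exact hB z hz

theorem le_blochNorm {B : ℝ}
    (hB : ∀ z ∈ ball (0 : ℂ) 1, (1 - ‖z‖ ^ 2) ^ α * ‖deriv f z‖ ≤ B)
    {z : ℂ} (hz : z ∈ ball (0 : ℂ) 1) :
    (1 - ‖z‖ ^ 2) ^ α * ‖deriv f z‖ ≤ blochNorm α f := by
  have hbdd : BddAbove ((fun z => (1 - ‖z‖ ^ 2) ^ α * ‖deriv f z‖) '' ball (0 : ℂ) 1) := by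
    refine ⟨B, ?_⟩
    rintro _ ⟨w, hw, rfl⟩
    exact hB w hw
  exact (le_csSup hbdd (mem_image_of_mem _ hz)).trans (le_add_of_nonneg_left (norm_nonneg _))

end BlochNorm

namespace peak

variable {α : ℝ} {ξ : ℂ} {k : ℕ}

theorem hasDerivAt (z : ℂ) :
    HasDerivAt (peak ξ k)
      (k * ((1 + (starRingEnd ℂ) ξ * z) / 2) ^ (k - 1) * ((starRingEnd ℂ) ξ / 2)) z := by
  have h : HasDerivAt (fun z : ℂ => (1 + (starRingEnd ℂ) ξ * z) / 2) ((starRingEnd ℂ) ξ / 2) z := by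
    simpa using (((hasDerivAt_id z).const_mul ((starRingEnd ℂ) ξ)).const_add 1).div_const 2
  exact h.fun_pow k

theorem norm_deriv (hξ : ‖ξ‖ = 1) (z : ℂ) :
    ‖deriv (peak ξ k) z‖ = k / 2 * ‖(1 + (starRingEnd ℂ) ξ * z) / 2‖ ^ (k - 1) := by
  rw [(hasDerivAt z).deriv]
  simp [hξ]
  ring

theorem norm_apply_zero_le_one : ‖peak ξ k 0‖ ≤ 1 := by
  simp only [peak, mul_zero, add_zero, norm_pow, norm_div, norm_one, Complex.norm_two]
  exact pow_le_one₀ (by norm_num) (by norm_num)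

theorem weighted_norm_deriv_le (hα0 : 0 ≤ α) (hα1 : α ≤ 1) (hξ : ‖ξ‖ = 1) (hk : 1 ≤ k)
    {z : ℂ} (hz : z ∈ ball (0 : ℂ) 1) :
    (1 - ‖z‖ ^ 2) ^ α * ‖deriv (peak ξ k) z‖ ≤ 4 ^ α * (k : ℝ) ^ (1 - α) := by
  have hz1 : ‖z‖ < 1 := mem_ball_zero_iff.1 hz
  set s := (1 - ‖z‖) / 2 with hs
  have hs0 : 0 ≤ s := by linarith
  have hs1 : s ≤ 1 := by linarith [norm_nonneg z]
  have hweight : 1 - ‖z‖ ^ 2 ≤ 4 * s := by nlinarith [norm_nonneg z]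
  have hbase : ‖(1 + (starRingEnd ℂ) ξ * z) / 2‖ ≤ 1 - s :=
    calc ‖(1 + (starRingEnd ℂ) ξ * z) / 2‖ ≤ (‖(1 : ℂ)‖ + ‖(starRingEnd ℂ) ξ * z‖) / 2 := by
          rw [norm_div, Complex.norm_two]
          gcongr
          exact norm_add_le _ _
      _ = 1 - s := by simp [hξ, hs]; ring
  have hk' : ((k - 1 : ℕ) : ℝ) + 1 = k := by rw [Nat.cast_sub hk]; simp
  have hkpos : (0 : ℝ) < k := by positivity
  calc (1 - ‖z‖ ^ 2) ^ α * ‖deriv (peak ξ k) z‖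
      ≤ (4 * s) ^ α * (k / 2 * (1 - s) ^ (k - 1)) := by
        rw [norm_deriv hξ]
        gcongr
        nlinarith [norm_nonneg z]
    _ = 4 ^ α * k / 2 * (s ^ α * (1 - s) ^ (k - 1)) := by
        rw [Real.mul_rpow (by norm_num) hs0]; ring
    _ ≤ 4 ^ α * k / 2 * (2 * (k : ℝ) ^ (-α)) := by
        gcongr 4 ^ α * k / 2 * ?_
        simpa only [hk'] using rpow_mul_one_sub_pow_le hs0 hs1 hα0 hα1 (k - 1)
    _ = 4 ^ α * (k : ℝ) ^ (1 - α) := by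
        rw [sub_eq_add_neg, Real.rpow_add hkpos, Real.rpow_one]; ring

theorem norm_deriv_ofReal_mul (hξ : ‖ξ‖ = 1) {t : ℝ} (ht : 0 ≤ t) :
    ‖deriv (peak ξ k) (t * ξ)‖ = k / 2 * ((1 + t) / 2) ^ (k - 1) := by
  have hconj : (starRingEnd ℂ) ξ * (t * ξ) = t := by
    rw [mul_left_comm, Complex.conj_mul', hξ]; simp
  rw [norm_deriv hξ, hconj]
  norm_cast
  rw [Real.norm_of_nonneg (by positivity)]

theorem le_weighted_norm_deriv (hα0 : 0 ≤ α) (hξ : ‖ξ‖ = 1) (hk : 1 ≤ k) :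
    1 / 4 * (k : ℝ) ^ (1 - α) ≤
      (1 - ‖((1 - (k : ℝ)⁻¹ : ℝ) : ℂ) * ξ‖ ^ 2) ^ α *
        ‖deriv (peak ξ k) (((1 - (k : ℝ)⁻¹ : ℝ) : ℂ) * ξ)‖ := by
  have hkpos : (0 : ℝ) < k := by positivity
  set u := (k : ℝ)⁻¹ with hu
  have hu0 : 0 < u := by positivity
  have hu1 : u ≤ 1 := inv_le_one_of_one_le₀ (by exact_mod_cast hk)
  have hku : k * u = 1 := mul_inv_cancel₀ hkpos.ne'
  have hweight : u ≤ 1 - (1 - u) ^ 2 := by nlinarith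
  have hbernoulli : 1 / 2 ≤ ((1 + (1 - u)) / 2) ^ (k - 1) :=
    calc (1 : ℝ) / 2 ≤ 1 + ((k - 1 : ℕ) : ℝ) * (-(u / 2)) := by
          rw [Nat.cast_sub hk]; push_cast; nlinarith
      _ ≤ (1 + -(u / 2)) ^ (k - 1) := one_add_mul_le_pow (by linarith) _
      _ = ((1 + (1 - u)) / 2) ^ (k - 1) := by ring_nf
  rw [norm_deriv_ofReal_mul hξ (by linarith), norm_mul, hξ, mul_one, Complex.norm_real,
    Real.norm_of_nonneg (by linarith)]
  calc 1 / 4 * (k : ℝ) ^ (1 - α) = u ^ α * (k / 2 * (1 / 2)) := by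
        rw [hu, Real.inv_rpow hkpos.le, ← Real.rpow_neg hkpos.le, sub_eq_add_neg,
          Real.rpow_add hkpos, Real.rpow_one]
        ring
    _ ≤ (1 - (1 - u) ^ 2) ^ α * (k / 2 * ((1 + (1 - u)) / 2) ^ (k - 1)) := by
        gcongr
        exact Real.rpow_nonneg (hu0.le.trans hweight) α

end peak

/-- For `0 < α ≤ 1` and `|ξ| = 1` there are constants `c, C > 0` such that
`c k^{1-α} ≤ ‖f_{ξ,k}‖_{B_α} ≤ C k^{1-α}` for every integer `k ≥ 1`. -/
theorem stmt_11 (α : ℝ) (hα0 : 0 < α) (hα1 : α ≤ 1) (ξ : ℂ) (hξ : ‖ξ‖ = 1) :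
    ∃ c C : ℝ, 0 < c ∧ 0 < C ∧ ∀ k : ℕ, 1 ≤ k →
      c * (k : ℝ) ^ (1 - α) ≤ blochNorm α (peak ξ k) ∧
        blochNorm α (peak ξ k) ≤ C * (k : ℝ) ^ (1 - α) := by
  refine ⟨1 / 4, 1 + 4 ^ α, by norm_num, by positivity, fun k hk => ⟨?_, ?_⟩⟩
  · have hkinv : 0 < (k : ℝ)⁻¹ ∧ (k : ℝ)⁻¹ ≤ 1 :=
      ⟨by positivity, inv_le_one_of_one_le₀ (by exact_mod_cast hk)⟩
    have hz₀ : ((1 - (k : ℝ)⁻¹ : ℝ) : ℂ) * ξ ∈ ball (0 : ℂ) 1 := by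
      rw [mem_ball_zero_iff, norm_mul, hξ, mul_one, Complex.norm_real,
        Real.norm_of_nonneg (by linarith)]
      linarith
    exact (peak.le_weighted_norm_deriv hα0.le hξ hk).trans
      (le_blochNorm (fun z hz => peak.weighted_norm_deriv_le hα0.le hα1 hξ hk hz) hz₀)
  · have hone : 1 ≤ (k : ℝ) ^ (1 - α) := Real.one_le_rpow (by exact_mod_cast hk) (by linarith)
    calc blochNorm α (peak ξ k) ≤ 1 + 4 ^ α * (k : ℝ) ^ (1 - α) :=
          blochNorm_le peak.norm_apply_zero_le_one
            fun z hz => peak.weighted_norm_deriv_le hα0.le hα1 hξ hk hz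
      _ ≤ (1 + 4 ^ α) * (k : ℝ) ^ (1 - α) := by linarith
end

section
/- Let 0 < α ≤ 1 and let u ∈ M(B_α(𝔻)) extend continuously to the closed unit disk (for 0 < α < 1 this extension is automatic since M(B_α(𝔻)) = B_α(𝔻) ⊂ A(𝔻)). If the multiplication operator M_u : B_α(𝔻) → B_α(𝔻) is Fredholm, then there exist r ∈ (0,1) and δ > 0 such that |u(z)| ≥ δ for all z with r ≤ |z| < 1. -/
open Metric Set

noncomputable section

/-- Finiteness of the Bloch-type seminorm: `sup_{z∈𝔻} (1-|z|²)^α |f'(z)| < ∞`. -/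
def BlochBdd (α : ℝ) (f : ℂ → ℂ) : Prop :=
  BddAbove ((fun z => (1 - ‖z‖ ^ 2) ^ α * ‖deriv f z‖) '' ball (0 : ℂ) 1)

/-- The essential spectrum: those `λ ∈ ℂ` for which `T - λI` is not Fredholm. -/
def essSpectrum {E : Type*} [NormedAddCommGroup E] [NormedSpace ℂ E] (T : E →L[ℂ] E) : Set ℂ :=
  {l : ℂ | ¬ IsFredholmOp (T - l • ContinuousLinearMap.id ℂ E)}

end

/-!
If the continuous extension `w` of `u` has no zero on the unit circle, compactness and uniform
continuity bound `|w|` from below on an annulus `r ≤ |z| ≤ 1`.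

Otherwise `w(ζ) = 0` for some `|ζ| = 1`, and we contradict Fredholmness. The kernel of `M_u` is
finite-dimensional while `B_α(𝔻)` is not, so `u ≢ 0`, and since holomorphic functions on the disc
have no zero divisors `M_u` is injective; with its closed range it is bounded below. But the test
functions `f_a(z) = (1 - |a|²)^(2-α) / (1 - ā z)` have norm at least `|a|`, whereas `‖u f_a‖ → 0`
as `a → ζ`. In `(u f_a)' = u' f_a + u f_a'`, near `ζ` the factor `u` is small (and, for `α = 1`, so
is `(1 - |z|²) |u'(z)|`, by the Cauchy estimate); away from `ζ` both `f_a` and `f_a'` are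
`O(1 - |a|²)`; for `α < 1`, `(1 - |z|²)^α |u'|` is bounded and `|f_a| ≤ 2 (1 - |a|²)^(1-α)`.
-/

open Filter Topology ComplexConjugate

lemma one_sub_norm_mul_norm_le_norm_one_sub_conj_mul (a z : ℂ) :
    1 - ‖a‖ * ‖z‖ ≤ ‖1 - conj a * z‖ := by
  simpa [norm_mul] using norm_sub_norm_le (1 : ℂ) (conj a * z)

lemma norm_one_sub_conj_mul_pos {a z : ℂ} (ha : ‖a‖ < 1) (hz : ‖z‖ ≤ 1) :
    0 < ‖1 - conj a * z‖ := by
  nlinarith [one_sub_norm_mul_norm_le_norm_one_sub_conj_mul a z, norm_nonneg a]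

lemma one_sub_norm_sq_le_two_mul_norm_one_sub_conj_mul {a : ℂ} (z : ℂ) (ha : ‖a‖ ≤ 1) :
    1 - ‖z‖ ^ 2 ≤ 2 * ‖1 - conj a * z‖ := by
  nlinarith [one_sub_norm_mul_norm_le_norm_one_sub_conj_mul a z,
    mul_le_of_le_one_left (norm_nonneg z) ha, sq_nonneg (1 - ‖z‖)]

lemma one_sub_norm_sq_le_two_mul_norm_one_sub_conj_mul' (a : ℂ) {z : ℂ} (hz : ‖z‖ ≤ 1) :
    1 - ‖a‖ ^ 2 ≤ 2 * ‖1 - conj a * z‖ := by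
  nlinarith [one_sub_norm_mul_norm_le_norm_one_sub_conj_mul a z,
    mul_le_of_le_one_right (norm_nonneg a) hz, sq_nonneg (1 - ‖a‖)]

lemma norm_sub_sub_norm_sub_le_norm_one_sub_conj_mul {ζ a z : ℂ} (hζ : ‖ζ‖ = 1) (hz : ‖z‖ ≤ 1) :
    ‖z - ζ‖ - ‖a - ζ‖ ≤ ‖1 - conj a * z‖ := by
  have hζζ : conj ζ * ζ = 1 := by simp [Complex.conj_mul', hζ]
  have hsplit : 1 - conj a * z = conj ζ * (ζ - z) + conj (ζ - a) * z := by
    rw [map_sub]; linear_combination -hζζ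
  have h₁ : ‖conj ζ * (ζ - z)‖ = ‖z - ζ‖ := by
    rw [norm_mul, Complex.norm_conj, hζ, one_mul, norm_sub_rev]
  have h₂ : ‖conj (ζ - a) * z‖ ≤ ‖a - ζ‖ := by
    rw [norm_mul, Complex.norm_conj, norm_sub_rev]
    exact mul_le_of_le_one_right (norm_nonneg _) hz
  rw [hsplit]
  linarith [norm_sub_le_norm_add (conj ζ * (ζ - z)) (conj (ζ - a) * z)]

lemma tendsto_one_sub_norm_sq {ζ : ℂ} (hζ : ‖ζ‖ = 1) :
    Tendsto (fun a : ℂ => 1 - ‖a‖ ^ 2) (𝓝 ζ) (𝓝 0) :=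
  (continuous_const.sub (continuous_norm.pow 2)).tendsto' ζ 0 (by simp [hζ])

lemma rpow_mul_rpow_two_sub_le {α x s D : ℝ} (hα0 : 0 ≤ α) (hα2 : α ≤ 2) (hx0 : 0 ≤ x)
    (hs0 : 0 ≤ s) (hx : x ≤ 2 * D) (hs : s ≤ 2 * D) : x ^ α * s ^ (2 - α) ≤ 4 * D ^ 2 := by
  calc x ^ α * s ^ (2 - α) ≤ (2 * D) ^ α * (2 * D) ^ (2 - α) :=
      mul_le_mul (Real.rpow_le_rpow hx0 hx hα0) (Real.rpow_le_rpow hs0 hs (by linarith))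
        (Real.rpow_nonneg hs0 _) (Real.rpow_nonneg (by linarith) _)
    _ = (2 * D) ^ (2 : ℝ) := by rw [← Real.rpow_add' (by linarith) (by norm_num)]; ring_nf
    _ = 4 * D ^ 2 := by rw [Real.rpow_two]; ring

lemma one_sub_norm_sq_rpow_le_one {α : ℝ} {z : ℂ} (hα : 0 ≤ α) (hz : ‖z‖ ≤ 1) :
    (1 - ‖z‖ ^ 2) ^ α ≤ 1 :=
  Real.rpow_le_one (by nlinarith [norm_nonneg z]) (by nlinarith [norm_nonneg z]) hα

lemma blochNorm_congr {α : ℝ} {f g : ℂ → ℂ} (h : EqOn f g (ball 0 1)) :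
    blochNorm α f = blochNorm α g := by
  unfold blochNorm
  rw [h (mem_ball_self one_pos), image_congr fun z hz => by rw [h.deriv isOpen_ball hz]]

lemma blochBdd_of_forall_le {α C : ℝ} {f : ℂ → ℂ}
    (hC : ∀ z ∈ ball (0 : ℂ) 1, (1 - ‖z‖ ^ 2) ^ α * ‖deriv f z‖ ≤ C) : BlochBdd α f :=
  ⟨C, forall_mem_image.2 hC⟩

lemma blochNorm_le_of_forall_le {α C : ℝ} {f : ℂ → ℂ}
    (hC : ∀ z ∈ ball (0 : ℂ) 1, (1 - ‖z‖ ^ 2) ^ α * ‖deriv f z‖ ≤ C) :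
    blochNorm α f ≤ ‖f 0‖ + C := by
  unfold blochNorm
  gcongr
  exact csSup_le ((nonempty_ball.2 one_pos).image _) (forall_mem_image.2 hC)

lemma weighted_norm_deriv_mul_le {α : ℝ} {u h : ℂ → ℂ} {z : ℂ} (hz : ‖z‖ ≤ 1)
    (hu : DifferentiableAt ℂ u z) (hh : DifferentiableAt ℂ h z) :
    (1 - ‖z‖ ^ 2) ^ α * ‖deriv (fun y => u y * h y) z‖ ≤
      (1 - ‖z‖ ^ 2) ^ α * ‖deriv u z‖ * ‖h z‖ + (1 - ‖z‖ ^ 2) ^ α * ‖u z‖ * ‖deriv h z‖ := by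
  rw [deriv_fun_mul hu hh, mul_assoc, mul_assoc, ← mul_add, ← norm_mul, ← norm_mul]
  exact mul_le_mul_of_nonneg_left (norm_add_le _ _)
    (Real.rpow_nonneg (by nlinarith [norm_nonneg z]) _)

noncomputable def blochTestFn (α : ℝ) (a z : ℂ) : ℂ :=
  ((1 - ‖a‖ ^ 2) ^ (2 - α) : ℝ) * (1 - conj a * z)⁻¹

section blochTestFn

variable {α : ℝ} {a z : ℂ}

lemma hasDerivAt_blochTestFn (hz : 1 - conj a * z ≠ 0) :
    HasDerivAt (blochTestFn α a)
      (((1 - ‖a‖ ^ 2) ^ (2 - α) : ℝ) * (conj a / (1 - conj a * z) ^ 2)) z := by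
  have hk : HasDerivAt (fun y => 1 - conj a * y) (-conj a) z := by
    simpa using ((hasDerivAt_id z).const_mul (conj a)).const_sub 1
  exact ((hk.inv hz).const_mul _).congr_deriv (by ring)

lemma differentiableOn_blochTestFn (ha : ‖a‖ < 1) :
    DifferentiableOn ℂ (blochTestFn α a) (ball 0 1) := fun _ hz =>
  (hasDerivAt_blochTestFn (norm_pos_iff.1 (norm_one_sub_conj_mul_pos ha
    (mem_ball_zero_iff.1 hz).le))).differentiableAt.differentiableWithinAt

lemma blochTestFn_zero : blochTestFn α a 0 = ((1 - ‖a‖ ^ 2) ^ (2 - α) : ℝ) := by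
  simp [blochTestFn]

lemma norm_blochTestFn (ha : ‖a‖ ≤ 1) :
    ‖blochTestFn α a z‖ = (1 - ‖a‖ ^ 2) ^ (2 - α) / ‖1 - conj a * z‖ := by
  rw [blochTestFn, norm_mul, norm_inv, Complex.norm_real, Real.norm_of_nonneg
    (Real.rpow_nonneg (by nlinarith [norm_nonneg a]) _), div_eq_mul_inv]

lemma norm_deriv_blochTestFn (ha : ‖a‖ < 1) (hz : ‖z‖ ≤ 1) :
    ‖deriv (blochTestFn α a) z‖ = (1 - ‖a‖ ^ 2) ^ (2 - α) * ‖a‖ / ‖1 - conj a * z‖ ^ 2 := by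
  rw [(hasDerivAt_blochTestFn (norm_pos_iff.1 (norm_one_sub_conj_mul_pos ha hz))).deriv,
    norm_mul, norm_div, norm_pow, Complex.norm_conj, Complex.norm_real, Real.norm_of_nonneg
    (Real.rpow_nonneg (by nlinarith [norm_nonneg a]) _), mul_div_assoc]

lemma norm_blochTestFn_le (ha : ‖a‖ < 1) (hz : ‖z‖ ≤ 1) :
    ‖blochTestFn α a z‖ ≤ 2 * (1 - ‖a‖ ^ 2) ^ (1 - α) := by
  have hs : 0 < 1 - ‖a‖ ^ 2 := by nlinarith [norm_nonneg a]
  have hk := norm_one_sub_conj_mul_pos ha hz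
  rw [norm_blochTestFn ha.le, div_le_iff₀ hk, show 2 - α = (1 - α) + 1 by ring,
    Real.rpow_add hs, Real.rpow_one]
  nlinarith [one_sub_norm_sq_le_two_mul_norm_one_sub_conj_mul' a hz,
    Real.rpow_pos_of_pos hs (1 - α)]

lemma norm_blochTestFn_le_of_le (hα : α ≤ 1) (ha : ‖a‖ < 1) {ρ : ℝ} (hρ : 0 < ρ)
    (hk : ρ ≤ ‖1 - conj a * z‖) : ‖blochTestFn α a z‖ ≤ (1 - ‖a‖ ^ 2) / ρ := by
  have hs : 0 < 1 - ‖a‖ ^ 2 := by nlinarith [norm_nonneg a]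
  rw [norm_blochTestFn ha.le]
  calc (1 - ‖a‖ ^ 2) ^ (2 - α) / ‖1 - conj a * z‖ ≤ (1 - ‖a‖ ^ 2) ^ (1 : ℝ) / ρ :=
        div_le_div₀ (by positivity)
          (Real.rpow_le_rpow_of_exponent_ge hs (by nlinarith [norm_nonneg a]) (by linarith)) hρ hk
    _ = (1 - ‖a‖ ^ 2) / ρ := by rw [Real.rpow_one]

lemma weighted_norm_deriv_blochTestFn_le (hα0 : 0 ≤ α) (hα2 : α ≤ 2) (ha : ‖a‖ < 1)
    (hz : ‖z‖ ≤ 1) : (1 - ‖z‖ ^ 2) ^ α * ‖deriv (blochTestFn α a) z‖ ≤ 4 := by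
  have hk := norm_one_sub_conj_mul_pos ha hz
  have hprod := rpow_mul_rpow_two_sub_le hα0 hα2 (by nlinarith [norm_nonneg z])
    (by nlinarith [norm_nonneg a]) (one_sub_norm_sq_le_two_mul_norm_one_sub_conj_mul z ha.le)
    (one_sub_norm_sq_le_two_mul_norm_one_sub_conj_mul' a hz)
  rw [norm_deriv_blochTestFn ha hz, ← mul_div_assoc, div_le_iff₀ (by positivity), ← mul_assoc]
  nlinarith [mul_le_mul hprod ha.le (norm_nonneg a) (by positivity)]

lemma weighted_norm_deriv_blochTestFn_le_of_le (hα0 : 0 ≤ α) (hα1 : α ≤ 1) (ha : ‖a‖ < 1)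
    (hz : ‖z‖ ≤ 1) {ρ : ℝ} (hρ : 0 < ρ) (hk : ρ ≤ ‖1 - conj a * z‖) :
    (1 - ‖z‖ ^ 2) ^ α * ‖deriv (blochTestFn α a) z‖ ≤ (1 - ‖a‖ ^ 2) / ρ ^ 2 := by
  have hs : 0 < 1 - ‖a‖ ^ 2 := by nlinarith [norm_nonneg a]
  have hs2 : (1 - ‖a‖ ^ 2) ^ (2 - α) ≤ 1 - ‖a‖ ^ 2 := by
    simpa using Real.rpow_le_rpow_of_exponent_ge hs (by nlinarith [norm_nonneg a])
      (by linarith : (1 : ℝ) ≤ 2 - α)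
  rw [norm_deriv_blochTestFn ha hz]
  calc (1 - ‖z‖ ^ 2) ^ α * ((1 - ‖a‖ ^ 2) ^ (2 - α) * ‖a‖ / ‖1 - conj a * z‖ ^ 2)
      ≤ 1 * ((1 - ‖a‖ ^ 2) * 1 / ρ ^ 2) := by
        gcongr
        exact one_sub_norm_sq_rpow_le_one hα0 hz
    _ = (1 - ‖a‖ ^ 2) / ρ ^ 2 := by ring

lemma weighted_norm_deriv_blochTestFn_self (ha : ‖a‖ < 1) :
    (1 - ‖a‖ ^ 2) ^ α * ‖deriv (blochTestFn α a) a‖ = ‖a‖ := by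
  have hs : 0 < 1 - ‖a‖ ^ 2 := by nlinarith [norm_nonneg a]
  have hka : 1 - conj a * a = ((1 - ‖a‖ ^ 2 : ℝ) : ℂ) := by push_cast [Complex.conj_mul']; ring
  rw [norm_deriv_blochTestFn ha ha.le, hka, Complex.norm_real, Real.norm_of_nonneg hs.le,
    ← mul_div_assoc, ← mul_assoc, ← Real.rpow_add hs, add_sub_cancel, Real.rpow_two]
  field_simp

end blochTestFn

lemma one_sub_norm_sq_mul_norm_deriv_le {u : ℂ → ℂ} {z : ℂ} {C : ℝ}
    (hu : DifferentiableOn ℂ u (ball 0 1)) (hz : ‖z‖ < 1) (hC0 : 0 ≤ C)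
    (hC : ∀ y ∈ sphere z ((1 - ‖z‖) / 2), ‖u y‖ ≤ C) :
    (1 - ‖z‖ ^ 2) * ‖deriv u z‖ ≤ 4 * C := by
  have hR : 0 < (1 - ‖z‖) / 2 := by linarith
  have hne : 1 - ‖z‖ ≠ 0 := by linarith
  have hsub : closedBall z ((1 - ‖z‖) / 2) ⊆ ball 0 1 :=
    closedBall_subset_ball' (by rw [dist_zero_right]; linarith)
  have hd := Complex.norm_deriv_le_of_forall_mem_sphere_norm_le hR (hu.diffContOnCl_ball hsub) hC
  calc (1 - ‖z‖ ^ 2) * ‖deriv u z‖ ≤ (1 - ‖z‖ ^ 2) * (C / ((1 - ‖z‖) / 2)) :=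
        mul_le_mul_of_nonneg_left hd (by nlinarith [norm_nonneg z])
    _ = 2 * (1 + ‖z‖) * C := by field_simp; ring
    _ ≤ 4 * C := by nlinarith

section multiplier

variable {α M W ε : ℝ} {u : ℂ → ℂ} {ζ : ℂ}

lemma exists_forall_norm_le_of_tendsto (hu0 : Tendsto u (𝓝[ball 0 1] ζ) (𝓝 0)) (hε : 0 < ε) :
    ∃ ρ > 0, ∀ y ∈ ball (0 : ℂ) 1, ‖y - ζ‖ < ρ → ‖u y‖ ≤ ε := by
  obtain ⟨ρ, hρ, h⟩ := Metric.tendsto_nhdsWithin_nhds.1 hu0 ε hε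
  exact ⟨ρ, hρ, fun y hy hyζ => by
    simpa using (h hy (by rwa [dist_eq_norm])).le⟩

lemma eventually_weighted_norm_deriv_mul_norm_blochTestFn_le_of_lt_one (hα : α < 1)
    (hζ : ‖ζ‖ = 1) (hM : ∀ z ∈ ball (0 : ℂ) 1, (1 - ‖z‖ ^ 2) ^ α * ‖deriv u z‖ ≤ M)
    (hε : 0 < ε) : ∀ᶠ a in 𝓝[ball 0 1] ζ, ∀ z ∈ ball (0 : ℂ) 1,
      (1 - ‖z‖ ^ 2) ^ α * ‖deriv u z‖ * ‖blochTestFn α a z‖ ≤ ε := by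
  have hM0 : 0 ≤ M := (mul_nonneg (by simp) (norm_nonneg _)).trans (hM 0 (mem_ball_self one_pos))
  have hlim : Tendsto (fun a : ℂ => M * (2 * (1 - ‖a‖ ^ 2) ^ (1 - α))) (𝓝 ζ) (𝓝 0) := by
    simpa [Real.zero_rpow (sub_ne_zero.2 hα.ne')] using
      (((tendsto_one_sub_norm_sq hζ).rpow_const (Or.inr (sub_nonneg.2 hα.le))).const_mul 2).const_mul
        M
  filter_upwards [nhdsWithin_le_nhds (hlim.eventually_lt_const hε), self_mem_nhdsWithin]
    with a hlt ha z hz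
  rw [mem_ball_zero_iff] at ha hz
  exact (mul_le_mul (hM z (mem_ball_zero_iff.2 hz)) (norm_blochTestFn_le ha hz.le)
    (norm_nonneg _) hM0).trans hlt.le

lemma eventually_weighted_norm_deriv_mul_norm_blochTestFn_le_of_eq_one (hζ : ‖ζ‖ = 1)
    (hu : DifferentiableOn ℂ u (ball 0 1)) (hu0 : Tendsto u (𝓝[ball 0 1] ζ) (𝓝 0))
    (hM : ∀ z ∈ ball (0 : ℂ) 1, (1 - ‖z‖ ^ 2) ^ (1 : ℝ) * ‖deriv u z‖ ≤ M)
    (hε : 0 < ε) : ∀ᶠ a in 𝓝[ball 0 1] ζ, ∀ z ∈ ball (0 : ℂ) 1,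
      (1 - ‖z‖ ^ 2) ^ (1 : ℝ) * ‖deriv u z‖ * ‖blochTestFn 1 a z‖ ≤ ε := by
  obtain ⟨ρ, hρ, hsmall⟩ := exists_forall_norm_le_of_tendsto hu0 (by positivity : 0 < ε / 8)
  have hM0 : 0 ≤ M := (mul_nonneg (by simp) (norm_nonneg _)).trans (hM 0 (mem_ball_self one_pos))
  have hlim : Tendsto (fun a : ℂ => M * ((1 - ‖a‖ ^ 2) / (ρ / 4))) (𝓝 ζ) (𝓝 0) := by
    simpa using ((tendsto_one_sub_norm_sq hζ).div_const (ρ / 4)).const_mul M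
  filter_upwards [nhdsWithin_le_nhds (hlim.eventually_lt_const hε),
    nhdsWithin_le_nhds (ball_mem_nhds ζ (by positivity : 0 < ρ / 4)), self_mem_nhdsWithin]
    with a hlt haζ ha z hz
  rw [mem_ball, dist_eq_norm] at haζ
  rw [mem_ball_zero_iff] at ha
  have hz' := mem_ball_zero_iff.1 hz
  by_cases hzζ : ‖z - ζ‖ < ρ / 2
  · have hC : ∀ y ∈ sphere z ((1 - ‖z‖) / 2), ‖u y‖ ≤ ε / 8 := by
      intro y hy
      rw [mem_sphere, dist_eq_norm] at hy
      have hzζ' : 1 - ‖z‖ ≤ ‖z - ζ‖ := by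
        simpa [hζ, norm_sub_rev] using norm_sub_norm_le ζ z
      refine hsmall y (mem_ball_zero_iff.2 ?_) ?_
      · linarith [norm_le_norm_add_norm_sub' y z]
      · linarith [norm_sub_le_norm_sub_add_norm_sub y z ζ]
    have hcauchy := one_sub_norm_sq_mul_norm_deriv_le hu hz' (by positivity) hC
    have hbound := norm_blochTestFn_le (α := 1) ha hz'.le
    rw [sub_self, Real.rpow_zero] at hbound
    have hx : 0 ≤ 1 - ‖z‖ ^ 2 := by nlinarith [norm_nonneg z]
    rw [Real.rpow_one]
    nlinarith [norm_nonneg (blochTestFn 1 a z), mul_nonneg hx (norm_nonneg (deriv u z))]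
  · have hk : ρ / 4 ≤ ‖1 - conj a * z‖ := by
      linarith [norm_sub_sub_norm_sub_le_norm_one_sub_conj_mul (a := a) hζ hz'.le]
    exact (mul_le_mul (hM z hz) (norm_blochTestFn_le_of_le le_rfl ha (by positivity) hk)
      (norm_nonneg _) hM0).trans hlt.le

lemma eventually_weighted_norm_deriv_mul_norm_blochTestFn_le (hα1 : α ≤ 1) (hζ : ‖ζ‖ = 1)
    (hu : DifferentiableOn ℂ u (ball 0 1)) (hu0 : Tendsto u (𝓝[ball 0 1] ζ) (𝓝 0))
    (hM : ∀ z ∈ ball (0 : ℂ) 1, (1 - ‖z‖ ^ 2) ^ α * ‖deriv u z‖ ≤ M) (hε : 0 < ε) :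
    ∀ᶠ a in 𝓝[ball 0 1] ζ, ∀ z ∈ ball (0 : ℂ) 1,
      (1 - ‖z‖ ^ 2) ^ α * ‖deriv u z‖ * ‖blochTestFn α a z‖ ≤ ε := by
  rcases hα1.lt_or_eq with hα | rfl
  · exact eventually_weighted_norm_deriv_mul_norm_blochTestFn_le_of_lt_one hα hζ hM hε
  · exact eventually_weighted_norm_deriv_mul_norm_blochTestFn_le_of_eq_one hζ hu hu0 hM hε

lemma eventually_weighted_norm_mul_norm_deriv_blochTestFn_le (hα0 : 0 ≤ α) (hα1 : α ≤ 1)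
    (hζ : ‖ζ‖ = 1) (hu0 : Tendsto u (𝓝[ball 0 1] ζ) (𝓝 0))
    (hW : ∀ z ∈ ball (0 : ℂ) 1, ‖u z‖ ≤ W) (hε : 0 < ε) :
    ∀ᶠ a in 𝓝[ball 0 1] ζ, ∀ z ∈ ball (0 : ℂ) 1,
      (1 - ‖z‖ ^ 2) ^ α * ‖u z‖ * ‖deriv (blochTestFn α a) z‖ ≤ ε := by
  obtain ⟨ρ, hρ, hsmall⟩ := exists_forall_norm_le_of_tendsto hu0 (by positivity : 0 < ε / 4)
  have hW0 : 0 ≤ W := (norm_nonneg _).trans (hW 0 (mem_ball_self one_pos))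
  have hlim : Tendsto (fun a : ℂ => (1 - ‖a‖ ^ 2) / (ρ / 2) ^ 2 * W) (𝓝 ζ) (𝓝 0) := by
    simpa using ((tendsto_one_sub_norm_sq hζ).div_const ((ρ / 2) ^ 2)).mul_const W
  filter_upwards [nhdsWithin_le_nhds (hlim.eventually_lt_const hε),
    nhdsWithin_le_nhds (ball_mem_nhds ζ (by positivity : 0 < ρ / 2)), self_mem_nhdsWithin]
    with a hlt haζ ha z hz
  rw [mem_ball, dist_eq_norm] at haζ
  rw [mem_ball_zero_iff] at ha
  have hz' := mem_ball_zero_iff.1 hz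
  rw [mul_right_comm]
  by_cases hzζ : ‖z - ζ‖ < ρ
  · calc (1 - ‖z‖ ^ 2) ^ α * ‖deriv (blochTestFn α a) z‖ * ‖u z‖ ≤ 4 * (ε / 4) :=
          mul_le_mul (weighted_norm_deriv_blochTestFn_le hα0 (by linarith) ha hz'.le)
            (hsmall z hz hzζ) (norm_nonneg _) (by norm_num)
      _ = ε := by ring
  · have hk : ρ / 2 ≤ ‖1 - conj a * z‖ := by
      linarith [norm_sub_sub_norm_sub_le_norm_one_sub_conj_mul (a := a) hζ hz'.le]
    exact (mul_le_mul (weighted_norm_deriv_blochTestFn_le_of_le hα0 hα1 ha hz'.le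
      (by positivity) hk) (hW z hz) (norm_nonneg _)
      (div_nonneg (by nlinarith [norm_nonneg a]) (by positivity))).trans hlt.le

end multiplier

lemma exists_forall_le_norm_of_forall_sphere_ne_zero {w : ℂ → ℂ}
    (hw : ContinuousOn w (closedBall 0 1)) (hne : ∀ ζ : ℂ, ‖ζ‖ = 1 → w ζ ≠ 0) :
    ∃ r ∈ Ioo (0 : ℝ) 1, ∃ δ > 0, ∀ z : ℂ, r ≤ ‖z‖ → ‖z‖ ≤ 1 → δ ≤ ‖w z‖ := by
  obtain ⟨ζ₀, hζ₀, hmin⟩ := (isCompact_sphere (0 : ℂ) 1).exists_isMinOn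
    (NormedSpace.sphere_nonempty.2 zero_le_one) (hw.mono sphere_subset_closedBall).norm
  have hm : 0 < ‖w ζ₀‖ := norm_pos_iff.2 (hne ζ₀ (mem_sphere_zero_iff_norm.1 hζ₀))
  obtain ⟨d, hd, hwd⟩ := Metric.uniformContinuousOn_iff.1
    ((isCompact_closedBall 0 1).uniformContinuousOn_of_continuous hw) (‖w ζ₀‖ / 2) (by positivity)
  refine ⟨max (1 / 2) (1 - d / 2), ⟨by positivity, max_lt (by norm_num) (by linarith)⟩,
    ‖w ζ₀‖ / 2, by positivity, fun z hr hz1 => ?_⟩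
  have hz : 0 < ‖z‖ := by linarith [le_max_left (1 / 2 : ℝ) (1 - d / 2)]
  set ζ : ℂ := z / (‖z‖ : ℂ)
  have hζ : ‖ζ‖ = 1 := by simp [ζ, hz.ne']
  have hzζ : z - ζ = ((‖z‖ - 1 : ℝ) : ℂ) * ζ := by
    have : (‖z‖ : ℂ) ≠ 0 := by exact_mod_cast hz.ne'
    simp only [ζ]; push_cast; field_simp
  have hdist : dist z ζ < d := by
    rw [dist_eq_norm, hzζ, norm_mul, hζ, mul_one, Complex.norm_real,
      Real.norm_of_nonpos (by linarith)]
    linarith [le_max_right (1 / 2 : ℝ) (1 - d / 2)]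
  have hclose := hwd z (mem_closedBall_zero_iff.2 hz1) ζ (mem_closedBall_zero_iff.2 hζ.le) hdist
  have hζmin : ‖w ζ₀‖ ≤ ‖w ζ‖ := hmin (mem_sphere_zero_iff_norm.2 hζ)
  rw [dist_eq_norm] at hclose
  linarith [norm_sub_norm_le (w ζ) (w z), norm_sub_rev (w z) (w ζ)]

/-- `ι` identifies `E` isometrically with `B_α(𝔻)`; functions only matter on `𝔻`. -/
structure IsBlochModel (α : ℝ) {E : Type*} [NormedAddCommGroup E] [NormedSpace ℂ E]
    (ι : E →ₗ[ℂ] (ℂ → ℂ)) : Prop where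
  eq_of_eqOn : ∀ f g : E, EqOn (ι f) (ι g) (ball 0 1) → f = g
  exists_eqOn_iff : ∀ f : ℂ → ℂ,
    (∃ g : E, EqOn (ι g) f (ball 0 1)) ↔ DifferentiableOn ℂ f (ball 0 1) ∧ BlochBdd α f
  norm_eq : ∀ g : E, ‖g‖ = blochNorm α (ι g)

namespace IsBlochModel

variable {α : ℝ} {E : Type*} [NormedAddCommGroup E] [NormedSpace ℂ E] {ι : E →ₗ[ℂ] (ℂ → ℂ)}

lemma differentiableOn (hB : IsBlochModel α ι) (g : E) :
    DifferentiableOn ℂ (ι g) (ball 0 1) :=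
  ((hB.exists_eqOn_iff _).1 ⟨g, fun _ _ => rfl⟩).1

lemma weighted_norm_deriv_le_norm (hB : IsBlochModel α ι) (g : E) {z : ℂ}
    (hz : z ∈ ball (0 : ℂ) 1) : (1 - ‖z‖ ^ 2) ^ α * ‖deriv (ι g) z‖ ≤ ‖g‖ := by
  rw [hB.norm_eq, blochNorm]
  exact (le_csSup ((hB.exists_eqOn_iff _).1 ⟨g, fun _ _ => rfl⟩).2 (mem_image_of_mem _ hz)).trans
    (le_add_of_nonneg_left (norm_nonneg _))

lemma norm_eq_blochNorm_of_eqOn (hB : IsBlochModel α ι) {g : E} {f : ℂ → ℂ}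
    (h : EqOn (ι g) f (ball 0 1)) : ‖g‖ = blochNorm α f := by
  rw [hB.norm_eq, blochNorm_congr h]

lemma not_finiteDimensional (hB : IsBlochModel α ι) (hα : 0 ≤ α) : ¬ FiniteDimensional ℂ E := by
  have hpow (n : ℕ) : ∃ g : E, EqOn (ι g) (· ^ n) (ball 0 1) := by
    refine (hB.exists_eqOn_iff _).2 ⟨(differentiable_pow n).differentiableOn,
      blochBdd_of_forall_le (C := n) fun z hz => ?_⟩
    have hz1 := (mem_ball_zero_iff.1 hz).le
    rw [(hasDerivAt_pow n z).deriv, norm_mul, norm_pow, Complex.norm_natCast]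
    calc (1 - ‖z‖ ^ 2) ^ α * (n * ‖z‖ ^ (n - 1)) ≤ 1 * (n * 1) := by
          gcongr
          · exact one_sub_norm_sq_rpow_le_one hα hz1
          · exact pow_le_one₀ (norm_nonneg z) hz1
      _ = n := by ring
  choose g hg using hpow
  let restrict : (ℂ → ℂ) →ₗ[ℂ] (ball (0 : ℂ) 1 → ℂ) := LinearMap.funLeft ℂ ℂ Subtype.val
  let evalOn : Polynomial ℂ →ₗ[ℂ] (ball (0 : ℂ) 1 → ℂ) :=
    LinearMap.pi fun z => Polynomial.leval (z : ℂ)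
  have hker : LinearMap.ker evalOn = ⊥ := LinearMap.ker_eq_bot'.2 fun p hp =>
    Polynomial.eq_zero_of_infinite_isRoot p <|
      (infinite_of_mem_nhds 0 (ball_mem_nhds 0 one_pos)).mono fun z hz => congr_fun hp ⟨z, hz⟩
  have hcomp : ⇑(restrict ∘ₗ ι) ∘ g = evalOn ∘ Polynomial.basisMonomials ℂ := by
    ext n z
    simp [restrict, evalOn, LinearMap.funLeft, hg n z.2]
  have hli : LinearIndependent ℂ g := LinearIndependent.of_comp (restrict ∘ₗ ι)
    (hcomp ▸ (Polynomial.basisMonomials ℂ).linearIndependent.map' evalOn hker)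
  intro
  have := hli.finite
  exact not_finite ℕ

variable {u : ℂ → ℂ}

lemma blochBdd_of_mul (hB : IsBlochModel α ι) {T : E → E}
    (hT : ∀ f : E, ∀ z ∈ ball (0 : ℂ) 1, ι (T f) z = u z * ι f z) : BlochBdd α u := by
  obtain ⟨g, hg⟩ := (hB.exists_eqOn_iff fun _ => 1).2
    ⟨differentiableOn_const 1, blochBdd_of_forall_le (C := 0) fun z _ => by simp⟩
  exact ((hB.exists_eqOn_iff u).1 ⟨T g, fun z hz => by rw [hT g z hz, hg hz, mul_one]⟩).2

lemma ker_eq_bot (hB : IsBlochModel α ι) (hα : 0 ≤ α) (hu : DifferentiableOn ℂ u (ball 0 1))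
    {T : E →ₗ[ℂ] E} (hT : ∀ f : E, ∀ z ∈ ball (0 : ℂ) 1, ι (T f) z = u z * ι f z)
    (hker : FiniteDimensional ℂ (LinearMap.ker T)) : LinearMap.ker T = ⊥ := by
  have hu_ne : ¬ ∀ z ∈ ball (0 : ℂ) 1, u z = 0 := by
    intro hu0
    have htop : LinearMap.ker T = ⊤ := eq_top_iff.2 fun f _ =>
      hB.eq_of_eqOn _ 0 fun z hz => by simp [hT f z hz, hu0 z hz]
    rw [htop] at hker
    exact hB.not_finiteDimensional hα Submodule.topEquiv.finiteDimensional
  refine LinearMap.ker_eq_bot'.2 fun f hf => hB.eq_of_eqOn f 0 fun z hz => ?_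
  have hprod : ∀ z ∈ ball (0 : ℂ) 1, u z * ι f z = 0 := fun z hz => by
    rw [← hT f z hz, hf, map_zero, Pi.zero_apply]
  simpa using ((hu.analyticOnNhd isOpen_ball).eq_zero_or_eq_zero_of_mul_eq_zero
    ((hB.differentiableOn f).analyticOnNhd isOpen_ball) hprod
    (convex_ball 0 1).isPreconnected).resolve_left hu_ne z hz

variable {ζ : ℂ} {W : ℝ}

lemma exists_norm_apply_le (hB : IsBlochModel α ι) (hα0 : 0 ≤ α) (hα1 : α ≤ 1)
    (hu : DifferentiableOn ℂ u (ball 0 1)) {T : E → E}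
    (hT : ∀ f : E, ∀ z ∈ ball (0 : ℂ) 1, ι (T f) z = u z * ι f z) (hζ : ‖ζ‖ = 1)
    (hu0 : Tendsto u (𝓝[ball 0 1] ζ) (𝓝 0)) (hW : ∀ z ∈ ball (0 : ℂ) 1, ‖u z‖ ≤ W)
    {ε : ℝ} (hε : 0 < ε) : ∃ f : E, 1 / 2 ≤ ‖f‖ ∧ ‖T f‖ ≤ ε := by
  obtain ⟨M, hM⟩ := hB.blochBdd_of_mul hT
  have hlim : Tendsto (fun a : ℂ => W * (1 - ‖a‖ ^ 2) ^ (2 - α)) (𝓝 ζ) (𝓝 0) := by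
    simpa [Real.zero_rpow (by linarith : (2 - α) ≠ 0)] using
      ((tendsto_one_sub_norm_sq hζ).rpow_const (Or.inr (by linarith : (0 : ℝ) ≤ 2 - α))).const_mul W
  have : (𝓝[ball (0 : ℂ) 1] ζ).NeBot := mem_closure_iff_nhdsWithin_neBot.1 <| by
    rw [closure_ball 0 one_ne_zero, mem_closedBall_zero_iff, hζ]
  obtain ⟨a, ha, hhalf, hderiv, hfun, hzero⟩ := (eventually_mem_nhdsWithin.and <|
    (eventually_nhdsWithin_of_eventually_nhds ((continuous_norm.tendsto ζ).eventually_const_lt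
      (by rw [hζ]; norm_num : (1 / 2 : ℝ) < ‖ζ‖))).and <|
    (eventually_weighted_norm_deriv_mul_norm_blochTestFn_le hα1 hζ hu hu0
      (fun z hz => hM (mem_image_of_mem _ hz)) (by positivity : 0 < ε / 3)).and <|
    (eventually_weighted_norm_mul_norm_deriv_blochTestFn_le hα0 hα1 hζ hu0 hW
      (by positivity : 0 < ε / 3)).and <|
    eventually_nhdsWithin_of_eventually_nhds
      (hlim.eventually_lt_const (by positivity : 0 < ε / 3))).exists
  have ha1 := mem_ball_zero_iff.1 ha
  obtain ⟨g, hg⟩ := (hB.exists_eqOn_iff _).2 ⟨differentiableOn_blochTestFn ha1,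
    blochBdd_of_forall_le fun z hz =>
      weighted_norm_deriv_blochTestFn_le hα0 (by linarith) ha1 (mem_ball_zero_iff.1 hz).le⟩
  refine ⟨g, ?_, ?_⟩
  · calc 1 / 2 ≤ (1 - ‖a‖ ^ 2) ^ α * ‖deriv (blochTestFn α a) a‖ := by
          rw [weighted_norm_deriv_blochTestFn_self ha1]; exact hhalf.le
      _ = (1 - ‖a‖ ^ 2) ^ α * ‖deriv (ι g) a‖ := by rw [hg.deriv isOpen_ball ha]
      _ ≤ ‖g‖ := hB.weighted_norm_deriv_le_norm g ha
  · rw [hB.norm_eq_blochNorm_of_eqOn (f := fun z => u z * blochTestFn α a z)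
      fun z hz => by rw [hT g z hz, hg hz]]
    refine (blochNorm_le_of_forall_le fun z hz =>
      (weighted_norm_deriv_mul_le (mem_ball_zero_iff.1 hz).le
        (hu.differentiableAt (isOpen_ball.mem_nhds hz))
        ((differentiableOn_blochTestFn ha1).differentiableAt (isOpen_ball.mem_nhds hz))).trans
      (add_le_add (hderiv z hz) (hfun z hz))).trans ?_
    have hu0W : ‖u 0 * blochTestFn α a 0‖ ≤ W * (1 - ‖a‖ ^ 2) ^ (2 - α) := by
      rw [norm_mul, blochTestFn_zero, Complex.norm_real, Real.norm_of_nonneg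
        (Real.rpow_nonneg (by nlinarith [norm_nonneg a]) _)]
      exact mul_le_mul_of_nonneg_right (hW 0 (mem_ball_self one_pos))
        (Real.rpow_nonneg (by nlinarith [norm_nonneg a]) _)
    linarith

lemma not_antilipschitzWith (hB : IsBlochModel α ι) (hα0 : 0 ≤ α) (hα1 : α ≤ 1)
    (hu : DifferentiableOn ℂ u (ball 0 1)) {T : E →L[ℂ] E}
    (hT : ∀ f : E, ∀ z ∈ ball (0 : ℂ) 1, ι (T f) z = u z * ι f z) (hζ : ‖ζ‖ = 1)
    (hu0 : Tendsto u (𝓝[ball 0 1] ζ) (𝓝 0)) (hW : ∀ z ∈ ball (0 : ℂ) 1, ‖u z‖ ≤ W)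
    (K : NNReal) : ¬ AntilipschitzWith K T := by
  intro hK
  obtain ⟨f, hf, hTf⟩ := hB.exists_norm_apply_le hα0 hα1 hu hT hζ hu0 hW
    (by positivity : (0 : ℝ) < 1 / (4 * (K + 1)))
  have hKf : ‖f‖ ≤ K * ‖T f‖ := by simpa using hK.le_mul_norm_sub 0 f
  have hK1 : (K : ℝ) * (1 / (4 * (K + 1))) ≤ 1 / 4 := by
    rw [mul_one_div, div_le_div_iff₀ (by positivity) (by norm_num)]; nlinarith [K.2]
  nlinarith [mul_le_mul_of_nonneg_left hTf K.2]

end IsBlochModel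

theorem stmt_13_general (α : ℝ) (hα0 : 0 < α) (hα1 : α ≤ 1)
    {E : Type*} [NormedAddCommGroup E] [NormedSpace ℂ E] [CompleteSpace E]
    (ι : E →ₗ[ℂ] (ℂ → ℂ))
    (hinj : ∀ f g : E, Set.EqOn (ι f) (ι g) (ball (0 : ℂ) 1) → f = g)
    (hrange : ∀ f : ℂ → ℂ,
      (∃ g : E, Set.EqOn (ι g) f (ball (0 : ℂ) 1)) ↔
        (DifferentiableOn ℂ f (ball (0 : ℂ) 1) ∧ BlochBdd α f))
    (hnorm : ∀ g : E, ‖g‖ = blochNorm α (ι g))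
    -- `u ∈ M(B_α(𝔻))` with induced multiplication operator `Mu`
    (u : ℂ → ℂ) (hu : DifferentiableOn ℂ u (ball (0 : ℂ) 1))
    (Mu : E →L[ℂ] E)
    (hMu : ∀ f : E, ∀ z ∈ ball (0 : ℂ) 1, ι (Mu f) z = u z * ι f z)
    -- `u` extends continuously to the closed unit disk
    (hext : ∃ w : ℂ → ℂ, ContinuousOn w (closedBall (0 : ℂ) 1) ∧
      ∀ z ∈ ball (0 : ℂ) 1, w z = u z)
    (hFred : IsFredholmOp Mu) :
    ∃ r ∈ Set.Ioo (0 : ℝ) 1, ∃ δ : ℝ, 0 < δ ∧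
      ∀ z : ℂ, r ≤ ‖z‖ → ‖z‖ < 1 → δ ≤ ‖u z‖ := by
  obtain ⟨w, hw, hwu⟩ := hext
  by_cases hne : ∀ ζ : ℂ, ‖ζ‖ = 1 → w ζ ≠ 0
  · obtain ⟨r, hr, δ, hδ, hwδ⟩ := exists_forall_le_norm_of_forall_sphere_ne_zero hw hne
    exact ⟨r, hr, δ, hδ, fun z hrz hz => hwu z (mem_ball_zero_iff.2 hz) ▸ hwδ z hrz hz.le⟩
  push Not at hne
  obtain ⟨ζ, hζ, hwζ⟩ := hne
  have hB : IsBlochModel α ι := ⟨hinj, hrange, hnorm⟩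
  obtain ⟨W, hW⟩ := (isCompact_closedBall (0 : ℂ) 1).exists_bound_of_continuousOn hw
  have hu0 : Tendsto u (𝓝[ball 0 1] ζ) (𝓝 0) := by
    have hwt : Tendsto w (𝓝[ball 0 1] ζ) (𝓝 (w ζ)) :=
      (hw ζ (mem_closedBall_zero_iff.2 hζ.le)).mono ball_subset_closedBall
    rw [hwζ] at hwt
    exact hwt.congr' (eventually_nhdsWithin_of_forall hwu)
  have hinjMu : Function.Injective Mu :=
    LinearMap.ker_eq_bot.1 (hB.ker_eq_bot hα0.le hu hMu hFred.2.1)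
  obtain ⟨K, hK⟩ := Mu.antilipschitz_of_injective_of_isClosed_range hinjMu
    (by simpa only [LinearMap.coe_range, ContinuousLinearMap.coe_coe] using hFred.1)
  exact absurd hK (hB.not_antilipschitzWith hα0.le hα1 hu hMu hζ hu0
    (fun z hz => hwu z hz ▸ hW z (ball_subset_closedBall hz)) K)

/-- Let `0 < α ≤ 1` and let `u ∈ M(B_α(𝔻))` extend continuously to the
closed unit disk. If `M_u : B_α(𝔻) → B_α(𝔻)` is Fredholm, then there are `r ∈ (0,1)` and
`δ > 0` with `|u(z)| ≥ δ` whenever `r ≤ |z| < 1`. `B_α(𝔻)` is realized as in Statement 9. -/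
theorem stmt_13 (α : ℝ) (hα0 : 0 < α) (hα1 : α ≤ 1)
    {E : Type*} [NormedAddCommGroup E] [NormedSpace ℂ E] [CompleteSpace E]
    (ι : E →ₗ[ℂ] (ℂ → ℂ))
    (hhol : ∀ f : E, DifferentiableOn ℂ (ι f) (ball (0 : ℂ) 1))
    (hinj : ∀ f g : E, Set.EqOn (ι f) (ι g) (ball (0 : ℂ) 1) → f = g)
    (hrange : ∀ f : ℂ → ℂ,
      (∃ g : E, Set.EqOn (ι g) f (ball (0 : ℂ) 1)) ↔
        (DifferentiableOn ℂ f (ball (0 : ℂ) 1) ∧ BlochBdd α f))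
    (hnorm : ∀ g : E, ‖g‖ = blochNorm α (ι g))
    -- `u ∈ M(B_α(𝔻))` with induced multiplication operator `Mu`
    (u : ℂ → ℂ) (hu : DifferentiableOn ℂ u (ball (0 : ℂ) 1))
    (humult : ∀ f : E, ∃ g : E, ∀ z ∈ ball (0 : ℂ) 1, ι g z = u z * ι f z)
    (Mu : E →L[ℂ] E)
    (hMu : ∀ f : E, ∀ z ∈ ball (0 : ℂ) 1, ι (Mu f) z = u z * ι f z)
    -- `u` extends continuously to the closed unit disk
    (hext : ∃ w : ℂ → ℂ, ContinuousOn w (closedBall (0 : ℂ) 1) ∧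
      ∀ z ∈ ball (0 : ℂ) 1, w z = u z)
    (hFred : IsFredholmOp Mu) :
    ∃ r ∈ Set.Ioo (0 : ℝ) 1, ∃ δ : ℝ, 0 < δ ∧
      ∀ z : ℂ, r ≤ ‖z‖ → ‖z‖ < 1 → δ ≤ ‖u z‖ :=
  stmt_13_general α hα0 hα1 ι hinj hrange hnorm u hu Mu hMu hext hFred
end

section
/- For every real γ > −1 and every integer K ≥ 0, Σ_{n=0}^{K} (K choose n)² · Γ(n+1)Γ(γ+1)/Γ(n+γ+2) = Γ(γ+1)Γ(2K+γ+2)/Γ(K+γ+2)². -/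
open Finset Polynomial

/-- Descending Pochhammer smeval on ℝ as a product. -/
lemma desc_smeval_eq_prod (y : ℝ) (k : ℕ) :
    (descPochhammer ℤ k).smeval y = ∏ j ∈ Finset.range k, (y - j) := by
  induction k with
  | zero => simp [descPochhammer_zero, smeval_one]
  | succ k ih =>
      rw [descPochhammer_succ_right, smeval_mul, ih, Finset.prod_range_succ]
      congr 1
      simp [smeval_sub, smeval_X, smeval_natCast]

/-- Specialized Chu–Vandermonde: falling factorial of `y + K`. -/
lemma vand (y : ℝ) (K : ℕ) :
    ∏ j ∈ Finset.range K, (y + K - j) =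
      ∑ m ∈ Finset.range (K + 1),
        (K.choose m : ℝ) ^ 2 * (K - m).factorial * ∏ j ∈ Finset.range m, (y - j) := by
  have h := Ring.descPochhammer_smeval_add (R := ℝ) (r := y) (s := (K : ℝ)) K (mul_comm _ _)
  rw [desc_smeval_eq_prod] at h
  rw [h, Finset.Nat.sum_antidiagonal_eq_sum_range_succ_mk]
  refine Finset.sum_congr rfl fun m hm => ?_
  have hmK : m ≤ K := Nat.lt_succ_iff.mp (Finset.mem_range.mp hm)
  rw [desc_smeval_eq_prod, descPochhammer_smeval_eq_descFactorial,
    Nat.descFactorial_eq_factorial_mul_choose, Nat.choose_symm hmK]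
  push_cast
  ring

lemma prod_reflect (a : ℝ) (k : ℕ) :
    ∏ j ∈ Finset.range k, (a + (k : ℝ) - 1 - j) = ∏ j ∈ Finset.range k, (a + j) := by
  rw [← Finset.prod_range_reflect fun j => a + (j : ℝ)]
  refine Finset.prod_congr rfl fun j hj => ?_
  have hj' : j < k := Finset.mem_range.mp hj
  have h1 : 1 ≤ k := Nat.one_le_of_lt (Nat.lt_of_le_of_lt (Nat.zero_le j) hj')
  have hj1 : j ≤ k - 1 := Nat.le_sub_one_of_lt hj'
  have : ((k - 1 - j : ℕ) : ℝ) = (k : ℝ) - 1 - j := by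
    push_cast [Nat.cast_sub hj1, Nat.cast_sub h1]
    ring
  rw [this]
  ring

lemma Gamma_add_nat' (a : ℝ) (ha : 0 < a) (k : ℕ) :
    Real.Gamma (a + k) = Real.Gamma a * ∏ j ∈ Finset.range k, (a + j) := by
  induction k with
  | zero => simp
  | succ k ih =>
      have h : a + ((k : ℕ) + 1 : ℕ) = (a + k) + 1 := by push_cast; ring
      rw [h, Real.Gamma_add_one (by positivity), ih, Finset.prod_range_succ]
      ring

/-- For `γ > -1` and every integer `K ≥ 0`,
`∑_{n=0}^{K} (K choose n)² Γ(n+1)Γ(γ+1)/Γ(n+γ+2) = Γ(γ+1)Γ(2K+γ+2)/Γ(K+γ+2)²`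
(a Chu–Vandermonde-type identity for Beta integrals). -/
theorem stmt_16 (γ : ℝ) (hγ : -1 < γ) (K : ℕ) :
    ∑ n ∈ Finset.range (K + 1),
        (K.choose n : ℝ) ^ 2 *
          (Real.Gamma ((n : ℝ) + 1) * Real.Gamma (γ + 1) / Real.Gamma ((n : ℝ) + γ + 2)) =
      Real.Gamma (γ + 1) * Real.Gamma (2 * (K : ℝ) + γ + 2) /
        Real.Gamma ((K : ℝ) + γ + 2) ^ 2 := by
  set y : ℝ := γ + K + 1 with hy
  have hGK : 0 < Real.Gamma ((K : ℝ) + γ + 2) := by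
    apply Real.Gamma_pos_of_pos
    have : (0 : ℝ) ≤ K := Nat.cast_nonneg K
    linarith
  -- each Gamma ratio as a falling-factorial product
  have key : ∀ n, n ≤ K →
      Real.Gamma ((K : ℝ) + γ + 2) =
        Real.Gamma ((n : ℝ) + γ + 2) * ∏ j ∈ Finset.range (K - n), (y - j) := by
    intro n hnK
    have hcast : ((K - n : ℕ) : ℝ) = (K : ℝ) - n := by push_cast [hnK]; ring
    have h1 : ((n : ℝ) + γ + 2) + ((K - n : ℕ) : ℝ) = (K : ℝ) + γ + 2 := by
      rw [hcast]; ring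
    have hpos : (0 : ℝ) < (n : ℝ) + γ + 2 := by
      have : (0 : ℝ) ≤ n := Nat.cast_nonneg n
      linarith
    have h2 := Gamma_add_nat' ((n : ℝ) + γ + 2) hpos (K - n)
    rw [h1] at h2
    rw [h2]
    congr 1
    rw [← prod_reflect ((n : ℝ) + γ + 2) (K - n)]
    refine Finset.prod_congr rfl fun j _ => ?_
    rw [hcast, hy]; ring
  have hGn : ∀ n, n ≤ K → (0 : ℝ) < Real.Gamma ((n : ℝ) + γ + 2) := by
    intro n _
    apply Real.Gamma_pos_of_pos
    have : (0 : ℝ) ≤ n := Nat.cast_nonneg n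
    linarith
  -- rewrite each summand
  have hterm : ∀ n ∈ Finset.range (K + 1),
      (K.choose n : ℝ) ^ 2 *
          (Real.Gamma ((n : ℝ) + 1) * Real.Gamma (γ + 1) / Real.Gamma ((n : ℝ) + γ + 2)) =
      Real.Gamma (γ + 1) / Real.Gamma ((K : ℝ) + γ + 2) *
        ((K.choose n : ℝ) ^ 2 * (n.factorial : ℝ) * ∏ j ∈ Finset.range (K - n), (y - j)) := by
    intro n hn
    have hnK : n ≤ K := Nat.lt_succ_iff.mp (Finset.mem_range.mp hn)
    rw [Real.Gamma_nat_eq_factorial n, key n hnK]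
    have h0 := hGn n hnK
    have hP : (0:ℝ) < ∏ j ∈ Finset.range (K - n), (y - j) := by
      have hk := key n hnK
      have : (∏ j ∈ Finset.range (K - n), (y - j)) =
          Real.Gamma ((K : ℝ) + γ + 2) / Real.Gamma ((n : ℝ) + γ + 2) := by
        rw [hk]; field_simp
      rw [this]; positivity
    field_simp
  rw [Finset.sum_congr rfl hterm, ← Finset.mul_sum]
  -- reindex and apply Vandermonde
  have hsum : ∑ n ∈ Finset.range (K + 1),
      (K.choose n : ℝ) ^ 2 * (n.factorial : ℝ) * ∏ j ∈ Finset.range (K - n), (y - j) =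
      ∏ j ∈ Finset.range K, (y + K - j) := by
    rw [vand y K, ← Finset.sum_range_reflect
      (fun m => (K.choose m : ℝ) ^ 2 * ((K - m).factorial : ℝ) * ∏ j ∈ Finset.range m, (y - j))
      (K + 1)]
    refine Finset.sum_congr rfl fun n hn => ?_
    have hnK : n ≤ K := Nat.lt_succ_iff.mp (Finset.mem_range.mp hn)
    have e1 : K + 1 - 1 - n = K - n := by omega
    have e2 : K - (K - n) = n := by omega
    rw [e1, e2, Nat.choose_symm hnK]
  rw [hsum]
  -- final Gamma computation
  have h2K : Real.Gamma (2 * (K : ℝ) + γ + 2) =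
      Real.Gamma ((K : ℝ) + γ + 2) * ∏ j ∈ Finset.range K, (y + K - j) := by
    have hpos : (0 : ℝ) < (K : ℝ) + γ + 2 := by
      have : (0 : ℝ) ≤ K := Nat.cast_nonneg K
      linarith
    have h2 := Gamma_add_nat' ((K : ℝ) + γ + 2) hpos K
    have h1 : ((K : ℝ) + γ + 2) + (K : ℝ) = 2 * (K : ℝ) + γ + 2 := by ring
    rw [h1] at h2
    rw [h2, ← prod_reflect ((K : ℝ) + γ + 2) K]
    congr 1
    refine Finset.prod_congr rfl fun j _ => ?_
    rw [hy]; ring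
  rw [h2K]
  field_simp
end
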